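/- arXiv:1510.05501 — 5 statements merged into one kernel-verified Lean document; each statement's English description precedes it below -/
import Mathlib

section
/- If α ∈ A^(γ) strictly and α(x) > 0 for all large x, then for every real number ξ the function θ(x) = [α(x)]^ξ belongs to A^(γξ) strictly. -/
open Filter Finset Real

noncomputable section

/-- `α` has the Poincaré-type asymptotic expansion `α(x) ~ Σ_{i≥0} c_i x^(γ-i)` as `x → ∞`,
which may be differentiated term by term any number of times: `α` is infinitely
differentiable on some `(a, ∞)` with `a > 0`, and for all `j N : ℕ`,
`α^{(j)}(x) − Σ_{i<N} c_i (γ−i)(γ−i−1)⋯(γ−i−j+1) x^(γ−i−j) = O(x^(γ−N−j))` as `x → ∞`. -/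
def HasExpA (γ : ℝ) (c : ℕ → ℝ) (α : ℝ → ℝ) : Prop :=
  (∃ a : ℝ, 0 < a ∧ ∀ x ∈ Set.Ioi a, ContDiffAt ℝ (⊤ : ℕ∞) α x) ∧
  ∀ j N : ℕ,
    (fun x : ℝ => iteratedDeriv j α x -
        ∑ i ∈ Finset.range N,
          c i * (∏ l ∈ Finset.range j, (γ - (i : ℝ) - (l : ℝ))) * x ^ (γ - (i : ℝ) - (j : ℝ)))
      =O[atTop] fun x : ℝ => x ^ (γ - (N : ℝ) - (j : ℝ))

/-- `α` belongs to the class `A^(γ)`. -/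
def MemA (γ : ℝ) (α : ℝ → ℝ) : Prop := ∃ c : ℕ → ℝ, HasExpA γ c α

/-- `α` belongs to the class `A^(γ)` strictly (`c 0 ≠ 0`). -/
def MemAS (γ : ℝ) (α : ℝ → ℝ) : Prop := ∃ c : ℕ → ℝ, c 0 ≠ 0 ∧ HasExpA γ c α

/-- `α` belongs to `X^(γ)` strictly: `α ∈ A^(γ)` strictly and every derivative `α^{(j)}`,
`j ≥ 1`, either vanishes identically for all large `x` or belongs to `A^(γ−j−k)` strictly
for some nonnegative integer `k`. -/
def MemXS (γ : ℝ) (α : ℝ → ℝ) : Prop :=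
  MemAS γ α ∧
  ∀ j : ℕ, 1 ≤ j →
    (∀ᶠ x in atTop, iteratedDeriv j α x = 0) ∨
    ∃ k : ℕ, MemAS (γ - (j : ℝ) - (k : ℝ)) (iteratedDeriv j α)

/-- `f`, infinitely differentiable for all large `x`, belongs to the class `B^(m)`:
`f(x) = Σ_{k=1}^m p_k(x) f^{(k)}(x)` for all large `x`, where for `1 ≤ k ≤ m−1` each `p_k`
either has an empty expansion (all its derivatives are `O(x^{−μ})` for every `μ > 0`) or
belongs to `A^(i_k)` strictly with `i_k ≤ k` an integer, and `p_m ∈ A^(i_m)` strictly with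
`i_m ≤ m` an integer. -/
def MemB (m : ℕ) (f : ℝ → ℝ) : Prop :=
  (∀ᶠ x in atTop, ContDiffAt ℝ (⊤ : ℕ∞) f x) ∧
  ∃ p : ℕ → ℝ → ℝ,
    (∀ᶠ x in atTop, f x = ∑ k ∈ Finset.Icc 1 m, p k x * iteratedDeriv k f x) ∧
    (∀ k ∈ Finset.Icc 1 (m - 1),
      ((∀ᶠ x in atTop, ContDiffAt ℝ (⊤ : ℕ∞) (p k) x) ∧
        ∀ μ : ℝ, 0 < μ → ∀ j : ℕ,
          (iteratedDeriv j (p k)) =O[atTop] fun x : ℝ => x ^ (-μ)) ∨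
      ∃ i : ℤ, i ≤ (k : ℤ) ∧ MemAS (i : ℝ) (p k)) ∧
    ∃ i : ℤ, i ≤ (m : ℤ) ∧ MemAS (i : ℝ) (p m)

/-- The Bell polynomial `B_{n,k}(y_1, …, y_{n−k+1})`. -/
def bellPoly (n k : ℕ) (y : ℕ → ℝ) : ℝ :=
  ∑ j ∈ Finset.univ.filter
      (fun j : Fin (n - k + 1) → Fin (n + 1) =>
        (∑ i, (j i : ℕ)) = k ∧ (∑ i, (i.1 + 1) * (j i : ℕ)) = n),
    ((n.factorial : ℝ) / ∏ i, ((j i : ℕ).factorial : ℝ)) *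
      ∏ i, (y (i.1 + 1) / ((i.1 + 1).factorial : ℝ)) ^ (j i : ℕ)

namespace S5

/-- eventually smooth at top -/
def esm (f : ℝ → ℝ) : Prop := ∀ᶠ x in atTop, ContDiffAt ℝ (⊤ : ℕ∞) f x

lemma esm_iff {f : ℝ → ℝ} : esm f ↔ ∃ a : ℝ, ContDiffOn ℝ (⊤ : ℕ∞) f (Set.Ioi a) := by
  constructor
  · intro h
    obtain ⟨a, ha⟩ := eventually_atTop.1 h
    exact ⟨a, fun x hx => (ha x (le_of_lt hx)).contDiffWithinAt⟩
  · rintro ⟨a, ha⟩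
    filter_upwards [eventually_gt_atTop a] with x hx
    exact ha.contDiffAt (Ioi_mem_nhds hx)

lemma esm.deriv {f : ℝ → ℝ} (hf : esm f) : esm (deriv f) := by
  obtain ⟨a, ha⟩ := esm_iff.1 hf
  exact esm_iff.2 ⟨a, ha.deriv_of_isOpen isOpen_Ioi (by simp)⟩

lemma iter_congr {f g : ℝ → ℝ} (h : f =ᶠ[atTop] g) (j : ℕ) :
    iteratedDeriv j f =ᶠ[atTop] iteratedDeriv j g := by
  obtain ⟨a, ha⟩ := eventually_atTop.1 h
  filter_upwards [eventually_gt_atTop a] with x hx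
  refine Filter.EventuallyEq.iteratedDeriv_eq j ?_
  filter_upwards [Ioi_mem_nhds hx] with y hy
  exact ha y (le_of_lt hy)

lemma esm.congr {f g : ℝ → ℝ} (hf : esm f) (h : f =ᶠ[atTop] g) : esm g := by
  obtain ⟨a, ha⟩ := eventually_atTop.1 (hf.and h)
  filter_upwards [eventually_gt_atTop a] with x hx
  refine (ha x (le_of_lt hx)).1.congr_of_eventuallyEq ?_
  filter_upwards [Ioi_mem_nhds hx] with y hy
  exact ((ha y (le_of_lt hy)).2).symm

lemma esm.iteratedDeriv {f : ℝ → ℝ} (hf : esm f) (j : ℕ) : esm (iteratedDeriv j f) := by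
  induction j with
  | zero => simpa [iteratedDeriv_zero] using hf
  | succ j ih => rw [iteratedDeriv_succ]; exact ih.deriv

lemma iter_add {f g : ℝ → ℝ} (hf : esm f) (hg : esm g) (j : ℕ) :
    iteratedDeriv j (fun x => f x + g x) =ᶠ[atTop]
      fun x => iteratedDeriv j f x + iteratedDeriv j g x := by
  obtain ⟨a, ha⟩ := esm_iff.1 hf
  obtain ⟨b, hb⟩ := esm_iff.1 hg
  filter_upwards [eventually_gt_atTop (max a b)] with x hx
  have hx1 : x ∈ Set.Ioi (max a b) := hx
  have h1 : ContDiffOn ℝ (⊤ : ℕ∞) f (Set.Ioi (max a b)) :=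
    ha.mono (Set.Ioi_subset_Ioi (le_max_left _ _))
  have h2 : ContDiffOn ℝ (⊤ : ℕ∞) g (Set.Ioi (max a b)) :=
    hb.mono (Set.Ioi_subset_Ioi (le_max_right _ _))
  have hu : UniqueDiffOn ℝ (Set.Ioi (max a b)) := isOpen_Ioi.uniqueDiffOn
  have e1 : ∀ h : ℝ → ℝ, iteratedDerivWithin j h (Set.Ioi (max a b)) x = iteratedDeriv j h x := by
    intro h
    rw [iteratedDerivWithin_eq_iteratedFDerivWithin, iteratedDeriv_eq_iteratedFDeriv,
      iteratedFDerivWithin_of_isOpen j isOpen_Ioi hx1]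
  calc iteratedDeriv j (fun x => f x + g x) x
      = iteratedDerivWithin j (f + g) (Set.Ioi (max a b)) x := (e1 _).symm
    _ = _ := by
        rw [iteratedDerivWithin_add hx1 hu ((h1.contDiffWithinAt hx1).of_le (by exact_mod_cast le_top)) ((h2.contDiffWithinAt hx1).of_le (by exact_mod_cast le_top)), e1, e1]

lemma iter_const_mul {f : ℝ → ℝ} (hf : esm f) (C : ℝ) (j : ℕ) :
    iteratedDeriv j (fun x => C * f x) =ᶠ[atTop] fun x => C * iteratedDeriv j f x := by
  obtain ⟨a, ha⟩ := esm_iff.1 hf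
  filter_upwards [eventually_gt_atTop a] with x hx
  have hx1 : x ∈ Set.Ioi a := hx
  have hu : UniqueDiffOn ℝ (Set.Ioi a) := isOpen_Ioi.uniqueDiffOn
  have e1 : ∀ h : ℝ → ℝ, iteratedDerivWithin j h (Set.Ioi a) x = iteratedDeriv j h x := by
    intro h
    rw [iteratedDerivWithin_eq_iteratedFDerivWithin, iteratedDeriv_eq_iteratedFDeriv,
      iteratedFDerivWithin_of_isOpen j isOpen_Ioi hx1]
  calc iteratedDeriv j (fun x => C * f x) x
      = iteratedDerivWithin j (fun x => C * f x) (Set.Ioi a) x := (e1 _).symm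
    _ = _ := by rw [iteratedDerivWithin_const_mul hx1 hu C ((ha.contDiffWithinAt hx1).of_le (by exact_mod_cast le_top)), e1]

lemma iter_zero_fun (j : ℕ) : iteratedDeriv j (fun _ : ℝ => (0:ℝ)) = fun _ => 0 := by
  induction j with
  | zero => simp [iteratedDeriv_zero]
  | succ j ih => rw [iteratedDeriv_succ', show deriv (fun _ : ℝ => (0:ℝ)) = fun _ => 0 from
      funext fun x => deriv_const x 0, ih]


lemma iter_monomial (C ρ : ℝ) (j : ℕ) :
    iteratedDeriv j (fun x : ℝ => C * x ^ ρ) =ᶠ[atTop]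
      fun x => C * (∏ l ∈ range j, (ρ - l)) * x ^ (ρ - j) := by
  induction j with
  | zero =>
    filter_upwards with x
    simp [iteratedDeriv_zero]
  | succ j ih =>
    obtain ⟨a, ha⟩ := eventually_atTop.1 ih
    filter_upwards [eventually_gt_atTop (max a 0)] with x hx
    have hx0 : (0:ℝ) < x := lt_of_le_of_lt (le_max_right a 0) hx
    rw [iteratedDeriv_succ]
    have heq : deriv (iteratedDeriv j (fun x : ℝ => C * x ^ ρ)) x =
        deriv (fun x : ℝ => C * (∏ l ∈ range j, (ρ - l)) * x ^ (ρ - j)) x := by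
      apply Filter.EventuallyEq.deriv_eq
      filter_upwards [Ioi_mem_nhds (show max a 0 < x from hx)] with y hy
      exact ha y (le_of_lt (lt_of_le_of_lt (le_max_left a 0) hy))
    rw [heq]
    have hd : HasDerivAt (fun x : ℝ => C * (∏ l ∈ range j, (ρ - l)) * x ^ (ρ - j))
        (C * (∏ l ∈ range j, (ρ - l)) * ((ρ - j) * x ^ (ρ - j - 1))) x :=
      (Real.hasDerivAt_rpow_const (Or.inl (ne_of_gt hx0))).const_mul _
    rw [hd.deriv, prod_range_succ, show ρ - (j+1 : ℕ) = ρ - (j:ℝ) - 1 by push_cast; ring]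
    ring

/-- the symbol class: eventually smooth with `D^j f = O(x^(e-j))` for all `j` -/
def Sc (e : ℝ) (f : ℝ → ℝ) : Prop :=
  esm f ∧ ∀ j : ℕ, iteratedDeriv j f =O[atTop] fun x : ℝ => x ^ (e - j)

lemma rpow_O {e e' : ℝ} (h : e ≤ e') : (fun x : ℝ => x ^ e) =O[atTop] fun x => x ^ e' := by
  rw [Asymptotics.isBigO_iff]
  refine ⟨1, ?_⟩
  filter_upwards [eventually_ge_atTop (1:ℝ)] with x hx
  rw [one_mul, Real.norm_eq_abs, Real.norm_eq_abs,
    abs_of_nonneg (Real.rpow_nonneg (by linarith) _),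
    abs_of_nonneg (Real.rpow_nonneg (by linarith) _)]
  exact Real.rpow_le_rpow_of_exponent_le hx h

lemma Sc.congr {e : ℝ} {f g : ℝ → ℝ} (hf : Sc e f) (h : f =ᶠ[atTop] g) : Sc e g :=
  ⟨hf.1.congr h, fun j => ((hf.2 j).congr' (iter_congr h j) (EventuallyEq.refl _ _))⟩

lemma Sc.mono {e e' : ℝ} {f : ℝ → ℝ} (hf : Sc e f) (h : e ≤ e') : Sc e' f :=
  ⟨hf.1, fun j => (hf.2 j).trans (rpow_O (by linarith))⟩

lemma Sc.zero {e : ℝ} : Sc e (fun _ => 0) := by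
  refine ⟨Filter.Eventually.of_forall
    (fun x => (contDiffAt_const : ContDiffAt ℝ (⊤ : ℕ∞) (fun _ : ℝ => (0:ℝ)) x)), fun j => ?_⟩
  rw [iter_zero_fun]
  exact Asymptotics.isBigO_zero _ _

lemma Sc.add {e : ℝ} {f g : ℝ → ℝ} (hf : Sc e f) (hg : Sc e g) :
    Sc e (fun x => f x + g x) := by
  refine ⟨?_, fun j => ?_⟩
  · obtain ⟨a, ha⟩ := eventually_atTop.1 (hf.1.and hg.1)
    filter_upwards [eventually_ge_atTop a] with x hx
    exact ((ha x hx).1).add ((ha x hx).2)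
  · exact (((hf.2 j).add (hg.2 j)).congr' (iter_add hf.1 hg.1 j).symm
      (EventuallyEq.refl _ _))

lemma Sc.const_mul {e : ℝ} {f : ℝ → ℝ} (hf : Sc e f) (C : ℝ) :
    Sc e (fun x => C * f x) := by
  refine ⟨?_, fun j => ?_⟩
  · filter_upwards [hf.1] with x hx using contDiffAt_const.mul hx
  · exact ((hf.2 j).const_mul_left C).congr' (iter_const_mul hf.1 C j).symm
      (EventuallyEq.refl _ _)

lemma Sc.monomial (C ρ : ℝ) : Sc ρ (fun x : ℝ => C * x ^ ρ) := by
  refine ⟨?_, fun j => ?_⟩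
  · filter_upwards [eventually_gt_atTop (0:ℝ)] with x hx
    exact contDiffAt_const.mul (Real.contDiffAt_rpow_const_of_ne (ne_of_gt hx))
  · refine Asymptotics.IsBigO.congr' ?_ (iter_monomial C ρ j).symm (EventuallyEq.refl _ _)
    exact (Asymptotics.isBigO_refl _ _).const_mul_left _

lemma Sc.sum {e : ℝ} {ι : Type*} {t : Finset ι} {F : ι → ℝ → ℝ}
    (h : ∀ i ∈ t, Sc e (F i)) : Sc e (fun x => ∑ i ∈ t, F i x) := by
  classical
  induction t using Finset.induction_on with
  | empty => simpa using Sc.zero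
  | insert _ _ hnot ih =>
    rename_i i t'
    have h1 : Sc e (fun x => F i x + ∑ i ∈ t', F i x) :=
      (h i (mem_insert_self i t')).add (ih fun i hi => h i (mem_insert_of_mem hi))
    refine h1.congr (Filter.Eventually.of_forall fun x => ?_)
    simp [Finset.sum_insert hnot]


lemma mulBound {f g : ℝ → ℝ} {e₁ e₂ : ℝ} (hf : esm f) (hg : esm g) {j : ℕ}
    (hbf : ∀ m, m ≤ j → iteratedDeriv m f =O[atTop] fun x : ℝ => x ^ (e₁ - m))
    (hbg : ∀ m, m ≤ j → iteratedDeriv m g =O[atTop] fun x : ℝ => x ^ (e₂ - m)) :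
    iteratedDeriv j (fun x => f x * g x) =O[atTop] fun x : ℝ => x ^ (e₁ + e₂ - j) := by
  set H : ℝ → ℝ := fun x => ∑ m ∈ range (j+1),
    (j.choose m : ℝ) * |iteratedDeriv m f x| * |iteratedDeriv (j - m) g x| with hH
  have claim1 : iteratedDeriv j (fun x => f x * g x) =O[atTop] H := by
    obtain ⟨a, ha⟩ := esm_iff.1 hf
    obtain ⟨b, hb⟩ := esm_iff.1 hg
    set s : Set ℝ := Set.Ioi (max a b) with hs
    have hso : IsOpen s := isOpen_Ioi
    have h1 : ContDiffOn ℝ (⊤ : ℕ∞) f s := ha.mono (Set.Ioi_subset_Ioi (le_max_left _ _))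
    have h2 : ContDiffOn ℝ (⊤ : ℕ∞) g s := hb.mono (Set.Ioi_subset_Ioi (le_max_right _ _))
    rw [Asymptotics.isBigO_iff]
    refine ⟨1, ?_⟩
    filter_upwards [eventually_gt_atTop (max a b)] with x hx
    have hxs : x ∈ s := hx
    have key : ‖iteratedDeriv j (fun x => f x * g x) x‖ ≤ H x := by
      rw [← norm_iteratedFDeriv_eq_norm_iteratedDeriv,
        ← iteratedFDerivWithin_of_isOpen j hso hxs]
      refine le_trans (norm_iteratedFDerivWithin_mul_le h1 h2 hso.uniqueDiffOn hxs (by exact_mod_cast le_top)) ?_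
      apply Finset.sum_le_sum
      intro m hm
      rw [iteratedFDerivWithin_of_isOpen m hso hxs, iteratedFDerivWithin_of_isOpen (j-m) hso hxs,
        norm_iteratedFDeriv_eq_norm_iteratedDeriv, norm_iteratedFDeriv_eq_norm_iteratedDeriv]
      simp [Real.norm_eq_abs, mul_assoc]
    refine key.trans ?_
    rw [one_mul, Real.norm_eq_abs]
    exact le_abs_self _
  refine claim1.trans ?_
  apply Asymptotics.IsBigO.fun_sum
  intro m hm
  have hm' : m ≤ j := Nat.lt_succ_iff.1 (mem_range.1 hm)
  have t1 : (fun x => |iteratedDeriv m f x|) =O[atTop] fun x : ℝ => x ^ (e₁ - m) :=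
    (hbf m hm').abs_left
  have t2 : (fun x => |iteratedDeriv (j-m) g x|) =O[atTop] fun x : ℝ => x ^ (e₂ - (j-m : ℕ)) :=
    (hbg (j-m) (Nat.sub_le j m)).abs_left
  have t3 := (t1.mul t2).const_mul_left ((j.choose m : ℝ))
  refine t3.congr' (by simp [mul_assoc]) ?_
  filter_upwards [eventually_gt_atTop (0:ℝ)] with x hx
  rw [← Real.rpow_add hx]
  congr 1
  rw [Nat.cast_sub hm']
  ring

lemma Sc.mul {e₁ e₂ : ℝ} {f g : ℝ → ℝ} (hf : Sc e₁ f) (hg : Sc e₂ g) :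
    Sc (e₁ + e₂) (fun x => f x * g x) := by
  refine ⟨?_, fun j => mulBound hf.1 hg.1 (fun m _ => hf.2 m) (fun m _ => hg.2 m)⟩
  obtain ⟨a, ha⟩ := eventually_atTop.1 (hf.1.and hg.1)
  filter_upwards [eventually_ge_atTop a] with x hx
  exact ((ha x hx).1).mul ((ha x hx).2)

lemma iter_sub {f g : ℝ → ℝ} (hf : esm f) (hg : esm g) (j : ℕ) :
    iteratedDeriv j (fun x => f x - g x) =ᶠ[atTop]
      fun x => iteratedDeriv j f x - iteratedDeriv j g x := by
  obtain ⟨a, ha⟩ := esm_iff.1 hf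
  obtain ⟨b, hb⟩ := esm_iff.1 hg
  filter_upwards [eventually_gt_atTop (max a b)] with x hx
  have hx1 : x ∈ Set.Ioi (max a b) := hx
  have h1 : ContDiffOn ℝ (⊤ : ℕ∞) f (Set.Ioi (max a b)) :=
    ha.mono (Set.Ioi_subset_Ioi (le_max_left _ _))
  have h2 : ContDiffOn ℝ (⊤ : ℕ∞) g (Set.Ioi (max a b)) :=
    hb.mono (Set.Ioi_subset_Ioi (le_max_right _ _))
  have hu : UniqueDiffOn ℝ (Set.Ioi (max a b)) := isOpen_Ioi.uniqueDiffOn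
  have e1 : ∀ h : ℝ → ℝ, iteratedDerivWithin j h (Set.Ioi (max a b)) x = iteratedDeriv j h x := by
    intro h
    rw [iteratedDerivWithin_eq_iteratedFDerivWithin, iteratedDeriv_eq_iteratedFDeriv,
      iteratedFDerivWithin_of_isOpen j isOpen_Ioi hx1]
  calc iteratedDeriv j (fun x => f x - g x) x
      = iteratedDerivWithin j (f - g) (Set.Ioi (max a b)) x := (e1 _).symm
    _ = _ := by
        rw [iteratedDerivWithin_sub hx1 hu ((h1.contDiffWithinAt hx1).of_le (by exact_mod_cast le_top)) ((h2.contDiffWithinAt hx1).of_le (by exact_mod_cast le_top)), e1, e1]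

lemma esm_monoSum (c : ℕ → ℝ) (γ : ℝ) (N : ℕ) :
    esm (fun x : ℝ => ∑ i ∈ range N, c i * x ^ (γ - (i:ℝ))) := by
  filter_upwards [eventually_gt_atTop (0:ℝ)] with x hx
  exact ContDiffAt.sum fun i _ =>
    contDiffAt_const.mul (Real.contDiffAt_rpow_const_of_ne (ne_of_gt hx))

lemma iter_monoSum (c : ℕ → ℝ) (γ : ℝ) (j N : ℕ) :
    iteratedDeriv j (fun x : ℝ => ∑ i ∈ range N, c i * x ^ (γ - (i:ℝ))) =ᶠ[atTop]
      fun x => ∑ i ∈ range N,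
        c i * (∏ l ∈ range j, (γ - (i:ℝ) - (l:ℝ))) * x ^ (γ - (i:ℝ) - (j:ℝ)) := by
  induction N with
  | zero =>
    simp only [range_zero, sum_empty]
    rw [iter_zero_fun]
  | succ N ih =>
    have e1 : (fun x : ℝ => ∑ i ∈ range (N+1), c i * x ^ (γ - (i:ℝ))) =
        fun x => (∑ i ∈ range N, c i * x ^ (γ - (i:ℝ))) + c N * x ^ (γ - (N:ℝ)) :=
      funext fun x => Finset.sum_range_succ _ _
    rw [e1]
    refine (iter_add (esm_monoSum c γ N) ?_ j).trans ?_
    · filter_upwards [eventually_gt_atTop (0:ℝ)] with x hx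
      exact contDiffAt_const.mul (Real.contDiffAt_rpow_const_of_ne (ne_of_gt hx))
    · refine (ih.add (iter_monomial (c N) (γ - (N:ℝ)) j)).trans ?_
      filter_upwards with x
      rw [Finset.sum_range_succ]
      rfl

lemma key_iter {f : ℝ → ℝ} (c : ℕ → ℝ) (γ : ℝ) (hf : esm f) (j N : ℕ) :
    iteratedDeriv j (fun x => f x - ∑ i ∈ range N, c i * x ^ (γ - (i:ℝ))) =ᶠ[atTop]
      fun x => iteratedDeriv j f x - ∑ i ∈ range N,
        c i * (∏ l ∈ range j, (γ - (i:ℝ) - (l:ℝ))) * x ^ (γ - (i:ℝ) - (j:ℝ)) :=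
  (iter_sub hf (esm_monoSum c γ N) j).trans
    ((EventuallyEq.refl _ _).sub (iter_monoSum c γ j N))

lemma hasExpA_of_Sc {γ : ℝ} {c : ℕ → ℝ} {f : ℝ → ℝ} (hf : esm f)
    (h : ∀ N : ℕ, Sc (γ - N) (fun x => f x - ∑ i ∈ range N, c i * x ^ (γ - (i:ℝ)))) :
    HasExpA γ c f := by
  constructor
  · obtain ⟨a, ha⟩ := eventually_atTop.1 hf
    exact ⟨max a 1, lt_of_lt_of_le one_pos (le_max_right a 1),
      fun x hx => ha x (le_of_lt (lt_of_le_of_lt (le_max_left a 1) hx))⟩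
  · intro j N
    exact ((h N).2 j).congr' (key_iter c γ hf j N) (EventuallyEq.refl _ _)

lemma esm_of_hasExpA {γ : ℝ} {c : ℕ → ℝ} {f : ℝ → ℝ} (h : HasExpA γ c f) : esm f := by
  obtain ⟨⟨a, _, ha⟩, _⟩ := h
  filter_upwards [eventually_gt_atTop a] with x hx
  exact ha x hx

lemma sc_of_hasExpA {γ : ℝ} {c : ℕ → ℝ} {f : ℝ → ℝ} (h : HasExpA γ c f) (N : ℕ) :
    Sc (γ - N) (fun x => f x - ∑ i ∈ range N, c i * x ^ (γ - (i:ℝ))) := by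
  have hf := esm_of_hasExpA h
  constructor
  · obtain ⟨a, ha⟩ := eventually_atTop.1 (hf.and (esm_monoSum c γ N))
    filter_upwards [eventually_ge_atTop a] with x hx
    exact ((ha x hx).1).sub ((ha x hx).2)
  · intro j
    exact (h.2 j N).congr' (key_iter c γ hf j N).symm (EventuallyEq.refl _ _)

lemma sum_conv {M : Type*} [AddCommMonoid M] (F : ℕ → ℕ → M) (N : ℕ) :
    ∑ n ∈ range N, ∑ i ∈ range (n+1), F i (n-i) =
    ∑ p ∈ (range N ×ˢ range N).filter (fun p => p.1 + p.2 < N), F p.1 p.2 := by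
  rw [Finset.sum_sigma']
  refine Finset.sum_nbij' (fun p => (p.2, p.1 - p.2)) (fun p => (⟨p.1 + p.2, p.1⟩ : Σ _n : ℕ, ℕ))
    ?_ ?_ ?_ ?_ ?_
  · rintro ⟨n, i⟩ ha
    simp only [Finset.mem_sigma, mem_range] at ha
    simp only [Finset.mem_filter, Finset.mem_product, mem_range]
    omega
  · rintro ⟨i, i'⟩ hb
    simp only [Finset.mem_filter, Finset.mem_product, mem_range] at hb
    simp only [Finset.mem_sigma, mem_range]
    omega
  · rintro ⟨n, i⟩ ha
    simp only [Finset.mem_sigma, mem_range] at ha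
    simp only [Sigma.mk.inj_iff]
    refine ⟨by omega, heq_of_eq rfl⟩
  · rintro ⟨i, i'⟩ hb
    simp only [Finset.mem_filter, Finset.mem_product, mem_range] at hb
    simp only [Prod.mk.injEq]
    exact ⟨trivial, by omega⟩
  · rintro ⟨n, i⟩ ha
    rfl

def conv (b d : ℕ → ℝ) (n : ℕ) : ℝ := ∑ i ∈ range (n+1), b i * d (n-i)

def Exp0 (b : ℕ → ℝ) (f : ℝ → ℝ) : Prop :=
  ∀ N : ℕ, Sc (-(N:ℝ)) (fun x => f x - ∑ i ∈ range N, b i * x ^ (-(i:ℝ)))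

lemma Exp0.sc0 {b : ℕ → ℝ} {f : ℝ → ℝ} (hf : Exp0 b f) : Sc 0 f := by
  have h := hf 0
  simp only [Nat.cast_zero, neg_zero, range_zero, sum_empty, sub_zero] at h
  exact h

lemma Exp0.mul {b d : ℕ → ℝ} {f g : ℝ → ℝ} (hf : Exp0 b f) (hg : Exp0 d g) :
    Exp0 (conv b d) (fun x => f x * g x) := by
  intro N
  set P : ℝ → ℝ := fun x => ∑ i ∈ range N, b i * x ^ (-(i:ℝ)) with hP
  set Q : ℝ → ℝ := fun x => ∑ i ∈ range N, d i * x ^ (-(i:ℝ)) with hQ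
  have hQ0 : Sc 0 Q :=
    Sc.sum fun i _ => (Sc.monomial (d i) _).mono (by simp [neg_nonpos])
  have hA1 : Sc (-(N:ℝ)) (fun x => f x * (g x - Q x)) :=
    ((hf.sc0).mul (hg N)).mono (by rw [zero_add])
  have hA2 : Sc (-(N:ℝ)) (fun x => (f x - P x) * Q x) :=
    ((hf N).mul hQ0).mono (by rw [add_zero])
  have hA3 : Sc (-(N:ℝ))
      (fun x => P x * Q x - ∑ n ∈ range N, conv b d n * x ^ (-(n:ℝ))) := by
    have hfin : Sc (-(N:ℝ)) (fun x => ∑ p ∈ (range N ×ˢ range N).filter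
        (fun p => ¬ p.1 + p.2 < N), (b p.1 * d p.2) * x ^ (-(((p.1 + p.2 : ℕ)):ℝ))) := by
      refine Sc.sum fun p hp => (Sc.monomial _ _).mono ?_
      simp only [Finset.mem_filter, Finset.mem_product, mem_range, not_lt] at hp
      have : (N:ℝ) ≤ ((p.1 + p.2 : ℕ) : ℝ) := Nat.cast_le.2 hp.2
      linarith
    refine hfin.congr ?_
    filter_upwards [eventually_gt_atTop (0:ℝ)] with x hx
    have e1 : P x * Q x =
        ∑ p ∈ range N ×ˢ range N, (b p.1 * d p.2) * x ^ (-(((p.1 + p.2 : ℕ)):ℝ)) := by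
      rw [hP, hQ, Finset.sum_mul_sum, Finset.sum_product]
      refine Finset.sum_congr rfl fun i _ => Finset.sum_congr rfl fun i' _ => ?_
      rw [show (-(((i + i' : ℕ)):ℝ)) = (-(i:ℝ)) + (-(i':ℝ)) by push_cast; ring,
        Real.rpow_add hx]
      ring
    have e2 : ∑ n ∈ range N, conv b d n * x ^ (-(n:ℝ)) =
        ∑ p ∈ (range N ×ˢ range N).filter (fun p => p.1 + p.2 < N),
          (b p.1 * d p.2) * x ^ (-(((p.1 + p.2 : ℕ)):ℝ)) := by
      rw [← sum_conv (fun i i' => (b i * d i') * x ^ (-(((i + i' : ℕ)):ℝ))) N]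
      refine Finset.sum_congr rfl fun n _ => ?_
      rw [conv, Finset.sum_mul]
      refine Finset.sum_congr rfl fun i hi => ?_
      have hi' : i ≤ n := Nat.lt_succ_iff.1 (mem_range.1 hi)
      rw [Nat.add_sub_cancel' hi']
    rw [e1, e2]
    have := Finset.sum_filter_add_sum_filter_not (range N ×ˢ range N)
      (fun p => p.1 + p.2 < N)
      (fun p => (b p.1 * d p.2) * x ^ (-(((p.1 + p.2 : ℕ)):ℝ)))
    linarith
  refine ((hA1.add hA2).add hA3).congr (Filter.Eventually.of_forall fun x => ?_)
  simp only
  ring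


def bin (s : ℝ) (k : ℕ) : ℝ := (∏ l ∈ range k, (s - l)) / (k.factorial : ℝ)

def gfun (s : ℝ) (N : ℕ) (t : ℝ) : ℝ := (1+t) ^ s - ∑ k ∈ range N, bin s k * t ^ k

lemma bin_zero (s : ℝ) : bin s 0 = 1 := by simp [bin]

lemma bin_succ (s : ℝ) (k : ℕ) : ((k:ℝ)+1) * bin s (k+1) = s * bin (s-1) k := by
  unfold bin
  have h1 : (((k+1).factorial : ℕ) : ℝ) = ((k:ℝ)+1) * (k.factorial : ℝ) := by
    rw [Nat.factorial_succ]; push_cast; ring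
  have h2 : ∏ l ∈ range (k+1), (s - (l:ℝ)) = (∏ l ∈ range k, ((s-1) - (l:ℝ))) * s := by
    rw [Finset.prod_range_succ']
    simp only [Nat.cast_zero, sub_zero]
    congr 1
    exact Finset.prod_congr rfl fun l _ => by push_cast; ring
  rw [h1, h2]
  have hk : ((k.factorial : ℕ) : ℝ) ≠ 0 := Nat.cast_ne_zero.2 k.factorial_ne_zero
  field_simp

lemma gfun_hasDerivAt (s : ℝ) (N : ℕ) {t : ℝ} (ht : -1 < t) :
    HasDerivAt (gfun s N) (s * gfun (s-1) (N-1) t) t := by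
  have h0 : (0:ℝ) < 1 + t := by linarith
  have h1 : HasDerivAt (fun t : ℝ => (1+t) ^ s) (s * (1+t) ^ (s-1)) t := by
    have hr := Real.hasDerivAt_rpow_const (x := 1+t) (p := s) (Or.inl (ne_of_gt h0))
    have hc : HasDerivAt (fun t : ℝ => 1 + t) 1 t := (hasDerivAt_id t).const_add 1
    exact (hr.comp t hc).congr_deriv (mul_one _)
  have h2 : HasDerivAt (fun t : ℝ => ∑ k ∈ range N, bin s k * t ^ k)
      (∑ k ∈ range N, bin s k * ((k:ℝ) * t ^ (k-1))) t :=
    HasDerivAt.fun_sum fun k _ => (hasDerivAt_pow k t).const_mul _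
  have key : ∑ k ∈ range N, bin s k * ((k:ℝ) * t ^ (k-1)) =
      s * ∑ k ∈ range (N-1), bin (s-1) k * t ^ k := by
    cases N with
    | zero => simp
    | succ M =>
      rw [Finset.sum_range_succ']
      simp only [Nat.cast_zero, zero_mul, mul_zero, add_zero]
      rw [Finset.mul_sum]
      refine Finset.sum_congr rfl fun k _ => ?_
      have : bin s (k+1) * (((k+1:ℕ):ℝ) * t ^ (k+1-1)) = (((k:ℝ)+1) * bin s (k+1)) * t ^ k := by
        push_cast; ring
      rw [this, bin_succ]
      ring
  have h3 := h1.sub h2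
  have : s * (1+t) ^ (s-1) - ∑ k ∈ range N, bin s k * ((k:ℝ) * t ^ (k-1)) =
      s * gfun (s-1) (N-1) t := by
    rw [key, gfun]; ring
  rwa [this] at h3

lemma gfun_zero (s : ℝ) (N : ℕ) : gfun s (N+1) 0 = 0 := by
  unfold gfun
  rw [Finset.sum_eq_single 0]
  · simp [bin_zero, Real.one_rpow]
  · intro b _ hb
    simp [zero_pow hb]
  · intro h
    exact absurd (Finset.mem_range.2 (Nat.succ_pos N)) h

lemma gfun_bound : ∀ (N : ℕ) (s : ℝ), ∃ C, 0 ≤ C ∧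
    ∀ t : ℝ, |t| ≤ 1/2 → |gfun s N t| ≤ C * |t| ^ N := by
  intro N
  induction N with
  | zero =>
    intro s
    have hcont : ContinuousOn (fun t : ℝ => (1+t) ^ s) (Set.Icc (-(1/2):ℝ) (1/2)) := by
      apply ContinuousOn.rpow_const
      · exact (continuous_const.add continuous_id).continuousOn
      · intro t ht
        left
        have := ht.1
        intro h
        have : t = -1 := by linarith
        rw [this] at ht
        have := ht.1
        norm_num at this
        -- 1 + t ≠ 0
    obtain ⟨C, hC⟩ := isCompact_Icc.exists_bound_of_continuousOn hcont
    refine ⟨max C 0, le_max_right _ _, fun t ht => ?_⟩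
    have htm : t ∈ Set.Icc (-(1/2):ℝ) (1/2) := by
      rcases abs_le.1 ht with ⟨h1, h2⟩; exact ⟨h1, h2⟩
    have := hC t htm
    rw [pow_zero, mul_one]
    calc |gfun s 0 t| = ‖(1+t) ^ s‖ := by rw [gfun]; simp [Real.norm_eq_abs]
      _ ≤ C := this
      _ ≤ max C 0 := le_max_left _ _
  | succ N ih =>
    intro s
    obtain ⟨C, hC0, hC⟩ := ih (s-1)
    refine ⟨|s| * C, mul_nonneg (abs_nonneg s) hC0, fun t ht => ?_⟩
    set K := Set.uIcc (0:ℝ) t with hK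
    have habs : ∀ τ ∈ K, |τ| ≤ |t| := by
      intro τ hτ
      rw [Set.mem_uIcc] at hτ
      rcases hτ with ⟨h1, h2⟩ | ⟨h1, h2⟩
      · rw [abs_le]; constructor <;> [linarith [neg_abs_le t, le_abs_self t]; skip]
        exact h2.trans (le_abs_self t)
      · rw [abs_le]
        exact ⟨h1.trans' (neg_abs_le t), h2.trans (by positivity)⟩
    have hd : ∀ τ ∈ K, HasDerivWithinAt (gfun s (N+1)) (s * gfun (s-1) N τ) K τ := by
      intro τ hτ
      have h1 : |τ| ≤ 1/2 := (habs τ hτ).trans ht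
      have h2 : -1 < τ := by have := (abs_le.1 h1).1; linarith
      exact ((gfun_hasDerivAt s (N+1) h2)).hasDerivWithinAt
    have hb : ∀ τ ∈ K, ‖s * gfun (s-1) N τ‖ ≤ |s| * (C * |t| ^ N) := by
      intro τ hτ
      have h1 : |τ| ≤ 1/2 := (habs τ hτ).trans ht
      rw [norm_mul, Real.norm_eq_abs, Real.norm_eq_abs]
      refine mul_le_mul_of_nonneg_left ?_ (abs_nonneg s)
      refine (hC τ h1).trans (mul_le_mul_of_nonneg_left ?_ hC0)
      exact pow_le_pow_left₀ (abs_nonneg τ) (habs τ hτ) N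
    have := Convex.norm_image_sub_le_of_norm_hasDerivWithin_le hd hb (convex_uIcc 0 t)
      (Set.left_mem_uIcc) (Set.right_mem_uIcc)
    rw [gfun_zero, sub_zero, Real.norm_eq_abs, Real.norm_eq_abs, sub_zero] at this
    calc |gfun s (N+1) t| ≤ |s| * (C * |t| ^ N) * |t| := this
      _ = |s| * C * |t| ^ (N+1) := by ring
  
lemma gfun_contDiffAt (s : ℝ) (N : ℕ) {t : ℝ} (ht : -1 < t) :
    ContDiffAt ℝ (⊤ : ℕ∞) (gfun s N) t := by
  refine ContDiffAt.sub ?_ (ContDiffAt.sum fun k _ => contDiffAt_const.mul (contDiffAt_id.pow k))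
  exact (contDiffAt_const.add contDiffAt_id).rpow_const_of_ne (by intro h; simp at h; linarith)


def pw (b : ℕ → ℝ) : ℕ → ℕ → ℝ
  | 0 => fun n => if n = 0 then 1 else 0
  | (k+1) => conv (pw b k) b

lemma pw_eq_zero {b : ℕ → ℝ} (hb0 : b 0 = 0) : ∀ k n, n < k → pw b k n = 0 := by
  intro k
  induction k with
  | zero => intro n hn; omega
  | succ k IH =>
    intro n hn
    show conv (pw b k) b n = 0
    rw [conv]
    refine Finset.sum_eq_zero fun i hi => ?_
    have hi' : i ≤ n := Nat.lt_succ_iff.1 (mem_range.1 hi)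
    rcases lt_or_ge i k with h | h
    · rw [IH i h, zero_mul]
    · rw [show n - i = 0 by omega, hb0, mul_zero]

lemma Sc_one : Sc 0 (fun _ : ℝ => (1:ℝ)) :=
  (Sc.monomial 1 0).congr (Filter.Eventually.of_forall fun x => by
    simp [Real.rpow_zero])

end S5

/-- If `α ∈ A^(γ)` strictly and `α(x) > 0` for all large `x`, then for every
real `ξ`, `θ(x) = α(x)^ξ` belongs to `A^(γξ)` strictly. -/
theorem memAS_rpow (γ : ℝ) (α : ℝ → ℝ) (hα : MemAS γ α)
    (hpos : ∀ᶠ x in atTop, 0 < α x) (ξ : ℝ) :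
    MemAS (γ * ξ) (fun x => α x ^ ξ) := by

  obtain ⟨c, hc0, hA⟩ := hα
  have hesm : S5.esm α := S5.esm_of_hasExpA hA
  have hscN : ∀ N : ℕ, S5.Sc (γ - N) (fun x => α x - ∑ i ∈ range N, c i * x ^ (γ - (i:ℝ))) :=
    S5.sc_of_hasExpA hA
  -- c 0 is positive
  have hrem1 : (fun x => α x - c 0 * x ^ γ) =O[atTop] fun x : ℝ => x ^ (γ - 1) := by
    have h := (hscN 1).2 0
    simp only [iteratedDeriv_zero, Finset.sum_range_one, Nat.cast_zero, Nat.cast_one,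
      sub_zero] at h
    exact h
  have hsmall : Tendsto (fun x => (α x - c 0 * x ^ γ) * x ^ (-γ)) atTop (nhds 0) := by
    have h2 : (fun x => (α x - c 0 * x ^ γ) * x ^ (-γ)) =O[atTop] fun x : ℝ => x ^ (-(1:ℝ)) := by
      have h3 := hrem1.mul (Asymptotics.isBigO_refl (fun x : ℝ => x ^ (-γ)) atTop)
      refine h3.congr' (Filter.EventuallyEq.refl _ _) ?_
      filter_upwards [eventually_gt_atTop (0:ℝ)] with x hx
      rw [← Real.rpow_add hx]
      congr 1
      ring
    exact h2.trans_tendsto (tendsto_rpow_neg_atTop one_pos)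
  have hlim : Tendsto (fun x => α x * x ^ (-γ)) atTop (nhds (c 0)) := by
    have heq : (fun x => (α x - c 0 * x ^ γ) * x ^ (-γ) + c 0) =ᶠ[atTop]
        fun x => α x * x ^ (-γ) := by
      filter_upwards [eventually_gt_atTop (0:ℝ)] with x hx
      have hxne : x ^ γ * x ^ (-γ) = 1 := by rw [← Real.rpow_add hx]; simp
      rw [sub_mul, mul_assoc, hxne, mul_one]
      ring
    have := (hsmall.add (tendsto_const_nhds (x := c 0)))
    rw [zero_add] at this
    exact this.congr' heq
  have hc0pos : 0 < c 0 := by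
    have hge : 0 ≤ c 0 := by
      refine ge_of_tendsto hlim ?_
      filter_upwards [hpos, eventually_gt_atTop (0:ℝ)] with x h1 h2
      exact mul_nonneg h1.le (Real.rpow_nonneg h2.le _)
    exact lt_of_le_of_ne hge (Ne.symm hc0)
  -- the normalized function u
  obtain ⟨u, hu⟩ : ∃ u : ℝ → ℝ, u = fun x => α x * x ^ (-γ) / c 0 - 1 := ⟨_, rfl⟩
  have huesm : S5.esm u := by
    rw [hu]
    filter_upwards [hesm, eventually_gt_atTop (0:ℝ)] with x h1 h2
    exact ((h1.mul (Real.contDiffAt_rpow_const_of_ne h2.ne')).div_const _).sub contDiffAt_const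
  obtain ⟨b, hb⟩ : ∃ b : ℕ → ℝ, b = fun i => if i = 0 then 0 else c i / c 0 := ⟨_, rfl⟩
  have hurem : ∀ N : ℕ, 1 ≤ N →
      (fun x => u x - ∑ i ∈ range N, b i * x ^ (-(i:ℝ))) =ᶠ[atTop]
      fun x => (α x - ∑ i ∈ range N, c i * x ^ (γ - (i:ℝ))) * ((c 0)⁻¹ * x ^ (-γ)) := by
    intro N hN
    filter_upwards [eventually_gt_atTop (0:ℝ)] with x hx
    have hpowmul : ∀ i : ℕ, x ^ (γ - (i:ℝ)) * x ^ (-γ) = x ^ (-(i:ℝ)) := by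
      intro i
      rw [← Real.rpow_add hx]
      congr 1
      ring
    have hsum : ∑ i ∈ range N, (c i / c 0) * x ^ (-(i:ℝ))
        = 1 + ∑ i ∈ range N, b i * x ^ (-(i:ℝ)) := by
      have h1 : ∑ i ∈ range N, ((c i / c 0) * x ^ (-(i:ℝ)) - b i * x ^ (-(i:ℝ)))
          = ∑ i ∈ range N, (if i = 0 then (1:ℝ) else 0) := by
        refine Finset.sum_congr rfl fun i _ => ?_
        by_cases hi : i = 0
        · subst hi
          simp [hb, div_self hc0pos.ne']
        · simp [hb, hi]
      have h2 : ∑ i ∈ range N, (if i = 0 then (1:ℝ) else 0) = 1 := by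
        rw [Finset.sum_ite_eq' (range N) 0 (fun _ => (1:ℝ)), if_pos (Finset.mem_range.mpr hN)]
      rw [Finset.sum_sub_distrib] at h1
      rw [h2] at h1
      linarith
    have hmain : (α x - ∑ i ∈ range N, c i * x ^ (γ - (i:ℝ))) * ((c 0)⁻¹ * x ^ (-γ))
        = α x * x ^ (-γ) / c 0 - ∑ i ∈ range N, (c i / c 0) * x ^ (-(i:ℝ)) := by
      rw [sub_mul, Finset.sum_mul]
      congr 1
      · ring
      · refine Finset.sum_congr rfl fun i _ => ?_
        rw [show c i * x ^ (γ - (i:ℝ)) * ((c 0)⁻¹ * x ^ (-γ))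
            = (c i / c 0) * (x ^ (γ - (i:ℝ)) * x ^ (-γ)) by ring, hpowmul i]
    rw [hmain, hsum, hu]
    ring
  have uScSucc : ∀ M : ℕ, S5.Sc (-((M+1:ℕ):ℝ))
      (fun x => u x - ∑ i ∈ range (M+1), b i * x ^ (-(i:ℝ))) := by
    intro M
    have h1 := (hscN (M+1)).mul (S5.Sc.monomial (c 0)⁻¹ (-γ))
    have h2 := h1.mono (e' := -((M+1:ℕ):ℝ)) (le_of_eq (by push_cast; ring))
    exact h2.congr (hurem (M+1) (Nat.succ_le_succ (Nat.zero_le M))).symm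
  have uSc1 : S5.Sc (-1:ℝ) u := by
    refine ((uScSucc 0).congr ?_).mono (by norm_num)
    filter_upwards with x
    simp [hb]
  have uExp : S5.Exp0 b u := by
    intro N
    cases N with
    | zero =>
      refine (uSc1.mono (by norm_num)).congr ?_
      filter_upwards with x
      simp
    | succ M => exact uScSucc M
  have hu0 : Tendsto u atTop (nhds 0) := by
    have h1 := uSc1.2 0
    simp only [iteratedDeriv_zero, Nat.cast_zero, sub_zero] at h1
    exact h1.trans_tendsto (tendsto_rpow_neg_atTop one_pos)
  have husmall : ∀ᶠ x in atTop, |u x| ≤ 1/2 := by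
    have := Metric.tendsto_nhds.1 hu0 (1/2) (by norm_num)
    filter_upwards [this] with x hx
    rw [Real.dist_eq, sub_zero] at hx
    linarith
  have hub : u =O[atTop] fun x : ℝ => x ^ (-1:ℝ) := by
    have h1 := uSc1.2 0
    simpa only [iteratedDeriv_zero, Nat.cast_zero, sub_zero] using h1
  -- derivative of u lies in Sc (-2)
  have hduSc : S5.Sc (-2:ℝ) (deriv u) := by
    refine ⟨huesm.deriv, fun j => ?_⟩
    have hzs : (fun x : ℝ => u x - ∑ i ∈ range 2, b i * x ^ (-(i:ℝ)))
        = fun x => u x - ∑ i ∈ range 2, b i * x ^ ((0:ℝ) - (i:ℝ)) := by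
      simp only [zero_sub]
    have h4 := S5.key_iter b 0 huesm (j+1) 2
    have h2 := (uScSucc 1).2 (j+1)
    rw [hzs] at h2
    have hsplit : iteratedDeriv (j+1) u =ᶠ[atTop]
        fun x => (iteratedDeriv (j+1)
            (fun x => u x - ∑ i ∈ range 2, b i * x ^ ((0:ℝ) - (i:ℝ))) x)
          + ∑ i ∈ range 2, b i * (∏ l ∈ range (j+1), ((0:ℝ) - (i:ℝ) - (l:ℝ)))
              * x ^ ((0:ℝ) - (i:ℝ) - ((j+1:ℕ):ℝ)) := by
      filter_upwards [h4] with x hx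
      rw [hx]
      ring
    have hgoal : iteratedDeriv (j+1) u =O[atTop] fun x : ℝ => x ^ ((-2:ℝ) - (j:ℝ)) := by
      refine Asymptotics.IsBigO.congr' ?_ hsplit.symm (Filter.EventuallyEq.refl _ _)
      refine Asymptotics.IsBigO.add ?_ ?_
      · refine h2.trans (S5.rpow_O ?_)
        push_cast
        linarith
      · have hexp : ((0:ℝ) - (1:ℕ) - ((j+1:ℕ):ℝ)) = (-2:ℝ) - (j:ℝ) := by push_cast; ring
        have : (fun x : ℝ => ∑ i ∈ range 2, b i * (∏ l ∈ range (j+1), ((0:ℝ) - (i:ℝ) - (l:ℝ)))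
              * x ^ ((0:ℝ) - (i:ℝ) - ((j+1:ℕ):ℝ)))
            = fun x : ℝ => b 1 * (∏ l ∈ range (j+1), ((0:ℝ) - (1:ℕ) - (l:ℝ)))
              * x ^ ((0:ℝ) - (1:ℕ) - ((j+1:ℕ):ℝ)) := by
          funext x
          rw [Finset.sum_range_succ, Finset.sum_range_one]
          simp [hb]
        rw [this, hexp]
        exact (Asymptotics.isBigO_refl _ _).const_mul_left _
    rw [← iteratedDeriv_succ'] 
    exact hgoal
  -- smoothness of compositions
  have hgsmooth : ∀ (s : ℝ) (N : ℕ), S5.esm (fun x => S5.gfun s N (u x)) := by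
    intro s N
    filter_upwards [huesm, husmall] with x h1 h2
    have h3 : -1 < u x := by obtain ⟨hl, hr⟩ := abs_le.1 h2; linarith
    exact (S5.gfun_contDiffAt s N h3).comp x h1
  -- the key composition bound
  have hcomp : ∀ (j : ℕ) (s : ℝ) (N : ℕ),
      iteratedDeriv j (fun x => S5.gfun s N (u x)) =O[atTop]
        fun x : ℝ => x ^ (-(N:ℝ) - (j:ℝ)) := by
    intro j
    induction j using Nat.strong_induction_on with
    | _ j IH =>
      intro s N
      cases j with
      | zero =>
        obtain ⟨C, hC0, hC⟩ := S5.gfun_bound N s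
        rw [iteratedDeriv_zero]
        have h1 : (fun x => S5.gfun s N (u x)) =O[atTop] fun x => |u x| ^ N := by
          rw [Asymptotics.isBigO_iff]
          refine ⟨C, ?_⟩
          filter_upwards [husmall] with x hx
          rw [Real.norm_eq_abs, Real.norm_eq_abs,
            abs_of_nonneg (pow_nonneg (abs_nonneg (u x)) N)]
          exact hC (u x) hx
        have h2 : (fun x => |u x| ^ N) =O[atTop] fun x : ℝ => x ^ (-(N:ℝ)) := by
          refine (hub.abs_left.pow N).trans ?_
          refine Filter.EventuallyEq.isBigO ?_
          filter_upwards [eventually_gt_atTop (0:ℝ)] with x hx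
          rw [← Real.rpow_natCast (x ^ (-1:ℝ)) N, ← Real.rpow_mul hx.le]
          norm_num
        simpa only [Nat.cast_zero, sub_zero] using h1.trans h2
      | succ m =>
        have hstep : deriv (fun x => S5.gfun s N (u x)) =ᶠ[atTop]
            fun x => S5.gfun (s-1) (N-1) (u x) * (s * deriv u x) := by
          filter_upwards [huesm, husmall] with x h1 h2
          have hu1 : -1 < u x := by obtain ⟨hl, hr⟩ := abs_le.1 h2; linarith
          have hud : HasDerivAt u (deriv u x) x := (h1.differentiableAt (by simp)).hasDerivAt
          have hd : HasDerivAt (fun y => S5.gfun s N (u y))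
              (s * S5.gfun (s-1) (N-1) (u x) * deriv u x) x :=
            (S5.gfun_hasDerivAt s N hu1).comp x hud
          rw [hd.deriv]
          ring
        have hO : iteratedDeriv m (fun x => S5.gfun (s-1) (N-1) (u x) * (s * deriv u x))
            =O[atTop] fun x : ℝ => x ^ ((-((N-1:ℕ):ℝ)) + (-2:ℝ) - (m:ℝ)) := by
          refine S5.mulBound (hgsmooth (s-1) (N-1)) ?_ ?_ ?_
          · filter_upwards [huesm.deriv] with x hx
            exact contDiffAt_const.mul hx
          · intro m' _
            exact IH m' (by omega) (s-1) (N-1)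
          · intro m' _
            refine Asymptotics.IsBigO.congr'
              ((hduSc.2 m').const_mul_left s)
              (S5.iter_const_mul huesm.deriv s m').symm (Filter.EventuallyEq.refl _ _)
        have hexp : (-((N-1:ℕ):ℝ)) + (-2:ℝ) - (m:ℝ) ≤ -(N:ℝ) - ((m+1:ℕ):ℝ) := by
          have h5 : (N:ℝ) ≤ ((N-1:ℕ):ℝ) + 1 := by exact_mod_cast (by omega : N ≤ N-1+1)
          push_cast
          linarith
        rw [iteratedDeriv_succ']
        refine Asymptotics.IsBigO.trans ?_ (S5.rpow_O hexp)
        exact hO.congr' (S5.iter_congr hstep m).symm (Filter.EventuallyEq.refl _ _)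
  -- powers of u
  have hpow : ∀ k : ℕ, S5.Exp0 (S5.pw b k) (fun x => u x ^ k) := by
    intro k
    induction k with
    | zero =>
      intro N
      cases N with
      | zero =>
        refine (S5.Sc_one.mono (by norm_num)).congr ?_
        filter_upwards with x
        simp
      | succ M =>
        refine (S5.Sc.zero (e := -(((M+1:ℕ)):ℝ))).congr ?_
        filter_upwards with x
        have : ∑ i ∈ range (M+1), S5.pw b 0 i * x ^ (-(i:ℝ)) = 1 := by
          rw [Finset.sum_eq_single 0]
          · simp [S5.pw]
          · intro i _ hi
            simp [S5.pw, hi]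
          · intro h
            exact absurd (Finset.mem_range.2 (Nat.succ_pos M)) h
        simp only [pow_zero, this, sub_self]
    | succ k IHk =>
      have h1 := IHk.mul uExp
      have e1 : (fun x => u x ^ k * u x) = fun x => u x ^ (k+1) :=
        funext fun x => (pow_succ _ _).symm
      rw [e1] at h1
      exact h1
  -- the full expansion of (1+u)^ξ
  obtain ⟨ee, hee⟩ : ∃ ee : ℕ → ℝ,
    ee = fun n => ∑ k ∈ range (n+1), S5.bin ξ k * S5.pw b k n := ⟨_, rfl⟩
  have hb0 : b 0 = 0 := by simp [hb]
  have hEh : S5.Exp0 ee (fun x => S5.gfun ξ 0 (u x)) := by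
    intro N
    have hid : ∀ x : ℝ, S5.gfun ξ 0 (u x) - ∑ n ∈ range N, ee n * x ^ (-(n:ℝ)) =
        S5.gfun ξ N (u x) + ∑ k ∈ range N, S5.bin ξ k *
          ((u x ^ k) - ∑ n ∈ range N, S5.pw b k n * x ^ (-(n:ℝ))) := by
      intro x
      have h1 : S5.gfun ξ 0 (u x) = S5.gfun ξ N (u x) + ∑ k ∈ range N, S5.bin ξ k * u x ^ k := by
        simp only [S5.gfun, range_zero, sum_empty, sub_zero]
        ring
      have h2 : ∑ n ∈ range N, ee n * x ^ (-(n:ℝ)) =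
          ∑ k ∈ range N, S5.bin ξ k * ∑ n ∈ range N, S5.pw b k n * x ^ (-(n:ℝ)) := by
        have h3 : ∀ n ∈ range N, ee n * x ^ (-(n:ℝ)) =
            ∑ k ∈ range N, S5.bin ξ k * (S5.pw b k n * x ^ (-(n:ℝ))) := by
          intro n hn
          rw [hee]
          simp only
          rw [Finset.sum_mul]
          refine Finset.sum_subset (Finset.range_subset_range.2 (Finset.mem_range.1 hn)) ?_ |>.trans ?_
          · intro k hk hknot
            have : n < k := by
              simp only [Finset.mem_range] at hk hknot
              omega
            rw [S5.pw_eq_zero hb0 k n this]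
            ring
          · refine Finset.sum_congr rfl fun k _ => by ring
        rw [Finset.sum_congr rfl h3, Finset.sum_comm]
        refine Finset.sum_congr rfl fun k _ => ?_
        rw [Finset.mul_sum]
      have h4 : ∑ k ∈ range N, S5.bin ξ k *
          ((u x ^ k) - ∑ n ∈ range N, S5.pw b k n * x ^ (-(n:ℝ)))
          = (∑ k ∈ range N, S5.bin ξ k * u x ^ k)
            - ∑ k ∈ range N, S5.bin ξ k * ∑ n ∈ range N, S5.pw b k n * x ^ (-(n:ℝ)) := by
        rw [← Finset.sum_sub_distrib]
        exact Finset.sum_congr rfl fun k _ => mul_sub _ _ _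
      rw [h1, h2, h4]
      ring
    have hS1 : S5.Sc (-(N:ℝ)) (fun x => S5.gfun ξ N (u x)) :=
      ⟨hgsmooth ξ N, fun j => hcomp j ξ N⟩
    have hS2 : S5.Sc (-(N:ℝ)) (fun x => ∑ k ∈ range N, S5.bin ξ k *
        ((u x ^ k) - ∑ n ∈ range N, S5.pw b k n * x ^ (-(n:ℝ)))) :=
      S5.Sc.sum fun k _ => ((hpow k) N).const_mul _
    exact (hS1.add hS2).congr (Filter.Eventually.of_forall fun x => (hid x).symm)
  -- relate θ to the expansion of (1+u)^ξ
  have hθeq : ∀ᶠ x in atTop, α x ^ ξ = (c 0 ^ ξ * x ^ (γ*ξ)) * S5.gfun ξ 0 (u x) := by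
    filter_upwards [husmall, eventually_gt_atTop (0:ℝ), hpos] with x h2 hx h3
    have hu1 : (0:ℝ) < 1 + u x := by obtain ⟨hl, hr⟩ := abs_le.1 h2; linarith
    have hg0 : S5.gfun ξ 0 (u x) = (1 + u x) ^ ξ := by
      simp [S5.gfun]
    have hαeq : α x = c 0 * (1 + u x) * x ^ γ := by
      have h4 : 1 + u x = α x * x ^ (-γ) / c 0 := by rw [hu]; ring
      rw [h4]
      have h5 : c 0 * (α x * x ^ (-γ) / c 0) * x ^ γ = α x * (x ^ (-γ) * x ^ γ) := by
        field_simp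
      rw [h5, ← Real.rpow_add hx]
      simp
    rw [hg0, hαeq, Real.mul_rpow (mul_nonneg hc0pos.le hu1.le) (Real.rpow_nonneg hx.le γ),
      Real.mul_rpow hc0pos.le hu1.le, Real.rpow_mul hx.le]
    ring
  have hθesm : S5.esm (fun x => α x ^ ξ) := by
    filter_upwards [hesm, hpos] with x h1 h2
    exact h1.rpow_const_of_ne h2.ne'
  -- conclusion
  refine ⟨fun i => c 0 ^ ξ * ee i, ?_, ?_⟩
  · show c 0 ^ ξ * ee 0 ≠ 0
    have hee0 : ee 0 = 1 := by
      rw [hee]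
      simp [S5.bin_zero, S5.pw]
    rw [hee0, mul_one]
    exact (Real.rpow_pos_of_pos hc0pos ξ).ne'
  · refine S5.hasExpA_of_Sc hθesm ?_
    intro N
    have hfinal : (fun x => α x ^ ξ
          - ∑ i ∈ range N, (c 0 ^ ξ * ee i) * x ^ (γ*ξ - (i:ℝ))) =ᶠ[atTop]
        fun x => (c 0 ^ ξ * x ^ (γ*ξ)) * (S5.gfun ξ 0 (u x)
          - ∑ i ∈ range N, ee i * x ^ (-(i:ℝ))) := by
      filter_upwards [hθeq, eventually_gt_atTop (0:ℝ)] with x h1 hx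
      rw [h1, mul_sub]
      congr 1
      rw [Finset.mul_sum]
      refine Finset.sum_congr rfl fun i _ => ?_
      rw [show γ*ξ - (i:ℝ) = γ*ξ + (-(i:ℝ)) by ring, Real.rpow_add hx]
      ring
    have hS := (S5.Sc.monomial (c 0 ^ ξ) (γ*ξ)).mul (hEh N)
    exact (hS.mono (le_of_eq (by ring))).congr hfinal.symm
end
end

section
/- If f belongs to the class B^(m), then f belongs to the class B^(m̂) for every integer m̂ > m. In particular, B^(1) ⊂ B^(2) ⊂ B^(3) ⊂ ⋯. -/
open Filter Finset Real

noncomputable section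

namespace MemBmono

lemma rpow_isBigO {s t : ℝ} (h : s ≤ t) :
    (fun x : ℝ => x ^ s) =O[atTop] fun x : ℝ => x ^ t := by
  apply Asymptotics.IsBigO.of_bound 1
  filter_upwards [eventually_ge_atTop (1:ℝ)] with x hx
  have hx0 : (0:ℝ) < x := lt_of_lt_of_le one_pos hx
  rw [Real.norm_eq_abs, Real.norm_eq_abs, abs_of_pos (Real.rpow_pos_of_pos hx0 s),
    abs_of_pos (Real.rpow_pos_of_pos hx0 t), one_mul]
  exact Real.rpow_le_rpow_of_exponent_le hx h

lemma ev_Ioi {P : ℝ → Prop} (h : ∀ᶠ x in atTop, P x) :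
    ∃ a : ℝ, 0 < a ∧ ∀ x ∈ Set.Ioi a, P x := by
  obtain ⟨a0, ha0⟩ := eventually_atTop.1 h
  exact ⟨max a0 1, lt_of_lt_of_le one_pos (le_max_right _ _),
    fun x hx => ha0 x (le_of_lt (lt_of_le_of_lt (le_max_left a0 1) hx))⟩

lemma Ioi_ev {P : ℝ → Prop} {a : ℝ} (h : ∀ x ∈ Set.Ioi a, P x) : ∀ᶠ x in atTop, P x :=
  Filter.eventually_of_mem (Ioi_mem_atTop a) h

lemma contDiffOn_iteratedDeriv {s : Set ℝ} (hs : IsOpen s) {f : ℝ → ℝ}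
    (hf : ContDiffOn ℝ (⊤ : ℕ∞) f s) (n : ℕ) : ContDiffOn ℝ (⊤ : ℕ∞) (iteratedDeriv n f) s := by
  induction n with
  | zero => simpa [iteratedDeriv_zero] using hf
  | succ n ih => rw [iteratedDeriv_succ]; exact ih.deriv_of_isOpen hs (by simp)

lemma diffAt_iteratedDeriv {s : Set ℝ} (hs : IsOpen s) {f : ℝ → ℝ}
    (hf : ContDiffOn ℝ (⊤ : ℕ∞) f s) (n : ℕ) {x : ℝ} (hx : x ∈ s) :
    DifferentiableAt ℝ (iteratedDeriv n f) x :=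
  (((contDiffOn_iteratedDeriv hs hf n).contDiffAt (hs.mem_nhds hx)).differentiableAt (by simp))

lemma iteratedDeriv_add_on {s : Set ℝ} (hs : IsOpen s) {f g : ℝ → ℝ}
    (hf : ContDiffOn ℝ (⊤ : ℕ∞) f s) (hg : ContDiffOn ℝ (⊤ : ℕ∞) g s) (n : ℕ) :
    ∀ x ∈ s, iteratedDeriv n (fun y => f y + g y) x
      = iteratedDeriv n f x + iteratedDeriv n g x := by
  induction n with
  | zero => intro x hx; simp [iteratedDeriv_zero]
  | succ n ih =>
    intro x hx
    have h1 : Set.EqOn (iteratedDeriv n (fun y => f y + g y))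
        (fun y => iteratedDeriv n f y + iteratedDeriv n g y) s := fun y hy => ih y hy
    rw [iteratedDeriv_succ, (Filter.eventuallyEq_of_mem (hs.mem_nhds hx) h1).deriv_eq,
      deriv_fun_add (diffAt_iteratedDeriv hs hf n hx) (diffAt_iteratedDeriv hs hg n hx),
      ← iteratedDeriv_succ, ← iteratedDeriv_succ]

lemma iteratedDeriv_const_mul_glob (r : ℝ) (f : ℝ → ℝ) (n : ℕ) :
    iteratedDeriv n (fun y => r * f y) = fun x => r * iteratedDeriv n f x := by
  induction n with
  | zero => simp [iteratedDeriv_zero]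
  | succ n ih =>
    rw [iteratedDeriv_succ, ih, iteratedDeriv_succ]
    funext x
    exact deriv_const_mul_field r

lemma iteratedDeriv_id_mul_on {s : Set ℝ} (hs : IsOpen s) {f : ℝ → ℝ}
    (hf : ContDiffOn ℝ (⊤ : ℕ∞) f s) (n : ℕ) :
    ∀ x ∈ s, iteratedDeriv n (fun y => y * f y) x
      = x * iteratedDeriv n f x + n * iteratedDeriv (n - 1) f x := by
  induction n with
  | zero => intro x hx; simp [iteratedDeriv_zero]
  | succ n ih =>
    intro x hx
    have h1 : Set.EqOn (iteratedDeriv n (fun y => y * f y))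
        (fun y => y * iteratedDeriv n f y + (n:ℝ) * iteratedDeriv (n-1) f y) s :=
      fun y hy => ih y hy
    rw [iteratedDeriv_succ, (Filter.eventuallyEq_of_mem (hs.mem_nhds hx) h1).deriv_eq]
    have hdn := diffAt_iteratedDeriv hs hf n hx
    have hdn1 := diffAt_iteratedDeriv hs hf (n-1) hx
    rw [deriv_fun_add ((differentiableAt_fun_id).fun_mul hdn) (hdn1.const_mul _),
      deriv_fun_mul differentiableAt_fun_id hdn, deriv_const_mul_field]
    cases n with
    | zero =>
      simp [iteratedDeriv_one, iteratedDeriv_zero, deriv_id'']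
      ring
    | succ k =>
      rw [Nat.succ_sub_one, ← iteratedDeriv_succ, ← iteratedDeriv_succ]
      simp only [deriv_id'']
      push_cast
      ring

lemma hasExpA_congr {γ : ℝ} {c : ℕ → ℝ} {α β : ℝ → ℝ} (h : ∀ x, α x = β x)
    (hα : HasExpA γ c α) : HasExpA γ c β := by
  have he : α = β := funext h
  rwa [← he]

lemma memAS_congr {γ : ℝ} {α β : ℝ → ℝ} (h : ∀ x, α x = β x)
    (hα : MemAS γ α) : MemAS γ β := by
  obtain ⟨c, hc0, hc⟩ := hα
  exact ⟨c, hc0, hasExpA_congr h hc⟩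

lemma hasExpA_add {γ : ℝ} {c d : ℕ → ℝ} {α β : ℝ → ℝ}
    (hα : HasExpA γ c α) (hβ : HasExpA γ d β) :
    HasExpA γ (fun i => c i + d i) (fun x => α x + β x) := by
  obtain ⟨⟨a, ha, hsa⟩, hOa⟩ := hα
  obtain ⟨⟨b, hb, hsb⟩, hOb⟩ := hβ
  have hmem : ∀ x ∈ Set.Ioi (max a b), ContDiffAt ℝ (⊤ : ℕ∞) α x ∧ ContDiffAt ℝ (⊤ : ℕ∞) β x :=
    fun x hx => ⟨hsa x (lt_of_le_of_lt (le_max_left a b) hx),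
      hsb x (lt_of_le_of_lt (le_max_right a b) hx)⟩
  refine ⟨⟨max a b, lt_of_lt_of_le ha (le_max_left a b),
    fun x hx => ((hmem x hx).1).add (hmem x hx).2⟩, fun j N => ?_⟩
  have hca : ContDiffOn ℝ (⊤ : ℕ∞) α (Set.Ioi (max a b)) := fun x hx => ((hmem x hx).1).contDiffWithinAt
  have hcb : ContDiffOn ℝ (⊤ : ℕ∞) β (Set.Ioi (max a b)) := fun x hx => ((hmem x hx).2).contDiffWithinAt
  refine Filter.EventuallyEq.trans_isBigO (f₂ := fun x : ℝ =>
      (iteratedDeriv j α x - ∑ i ∈ Finset.range N,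
        c i * (∏ l ∈ Finset.range j, (γ - (i:ℝ) - (l:ℝ))) * x ^ (γ - (i:ℝ) - (j:ℝ)))
      + (iteratedDeriv j β x - ∑ i ∈ Finset.range N,
        d i * (∏ l ∈ Finset.range j, (γ - (i:ℝ) - (l:ℝ))) * x ^ (γ - (i:ℝ) - (j:ℝ)))) ?_
    ((hOa j N).add (hOb j N))
  filter_upwards [eventually_gt_atTop (max a b)] with x hx
  have hS : ∑ i ∈ Finset.range N,
      (c i + d i) * (∏ l ∈ Finset.range j, (γ - (i:ℝ) - (l:ℝ))) * x ^ (γ - (i:ℝ) - (j:ℝ))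
      = (∑ i ∈ Finset.range N,
          c i * (∏ l ∈ Finset.range j, (γ - (i:ℝ) - (l:ℝ))) * x ^ (γ - (i:ℝ) - (j:ℝ)))
        + ∑ i ∈ Finset.range N,
          d i * (∏ l ∈ Finset.range j, (γ - (i:ℝ) - (l:ℝ))) * x ^ (γ - (i:ℝ) - (j:ℝ)) := by
    rw [← Finset.sum_add_distrib]
    exact Finset.sum_congr rfl fun i _ => by ring
  rw [iteratedDeriv_add_on isOpen_Ioi hca hcb j x hx, hS]
  ring

lemma hasExpA_const_mul {γ : ℝ} {c : ℕ → ℝ} {α : ℝ → ℝ} (hα : HasExpA γ c α) (r : ℝ) :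
    HasExpA γ (fun i => r * c i) (fun x => r * α x) := by
  obtain ⟨⟨a, ha, hsa⟩, hO⟩ := hα
  refine ⟨⟨a, ha, fun x hx => contDiffAt_const.mul (hsa x hx)⟩, fun j N => ?_⟩
  have heq : (fun x : ℝ => iteratedDeriv j (fun x => r * α x) x - ∑ i ∈ Finset.range N,
      (r * c i) * (∏ l ∈ Finset.range j, (γ - (i:ℝ) - (l:ℝ))) * x ^ (γ - (i:ℝ) - (j:ℝ)))
      = fun x : ℝ => r * (iteratedDeriv j α x - ∑ i ∈ Finset.range N,
        c i * (∏ l ∈ Finset.range j, (γ - (i:ℝ) - (l:ℝ))) * x ^ (γ - (i:ℝ) - (j:ℝ))) := by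
    funext x
    rw [iteratedDeriv_const_mul_glob, mul_sub, Finset.mul_sum]
    congr 1
    exact Finset.sum_congr rfl fun i _ => by ring
  rw [heq]
  exact (hO j N).const_mul_left r

lemma hasExpA_shift {γ : ℝ} {c : ℕ → ℝ} {α : ℝ → ℝ} (hα : HasExpA γ c α) (n : ℕ) :
    HasExpA (γ + n) (fun i => if i < n then 0 else c (i - n)) α := by
  obtain ⟨hsm, hO⟩ := hα
  refine ⟨hsm, fun j N => ?_⟩
  rcases le_or_gt n N with hnN | hnN
  · obtain ⟨M, rfl⟩ : ∃ M, N = n + M := ⟨N - n, by omega⟩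
    have hS : ∀ x : ℝ, ∑ i ∈ Finset.range (n + M),
        (if i < n then 0 else c (i - n)) * (∏ l ∈ Finset.range j, (γ + (n:ℝ) - (i:ℝ) - (l:ℝ)))
          * x ^ (γ + (n:ℝ) - (i:ℝ) - (j:ℝ))
        = ∑ i ∈ Finset.range M,
          c i * (∏ l ∈ Finset.range j, (γ - (i:ℝ) - (l:ℝ))) * x ^ (γ - (i:ℝ) - (j:ℝ)) := by
      intro x
      rw [Finset.sum_range_add]
      rw [Finset.sum_eq_zero (fun i hi => by rw [if_pos (Finset.mem_range.1 hi)]; ring), zero_add]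
      refine Finset.sum_congr rfl fun i _ => ?_
      rw [if_neg (by omega), show n + i - n = i by omega,
        show ((n + i : ℕ) : ℝ) = (n : ℝ) + (i:ℝ) by push_cast; ring]
      congr 1
      · congr 1
        exact Finset.prod_congr rfl fun l _ => by ring
      · congr 1
        ring
    simp only [hS]
    have he : (fun x : ℝ => x ^ (γ + (n:ℝ) - ((n + M : ℕ):ℝ) - (j:ℝ)))
        = fun x : ℝ => x ^ (γ - (M:ℝ) - (j:ℝ)) := by
      funext x; congr 1; push_cast; ring
    rw [he]
    exact hO j M
  · have hS : ∀ x : ℝ, ∑ i ∈ Finset.range N,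
        (if i < n then 0 else c (i - n)) * (∏ l ∈ Finset.range j, (γ + (n:ℝ) - (i:ℝ) - (l:ℝ)))
          * x ^ (γ + (n:ℝ) - (i:ℝ) - (j:ℝ)) = 0 := fun x =>
      Finset.sum_eq_zero fun i hi => by
        rw [if_pos (lt_of_lt_of_le (Finset.mem_range.1 hi) (le_of_lt hnN))]; ring
    simp only [hS, sub_zero]
    have h0 := hO j 0
    simp only [Finset.range_zero, Finset.sum_empty, Nat.cast_zero, sub_zero] at h0
    refine h0.trans (rpow_isBigO ?_)
    have hN : (N : ℝ) < (n:ℝ) := by exact_mod_cast hnN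
    linarith

lemma prod_succ_shift (j : ℕ) (t : ℝ) :
    ∏ l ∈ Finset.range j, (t + 1 - (l:ℝ))
      = ∏ l ∈ Finset.range j, (t - (l:ℝ)) + (j:ℝ) * ∏ l ∈ Finset.range (j - 1), (t - (l:ℝ)) := by
  cases j with
  | zero => simp
  | succ k =>
    rw [Finset.prod_range_succ' (fun l => t + 1 - (l:ℝ)) k]
    rw [show (∏ l ∈ Finset.range k, (t + 1 - ((l + 1 : ℕ):ℝ))) = ∏ l ∈ Finset.range k, (t - (l:ℝ))
      from Finset.prod_congr rfl fun l _ => by push_cast; ring]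
    rw [Finset.prod_range_succ, Nat.succ_sub_one]
    push_cast
    ring
lemma hasExpA_id_mul {γ : ℝ} {c : ℕ → ℝ} {α : ℝ → ℝ} (hα : HasExpA γ c α) :
    HasExpA (γ + 1) c (fun x => x * α x) := by
  obtain ⟨⟨a, ha, hsa⟩, hO⟩ := hα
  have hca : ContDiffOn ℝ (⊤ : ℕ∞) α (Set.Ioi a) := fun x hx => (hsa x hx).contDiffWithinAt
  refine ⟨⟨a, ha, fun x hx => contDiffAt_id.mul (hsa x hx)⟩, fun j N => ?_⟩
  cases j with
  | zero =>
    refine Filter.EventuallyEq.trans_isBigO (f₂ := fun x : ℝ =>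
        x * (iteratedDeriv 0 α x - ∑ i ∈ Finset.range N,
          c i * (∏ l ∈ Finset.range 0, (γ - (i:ℝ) - (l:ℝ))) * x ^ (γ - (i:ℝ) - ((0:ℕ):ℝ)))) ?_ ?_
    · filter_upwards [eventually_gt_atTop (0:ℝ)] with x hx0
      rw [iteratedDeriv_zero, iteratedDeriv_zero, mul_sub, Finset.mul_sum]
      congr 1
      refine Finset.sum_congr rfl fun i _ => ?_
      rw [show γ + 1 - (i:ℝ) - ((0:ℕ):ℝ) = (γ - (i:ℝ) - ((0:ℕ):ℝ)) + 1 from by push_cast; ring,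
        Real.rpow_add_one (ne_of_gt hx0)]
      ring
    · refine ((Asymptotics.isBigO_refl (fun x:ℝ => x) atTop).mul (hO 0 N)).trans_eventuallyEq ?_
      filter_upwards [eventually_gt_atTop (0:ℝ)] with x hx0
      rw [mul_comm, ← Real.rpow_add_one (ne_of_gt hx0)]
      congr 1; push_cast; ring
  | succ jj =>
    have key : ∀ x : ℝ, 0 < x → ∑ i ∈ Finset.range N,
        c i * (∏ l ∈ Finset.range (jj+1), (γ + 1 - (i:ℝ) - (l:ℝ))) * x ^ (γ + 1 - (i:ℝ) - ((jj+1:ℕ):ℝ))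
        = x * ∑ i ∈ Finset.range N,
            c i * (∏ l ∈ Finset.range (jj+1), (γ - (i:ℝ) - (l:ℝ))) * x ^ (γ - (i:ℝ) - ((jj+1:ℕ):ℝ))
          + ((jj+1:ℕ):ℝ) * ∑ i ∈ Finset.range N,
            c i * (∏ l ∈ Finset.range jj, (γ - (i:ℝ) - (l:ℝ))) * x ^ (γ - (i:ℝ) - ((jj:ℕ):ℝ)) := by
      intro x hx0
      rw [Finset.mul_sum, Finset.mul_sum, ← Finset.sum_add_distrib]
      refine Finset.sum_congr rfl fun i _ => ?_
      have e4 : ∏ l ∈ Finset.range (jj+1), (γ + 1 - (i:ℝ) - (l:ℝ))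
          = ∏ l ∈ Finset.range (jj+1), (γ - (i:ℝ) - (l:ℝ))
            + ((jj+1:ℕ):ℝ) * ∏ l ∈ Finset.range jj, (γ - (i:ℝ) - (l:ℝ)) := by
        have hps := prod_succ_shift (jj+1) (γ - (i:ℝ))
        simp only [Nat.add_sub_cancel] at hps
        calc ∏ l ∈ Finset.range (jj+1), (γ + 1 - (i:ℝ) - (l:ℝ))
            = ∏ l ∈ Finset.range (jj+1), (γ - (i:ℝ) + 1 - (l:ℝ)) :=
          Finset.prod_congr rfl fun l _ => by ring
        _ = _ := by rw [hps]
      have e2 : x * x ^ (γ - (i:ℝ) - ((jj+1:ℕ):ℝ)) = x ^ (γ - (i:ℝ) - ((jj:ℕ):ℝ)) := by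
        rw [mul_comm, ← Real.rpow_add_one (ne_of_gt hx0)]
        congr 1; push_cast; ring
      have e1 : x ^ (γ + 1 - (i:ℝ) - ((jj+1:ℕ):ℝ)) = x ^ (γ - (i:ℝ) - ((jj:ℕ):ℝ)) := by
        congr 1; push_cast; ring
      rw [e1, e4,
        show x * (c i * (∏ l ∈ Finset.range (jj+1), (γ - (i:ℝ) - (l:ℝ))) * x ^ (γ - (i:ℝ) - ((jj+1:ℕ):ℝ)))
          = c i * (∏ l ∈ Finset.range (jj+1), (γ - (i:ℝ) - (l:ℝ))) * (x * x ^ (γ - (i:ℝ) - ((jj+1:ℕ):ℝ)))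
        from by ring, e2]
      ring
    refine Filter.EventuallyEq.trans_isBigO (f₂ := fun x : ℝ =>
        x * (iteratedDeriv (jj+1) α x - ∑ i ∈ Finset.range N,
          c i * (∏ l ∈ Finset.range (jj+1), (γ - (i:ℝ) - (l:ℝ))) * x ^ (γ - (i:ℝ) - ((jj+1:ℕ):ℝ)))
        + ((jj+1:ℕ):ℝ) * (iteratedDeriv jj α x - ∑ i ∈ Finset.range N,
          c i * (∏ l ∈ Finset.range jj, (γ - (i:ℝ) - (l:ℝ))) * x ^ (γ - (i:ℝ) - ((jj:ℕ):ℝ)))) ?_ ?_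
    · filter_upwards [eventually_gt_atTop a, eventually_gt_atTop (0:ℝ)] with x hxa hx0
      have hmul := iteratedDeriv_id_mul_on isOpen_Ioi hca (jj+1) x hxa
      rw [Nat.add_sub_cancel] at hmul
      rw [hmul, key x hx0]
      ring
    · have hA : (fun x:ℝ => x * (iteratedDeriv (jj+1) α x - ∑ i ∈ Finset.range N,
          c i * (∏ l ∈ Finset.range (jj+1), (γ - (i:ℝ) - (l:ℝ))) * x ^ (γ - (i:ℝ) - ((jj+1:ℕ):ℝ))))
          =O[atTop] fun x : ℝ => x ^ (γ + 1 - (N:ℝ) - ((jj+1:ℕ):ℝ)) := by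
        refine ((Asymptotics.isBigO_refl (fun x:ℝ => x) atTop).mul (hO (jj+1) N)).trans_eventuallyEq ?_
        filter_upwards [eventually_gt_atTop (0:ℝ)] with x hx0
        rw [mul_comm, ← Real.rpow_add_one (ne_of_gt hx0)]
        congr 1; push_cast; ring
      have hB : (fun x:ℝ => ((jj+1:ℕ):ℝ) * (iteratedDeriv jj α x - ∑ i ∈ Finset.range N,
          c i * (∏ l ∈ Finset.range jj, (γ - (i:ℝ) - (l:ℝ))) * x ^ (γ - (i:ℝ) - ((jj:ℕ):ℝ))))
          =O[atTop] fun x : ℝ => x ^ (γ + 1 - (N:ℝ) - ((jj+1:ℕ):ℝ)) := by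
        have hB0 := (hO jj N).const_mul_left ((jj+1:ℕ):ℝ)
        have he : (fun x:ℝ => x ^ (γ - (N:ℝ) - ((jj:ℕ):ℝ)))
            = fun x:ℝ => x ^ (γ + 1 - (N:ℝ) - ((jj+1:ℕ):ℝ)) := by
          funext x; congr 1; push_cast; ring
        rwa [he] at hB0
      exact hA.add hB

lemma hasExpA_deriv {γ : ℝ} {c : ℕ → ℝ} {α : ℝ → ℝ} (hα : HasExpA γ c α) :
    HasExpA (γ - 1) (fun i => c i * (γ - (i:ℝ))) (deriv α) := by
  obtain ⟨⟨a, ha, hsa⟩, hO⟩ := hα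
  have hca : ContDiffOn ℝ (⊤ : ℕ∞) α (Set.Ioi a) := fun x hx => (hsa x hx).contDiffWithinAt
  have hder : ContDiffOn ℝ (⊤ : ℕ∞) (deriv α) (Set.Ioi a) := hca.deriv_of_isOpen isOpen_Ioi (by simp)
  refine ⟨⟨a, ha, fun x hx => (hder x hx).contDiffAt (isOpen_Ioi.mem_nhds hx)⟩, fun j N => ?_⟩
  have h1 : iteratedDeriv j (deriv α) = iteratedDeriv (j+1) α := (iteratedDeriv_succ').symm
  have hS : ∀ x : ℝ, ∑ i ∈ Finset.range N,
      (c i * (γ - (i:ℝ))) * (∏ l ∈ Finset.range j, (γ - 1 - (i:ℝ) - (l:ℝ))) * x ^ (γ - 1 - (i:ℝ) - (j:ℝ))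
      = ∑ i ∈ Finset.range N,
        c i * (∏ l ∈ Finset.range (j+1), (γ - (i:ℝ) - (l:ℝ))) * x ^ (γ - (i:ℝ) - ((j+1:ℕ):ℝ)) := by
    intro x
    refine Finset.sum_congr rfl fun i _ => ?_
    rw [Finset.prod_range_succ' (fun l => γ - (i:ℝ) - (l:ℝ)) j,
      show (∏ l ∈ Finset.range j, (γ - (i:ℝ) - ((l + 1 : ℕ):ℝ))) = ∏ l ∈ Finset.range j, (γ - 1 - (i:ℝ) - (l:ℝ))
        from Finset.prod_congr rfl fun l _ => by push_cast; ring,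
      show x ^ (γ - (i:ℝ) - ((j+1:ℕ):ℝ)) = x ^ (γ - 1 - (i:ℝ) - (j:ℝ)) from by congr 1; push_cast; ring]
    push_cast
    ring
  simp only [h1, hS]
  have he : (fun x:ℝ => x ^ (γ - 1 - (N:ℝ) - (j:ℝ))) = fun x:ℝ => x ^ (γ - (N:ℝ) - ((j+1:ℕ):ℝ)) := by
    funext x; congr 1; push_cast; ring
  rw [he]
  exact hO (j+1) N

lemma iteratedDeriv_const_succ (k : ℕ) (r : ℝ) :
    iteratedDeriv (k+1) (fun _ : ℝ => r) = fun _ => 0 := by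
  induction k generalizing r with
  | zero => rw [iteratedDeriv_one]; exact deriv_const' r
  | succ k ih =>
    rw [iteratedDeriv_succ', deriv_const']
    exact ih 0

lemma hasExpA_one : HasExpA 0 (fun i => if i = 0 then 1 else 0) (fun _ : ℝ => 1) := by
  refine ⟨⟨1, one_pos, fun x _ => contDiffAt_const⟩, fun j N => ?_⟩
  cases j with
  | zero =>
    cases N with
    | zero =>
      simp only [Finset.range_zero, Finset.sum_empty, iteratedDeriv_zero, sub_zero]
      have he : (fun x:ℝ => x ^ ((0:ℝ) - ((0:ℕ):ℝ) - ((0:ℕ):ℝ))) = fun _ : ℝ => (1:ℝ) := by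
        funext x; norm_num
      rw [he]
    | succ M =>
      have hfun : (fun x : ℝ => iteratedDeriv 0 (fun _ : ℝ => (1:ℝ)) x - ∑ i ∈ Finset.range (M+1),
          (if i = 0 then (1:ℝ) else 0) * (∏ l ∈ Finset.range 0, ((0:ℝ) - (i:ℝ) - (l:ℝ)))
            * x ^ ((0:ℝ) - (i:ℝ) - ((0:ℕ):ℝ))) = fun _ => (0:ℝ) := by
        funext x
        rw [Finset.sum_eq_single_of_mem 0 (Finset.mem_range.2 (Nat.succ_pos M))
          (fun i _ hi => by simp [hi])]
        norm_num [iteratedDeriv_zero]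
      rw [hfun]
      exact Asymptotics.isBigO_zero _ _
  | succ j =>
    have hfun : (fun x : ℝ => iteratedDeriv (j+1) (fun _ : ℝ => (1:ℝ)) x - ∑ i ∈ Finset.range N,
        (if i = 0 then (1:ℝ) else 0) * (∏ l ∈ Finset.range (j+1), ((0:ℝ) - (i:ℝ) - (l:ℝ)))
          * x ^ ((0:ℝ) - (i:ℝ) - ((j+1:ℕ):ℝ))) = fun _ => (0:ℝ) := by
      funext x
      rw [iteratedDeriv_const_succ j 1]
      rw [Finset.sum_eq_zero fun i _ => ?_]
      · norm_num
      · rcases eq_or_ne i 0 with rfl | hi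
        · rw [Finset.prod_eq_zero (Finset.mem_range.2 (Nat.succ_pos j)) (by norm_num)]
          ring
        · rw [if_neg hi]; ring
    rw [hfun]
    exact Asymptotics.isBigO_zero _ _

lemma hasExpA_id : HasExpA 1 (fun i => if i = 0 then 1 else 0) (fun x : ℝ => x) := by
  have h := hasExpA_id_mul hasExpA_one
  rw [zero_add] at h
  exact hasExpA_congr (fun x => mul_one x) h
def Emp (p : ℝ → ℝ) : Prop :=
  (∀ᶠ x in atTop, ContDiffAt ℝ (⊤ : ℕ∞) p x) ∧
  ∀ μ : ℝ, 0 < μ → ∀ j : ℕ, (iteratedDeriv j p) =O[atTop] fun x : ℝ => x ^ (-μ)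

lemma emp_congr {p q : ℝ → ℝ} (h : ∀ x, p x = q x) (hp : Emp p) : Emp q := by
  have he : p = q := funext h
  rwa [← he]

lemma emp_hasExpA {p : ℝ → ℝ} (hp : Emp p) (γ : ℝ) : HasExpA γ (fun _ => 0) p := by
  obtain ⟨hs, hO⟩ := hp
  refine ⟨ev_Ioi hs, fun j N => ?_⟩
  refine Filter.EventuallyEq.trans_isBigO (f₂ := fun x => iteratedDeriv j p x)
    (Filter.Eventually.of_forall (fun x => by simp)) ?_
  rcases lt_or_ge (γ - (N:ℝ) - (j:ℝ)) 0 with he | he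
  · have h2 := hO (-(γ - (N:ℝ) - (j:ℝ))) (by linarith) j
    simpa [neg_neg] using h2
  · exact (hO 1 one_pos j).trans (rpow_isBigO (by linarith))

lemma emp_add {p q : ℝ → ℝ} (hp : Emp p) (hq : Emp q) : Emp (fun x => p x + q x) := by
  obtain ⟨a, ha, hIoi⟩ := ev_Ioi (hp.1.and hq.1)
  have hcp : ContDiffOn ℝ (⊤ : ℕ∞) p (Set.Ioi a) := fun x hx => (hIoi x hx).1.contDiffWithinAt
  have hcq : ContDiffOn ℝ (⊤ : ℕ∞) q (Set.Ioi a) := fun x hx => (hIoi x hx).2.contDiffWithinAt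
  refine ⟨Ioi_ev (fun x hx => ((hIoi x hx).1).add (hIoi x hx).2), fun μ hμ j => ?_⟩
  refine Filter.EventuallyEq.trans_isBigO
    (f₂ := fun x => iteratedDeriv j p x + iteratedDeriv j q x) ?_
    ((hp.2 μ hμ j).add (hq.2 μ hμ j))
  filter_upwards [eventually_gt_atTop a] with x hx
  exact iteratedDeriv_add_on isOpen_Ioi hcp hcq j x hx

lemma emp_const_mul {p : ℝ → ℝ} (hp : Emp p) (r : ℝ) : Emp (fun x => r * p x) := by
  refine ⟨hp.1.mono (fun x hx => contDiffAt_const.mul hx), fun μ hμ j => ?_⟩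
  rw [iteratedDeriv_const_mul_glob]
  exact (hp.2 μ hμ j).const_mul_left r

lemma emp_id_mul {p : ℝ → ℝ} (hp : Emp p) : Emp (fun x => x * p x) := by
  obtain ⟨a, ha, hIoi⟩ := ev_Ioi hp.1
  have hcp : ContDiffOn ℝ (⊤ : ℕ∞) p (Set.Ioi a) := fun x hx => (hIoi x hx).contDiffWithinAt
  refine ⟨Ioi_ev (fun x hx => contDiffAt_id.mul (hIoi x hx)), fun μ hμ j => ?_⟩
  refine Filter.EventuallyEq.trans_isBigO
    (f₂ := fun x => x * iteratedDeriv j p x + (j:ℝ) * iteratedDeriv (j-1) p x) ?_ ?_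
  · filter_upwards [eventually_gt_atTop a] with x hx
    exact iteratedDeriv_id_mul_on isOpen_Ioi hcp j x hx
  · have hA : (fun x:ℝ => x * iteratedDeriv j p x) =O[atTop] fun x : ℝ => x ^ (-μ) := by
      refine ((Asymptotics.isBigO_refl (fun x:ℝ => x) atTop).mul
        (hp.2 (μ+1) (by linarith) j)).trans_eventuallyEq ?_
      filter_upwards [eventually_gt_atTop (0:ℝ)] with x hx0
      rw [mul_comm, ← Real.rpow_add_one (ne_of_gt hx0)]
      congr 1; ring
    exact hA.add ((hp.2 μ hμ (j-1)).const_mul_left _)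

lemma emp_deriv {p : ℝ → ℝ} (hp : Emp p) : Emp (deriv p) := by
  obtain ⟨a, ha, hIoi⟩ := ev_Ioi hp.1
  have hcp : ContDiffOn ℝ (⊤ : ℕ∞) p (Set.Ioi a) := fun x hx => (hIoi x hx).contDiffWithinAt
  have hder : ContDiffOn ℝ (⊤ : ℕ∞) (deriv p) (Set.Ioi a) := hcp.deriv_of_isOpen isOpen_Ioi (by simp)
  refine ⟨Ioi_ev (fun x hx => (hder x hx).contDiffAt (isOpen_Ioi.mem_nhds hx)), fun μ hμ j => ?_⟩
  rw [show iteratedDeriv j (deriv p) = iteratedDeriv (j+1) p from (iteratedDeriv_succ').symm]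
  exact hp.2 μ hμ (j+1)

lemma sum_good {γ : ℝ} {u v : ℕ → ℝ} {F G : ℝ → ℝ}
    (hF : HasExpA γ u F) (hG : HasExpA γ v G) (h : u 0 ≠ 0 ∨ v 0 ≠ 0) :
    ∃ r : ℝ, ∀ c : ℝ, 0 < c → r < c → MemAS γ (fun x => F x + c * G x) := by
  refine ⟨|u 0 / v 0|, fun c hc hrc => ?_⟩
  refine ⟨fun i => u i + c * v i, ?_, hasExpA_add hF (hasExpA_const_mul hG c)⟩
  rcases eq_or_ne (v 0) 0 with hv | hv
  · have hu : u 0 ≠ 0 := h.resolve_right (fun hh => hh hv)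
    simpa [hv] using hu
  · intro heq
    have heq' : u 0 + c * v 0 = 0 := heq
    have h2 : c = -(u 0 / v 0) := by field_simp; linarith
    have h3 : -(u 0 / v 0) ≤ |u 0 / v 0| := neg_le_abs _
    rw [h2] at hrc
    linarith

lemma hasExpA_to_int {i γ : ℤ} {w : ℕ → ℝ} {α : ℝ → ℝ} (hα : HasExpA (i:ℝ) w α) (h : i ≤ γ) :
    ∃ w' : ℕ → ℝ, HasExpA (γ:ℝ) w' α ∧ w' 0 = (if i = γ then w 0 else 0) := by
  obtain ⟨n, rfl⟩ := Int.le.dest h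
  have h1 := hasExpA_shift hα n
  rw [show (i:ℝ) + (n:ℕ) = ((i + (n:ℕ) : ℤ):ℝ) from by push_cast; ring] at h1
  refine ⟨_, h1, ?_⟩
  rcases Nat.eq_zero_or_pos n with hn | hn
  · subst hn; simp
  · rw [if_pos hn, if_neg (show ¬(i = i + (n:ℤ)) by omega)]
def Pre (k : ℕ) (F G : ℝ → ℝ) : Prop :=
  (Emp F ∧ Emp G) ∨
  ∃ γ : ℤ, γ ≤ (k:ℤ) ∧ ∃ u v : ℕ → ℝ,
    HasExpA (γ:ℝ) u F ∧ HasExpA (γ:ℝ) v G ∧ (u 0 ≠ 0 ∨ v 0 ≠ 0)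

lemma pre_congr {k : ℕ} {F G G' : ℝ → ℝ} (h : ∀ x, G x = G' x) (hp : Pre k F G) :
    Pre k F G' := by
  have he : G = G' := funext h
  rwa [← he]

lemma pre_good {k : ℕ} {F G : ℝ → ℝ} (h : Pre k F G) :
    ∃ r : ℝ, ∀ c : ℝ, 0 < c → r < c →
      (Emp (fun x => F x + c * G x) ∨
        ∃ i : ℤ, i ≤ (k:ℤ) ∧ MemAS (i:ℝ) (fun x => F x + c * G x)) := by
  rcases h with ⟨hF, hG⟩ | ⟨γ, hγ, u, v, hF, hG, hne⟩
  · exact ⟨0, fun c hc _ => Or.inl (emp_add hF (emp_const_mul hG c))⟩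
  · obtain ⟨r, hr⟩ := sum_good hF hG hne
    exact ⟨r, fun c hc hrc => Or.inr ⟨γ, hγ, hr c hc hrc⟩⟩

lemma pre_one {p1 : ℝ → ℝ} (h : Emp p1 ∨ ∃ i : ℤ, i ≤ (1:ℤ) ∧ MemAS (i:ℝ) p1) :
    Pre 1 p1 (fun x => x * deriv p1 x + (-1) * x) := by
  have hone : ((1:ℤ):ℝ) = (1:ℝ) := by norm_num
  have hid : HasExpA ((1:ℤ):ℝ) (fun i => if i = 0 then 1 else 0) (fun x : ℝ => x) := by
    rw [hone]; exact hasExpA_id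
  rcases h with hek | ⟨i1, hi1, w, hw0, hw⟩
  · refine Or.inr ⟨1, le_refl _, fun _ => 0,
      fun n => 0 + (-1) * (if n = 0 then 1 else 0), emp_hasExpA hek _, ?_, Or.inr (by norm_num)⟩
    exact hasExpA_add (emp_hasExpA (emp_id_mul (emp_deriv hek)) _) (hasExpA_const_mul hid (-1))
  · have d1 : HasExpA ((i1:ℝ)) (fun n => w n * ((i1:ℝ) - (n:ℝ))) (fun x => x * deriv p1 x) := by
      have h2 := hasExpA_id_mul (hasExpA_deriv hw)
      rwa [show (i1:ℝ) - 1 + 1 = (i1:ℝ) from by ring] at h2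
    obtain ⟨u, hu, hu0⟩ := hasExpA_to_int hw hi1
    obtain ⟨v1, hv1, hv10⟩ := hasExpA_to_int d1 hi1
    refine Or.inr ⟨1, le_refl _, u,
      fun n => v1 n + (-1) * (if n = 0 then 1 else 0), hu,
      hasExpA_add hv1 (hasExpA_const_mul hid (-1)), ?_⟩
    rcases eq_or_ne i1 1 with hi | hi
    · exact Or.inl (by rw [hu0, if_pos hi]; exact hw0)
    · refine Or.inr ?_
      show v1 0 + (-1) * (if (0:ℕ) = 0 then (1:ℝ) else 0) ≠ 0
      rw [hv10, if_neg hi, if_pos rfl]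
      norm_num

lemma pre_ge_two {k : ℕ} {pk pk1 : ℝ → ℝ}
    (hpk : Emp pk ∨ ∃ i : ℤ, i ≤ (k:ℤ) ∧ MemAS (i:ℝ) pk)
    (hpk1 : Emp pk1 ∨ ∃ i : ℤ, i ≤ (k:ℤ) - 1 ∧ MemAS (i:ℝ) pk1) :
    Pre k pk (fun x => x * deriv pk x + x * pk1 x) := by
  rcases hpk with hek | ⟨i, hik, w, hw0, hw⟩
  · rcases hpk1 with hek1 | ⟨i', hi'k, d, hd0, hd⟩
    · exact Or.inl ⟨hek, emp_add (emp_id_mul (emp_deriv hek)) (emp_id_mul hek1)⟩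
    · have hd1 : HasExpA (((i' + 1 : ℤ)):ℝ) d (fun x => x * pk1 x) := by
        have h2 := hasExpA_id_mul hd
        rwa [show (i':ℝ) + 1 = ((i' + 1 : ℤ):ℝ) from by push_cast; ring] at h2
      refine Or.inr ⟨i' + 1, by omega, fun _ => 0, fun n => 0 + d n,
        emp_hasExpA hek _, ?_, Or.inr (by simpa using hd0)⟩
      exact hasExpA_add (emp_hasExpA (emp_id_mul (emp_deriv hek)) _) hd1
  · have d1 : HasExpA ((i:ℝ)) (fun n => w n * ((i:ℝ) - (n:ℝ))) (fun x => x * deriv pk x) := by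
      have h2 := hasExpA_id_mul (hasExpA_deriv hw)
      rwa [show (i:ℝ) - 1 + 1 = (i:ℝ) from by ring] at h2
    rcases hpk1 with hek1 | ⟨i', hi'k, d, hd0, hd⟩
    · refine Or.inr ⟨i, hik, w, fun n => (w n * ((i:ℝ) - (n:ℝ))) + 0, hw, ?_, Or.inl hw0⟩
      exact hasExpA_add d1 (emp_hasExpA (emp_id_mul hek1) _)
    · have hd1 : HasExpA (((i' + 1 : ℤ)):ℝ) d (fun x => x * pk1 x) := by
        have h2 := hasExpA_id_mul hd
        rwa [show (i':ℝ) + 1 = ((i' + 1 : ℤ):ℝ) from by push_cast; ring] at h2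
      have hiγ : i ≤ max i (i'+1) := le_max_left _ _
      have hi'γ : i' + 1 ≤ max i (i'+1) := le_max_right _ _
      obtain ⟨u, hu, hu0⟩ := hasExpA_to_int hw hiγ
      obtain ⟨v1, hv1, hv10⟩ := hasExpA_to_int d1 hiγ
      obtain ⟨v2, hv2, hv20⟩ := hasExpA_to_int hd1 hi'γ
      refine Or.inr ⟨max i (i'+1), by omega, u, fun n => v1 n + v2 n, hu,
        hasExpA_add hv1 hv2, ?_⟩
      rcases eq_or_ne i (max i (i'+1)) with hiγ' | hiγ'
      · exact Or.inl (by rw [hu0, if_pos hiγ']; exact hw0)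
      · have hγ2 : i' + 1 = max i (i'+1) := by
          rcases max_choice i (i'+1) with h | h
          · omega
          · omega
        refine Or.inr ?_
        show v1 0 + v2 0 ≠ 0
        rw [hv10, hv20, if_neg hiγ', if_pos hγ2]
        simpa using hd0
lemma memB_succ (m : ℕ) (hm : 1 ≤ m) (f : ℝ → ℝ) (hf : MemB m f) : MemB (m+1) f := by
  obtain ⟨hsm, p, heqv, hmid, i_m, himle, hpm⟩ := hf
  have Hk : ∀ k, 1 ≤ k → k ≤ m → (Emp (p k) ∨ ∃ i : ℤ, i ≤ (k:ℤ) ∧ MemAS (i:ℝ) (p k)) := by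
    intro k hk1 hkm
    rcases eq_or_lt_of_le hkm with rfl | hlt
    · exact Or.inr ⟨i_m, himle, hpm⟩
    · exact hmid k (Finset.mem_Icc.2 ⟨hk1, by omega⟩)
  set G : ℕ → ℝ → ℝ := fun k x => x * deriv (p k) x +
    ((if 2 ≤ k then x * p (k-1) x else 0) - (if k = 1 then x else 0)) with hGdef
  have hPre : ∀ k, 1 ≤ k → k ≤ m → Pre k (p k) (G k) := by
    intro k hk1 hkm
    rcases eq_or_lt_of_le hk1 with rfl | hk2
    · refine pre_congr (G' := G 1) ?_ (pre_one (Hk 1 le_rfl hkm))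
      intro x
      norm_num [hGdef]
    · have h2 : 2 ≤ k := hk2
      have hstat1 : Emp (p (k-1)) ∨ ∃ i : ℤ, i ≤ (k:ℤ) - 1 ∧ MemAS (i:ℝ) (p (k-1)) := by
        rcases Hk (k-1) (by omega) (by omega) with h | ⟨i, hi, hM⟩
        · exact Or.inl h
        · exact Or.inr ⟨i, by omega, hM⟩
      refine pre_congr (G' := G k) ?_ (pre_ge_two (Hk k hk1 hkm) hstat1)
      intro x
      simp only [hGdef, if_pos h2, if_neg (show ¬ k = 1 by omega)]
      ring
  have key : ∀ k, ∃ r : ℝ, 1 ≤ k → k ≤ m → ∀ c : ℝ, 0 < c → r < c →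
      (Emp (fun x => p k x + c * G k x) ∨
        ∃ i : ℤ, i ≤ (k:ℤ) ∧ MemAS (i:ℝ) (fun x => p k x + c * G k x)) := by
    intro k
    by_cases hk : 1 ≤ k ∧ k ≤ m
    · obtain ⟨r, hr⟩ := pre_good (hPre k hk.1 hk.2)
      exact ⟨r, fun _ _ => hr⟩
    · exact ⟨0, fun h1 h2' => absurd ⟨h1, h2'⟩ hk⟩
  choose r hr using key
  set c₀ : ℝ := 1 + ∑ k ∈ Finset.Icc 1 m, |r k| with hc₀def
  have hsum_nonneg : (0:ℝ) ≤ ∑ k ∈ Finset.Icc 1 m, |r k| :=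
    Finset.sum_nonneg fun k _ => abs_nonneg _
  have hc₀pos : 0 < c₀ := by rw [hc₀def]; linarith
  have hc₀gt : ∀ k, 1 ≤ k → k ≤ m → r k < c₀ := by
    intro k hk1 hkm
    have h1 : |r k| ≤ ∑ j ∈ Finset.Icc 1 m, |r j| :=
      Finset.single_le_sum (fun j _ => abs_nonneg (r j)) (Finset.mem_Icc.2 ⟨hk1, hkm⟩)
    have h2 : r k ≤ |r k| := le_abs_self _
    rw [hc₀def]; linarith
  set q : ℕ → ℝ → ℝ := fun k x =>
    (if k ≤ m then p k x + c₀ * (x * deriv (p k) x) else 0) +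
    (if 2 ≤ k then c₀ * (x * p (k-1) x) else 0) - (if k = 1 then c₀ * x else 0) with hqdef
  have hq_eq : ∀ k, 1 ≤ k → k ≤ m → ∀ x, p k x + c₀ * G k x = q k x := by
    intro k hk1 hkm x
    rcases eq_or_lt_of_le hk1 with rfl | hk2
    · norm_num [hqdef, hGdef, hkm]
      ring
    · have h2 : 2 ≤ k := hk2
      simp only [hqdef, hGdef, if_pos hkm, if_pos h2, if_neg (show ¬ k = 1 by omega)]
      ring
  -- the region where everything holds
  have hsmp : ∀ᶠ x in atTop, ∀ k ∈ Finset.Icc 1 m, ContDiffAt ℝ (⊤ : ℕ∞) (p k) x := by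
    refine (Filter.eventually_all_finset (Finset.Icc 1 m)).2 ?_
    intro k hk
    rcases Hk k (Finset.mem_Icc.1 hk).1 (Finset.mem_Icc.1 hk).2 with h | ⟨i, _, w, _, ⟨⟨a, _, hIoi⟩, _⟩⟩
    · exact h.1
    · exact Ioi_ev hIoi
  obtain ⟨A, hA0, hAll⟩ := ev_Ioi ((hsm.and hsmp).and heqv)
  have hs : IsOpen (Set.Ioi A) := isOpen_Ioi
  have hfs : ContDiffOn ℝ (⊤ : ℕ∞) f (Set.Ioi A) := fun x hx => ((hAll x hx).1.1).contDiffWithinAt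
  have hps : ∀ k ∈ Finset.Icc 1 m, ContDiffOn ℝ (⊤ : ℕ∞) (p k) (Set.Ioi A) :=
    fun k hk x hx => ((hAll x hx).1.2 k hk).contDiffWithinAt
  have heqs : ∀ x ∈ Set.Ioi A, f x = ∑ k ∈ Finset.Icc 1 m, p k x * iteratedDeriv k f x :=
    fun x hx => (hAll x hx).2
  have hdiff_p : ∀ k ∈ Finset.Icc 1 m, ∀ x ∈ Set.Ioi A, DifferentiableAt ℝ (p k) x :=
    fun k hk x hx => (((hps k hk).contDiffAt (hs.mem_nhds hx)).differentiableAt (by simp))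
  have hE2 : ∀ x ∈ Set.Ioi A, iteratedDeriv 1 f x =
      ∑ k ∈ Finset.Icc 1 m,
        (deriv (p k) x * iteratedDeriv k f x + p k x * iteratedDeriv (k+1) f x) := by
    intro x hx
    have h1 : Set.EqOn f (fun y => ∑ k ∈ Finset.Icc 1 m, p k y * iteratedDeriv k f y)
      (Set.Ioi A) := heqs
    rw [iteratedDeriv_one, (Filter.eventuallyEq_of_mem (hs.mem_nhds hx) h1).deriv_eq,
      deriv_fun_sum (fun k hk => ((hdiff_p k hk x hx).fun_mul (diffAt_iteratedDeriv hs hfs k hx)))]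
    refine Finset.sum_congr rfl fun k hk => ?_
    rw [deriv_fun_mul (hdiff_p k hk x hx) (diffAt_iteratedDeriv hs hfs k hx), ← iteratedDeriv_succ]
  have hIcc1 : ∀ (F : ℕ → ℝ), ∑ k ∈ Finset.Icc 1 (m+1), F k = ∑ j ∈ Finset.range (m+1), F (j+1) := by
    intro F
    rw [← Finset.Ico_add_one_right_eq_Icc, Finset.sum_Ico_eq_sum_range]
    refine Finset.sum_congr (by rw [show m + 1 + 1 - 1 = m + 1 by omega]) fun j _ => by
      rw [Nat.add_comm]
  have hIccm : ∀ (F : ℕ → ℝ), ∑ k ∈ Finset.Icc 1 m, F k = ∑ j ∈ Finset.range m, F (j+1) := by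
    intro F
    rw [← Finset.Ico_add_one_right_eq_Icc, Finset.sum_Ico_eq_sum_range]
    refine Finset.sum_congr (by rw [show m + 1 - 1 = m by omega]) fun j _ => by
      rw [Nat.add_comm]
  have heq_new : ∀ x ∈ Set.Ioi A,
      f x = ∑ k ∈ Finset.Icc 1 (m+1), q k x * iteratedDeriv k f x := by
    intro x hx
    have hsplit : ∑ k ∈ Finset.Icc 1 (m+1), q k x * iteratedDeriv k f x
        = (∑ j ∈ Finset.range (m+1),
            (if j+1 ≤ m then p (j+1) x + c₀ * (x * deriv (p (j+1)) x) else 0) * iteratedDeriv (j+1) f x)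
          + (∑ j ∈ Finset.range (m+1),
            (if 2 ≤ j+1 then c₀ * (x * p j x) else 0) * iteratedDeriv (j+1) f x)
          - (∑ j ∈ Finset.range (m+1),
            (if j+1 = 1 then c₀ * x else 0) * iteratedDeriv (j+1) f x) := by
      rw [hIcc1 (fun k => q k x * iteratedDeriv k f x), ← Finset.sum_add_distrib,
        ← Finset.sum_sub_distrib]
      refine Finset.sum_congr rfl fun j _ => ?_
      simp only [hqdef, Nat.add_sub_cancel]
      ring
    have hS1 : ∑ j ∈ Finset.range (m+1),
        (if j+1 ≤ m then p (j+1) x + c₀ * (x * deriv (p (j+1)) x) else 0) * iteratedDeriv (j+1) f x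
        = ∑ j ∈ Finset.range m, (p (j+1) x + c₀ * (x * deriv (p (j+1)) x)) * iteratedDeriv (j+1) f x := by
      rw [Finset.sum_range_succ, if_neg (show ¬ m + 1 ≤ m by omega), zero_mul, add_zero]
      exact Finset.sum_congr rfl fun j hj => by
        rw [if_pos (Nat.succ_le_of_lt (Finset.mem_range.1 hj))]
    have hS2 : ∑ j ∈ Finset.range (m+1),
        (if 2 ≤ j+1 then c₀ * (x * p j x) else 0) * iteratedDeriv (j+1) f x
        = ∑ j ∈ Finset.range m, c₀ * (x * p (j+1) x) * iteratedDeriv (j+2) f x := by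
      rw [Finset.sum_range_succ', if_neg (show ¬ (2:ℕ) ≤ 0 + 1 by norm_num), zero_mul, add_zero]
      exact Finset.sum_congr rfl fun j hj => by rw [if_pos (by omega)]
    have hS3 : ∑ j ∈ Finset.range (m+1),
        (if j+1 = 1 then c₀ * x else 0) * iteratedDeriv (j+1) f x
        = c₀ * x * iteratedDeriv 1 f x := by
      rw [Finset.sum_range_succ',
        Finset.sum_eq_zero (fun j hj => by rw [if_neg (by omega), zero_mul]), zero_add, if_pos rfl]
    have hE1 : f x = ∑ j ∈ Finset.range m, p (j+1) x * iteratedDeriv (j+1) f x := by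
      rw [heqs x hx, hIccm (fun k => p k x * iteratedDeriv k f x)]
    have hE2' : iteratedDeriv 1 f x = ∑ j ∈ Finset.range m,
        (deriv (p (j+1)) x * iteratedDeriv (j+1) f x + p (j+1) x * iteratedDeriv (j+2) f x) := by
      rw [hE2 x hx,
        hIccm (fun k => deriv (p k) x * iteratedDeriv k f x + p k x * iteratedDeriv (k+1) f x)]
    have e1 : ∑ j ∈ Finset.range m,
        (p (j+1) x + c₀ * (x * deriv (p (j+1)) x)) * iteratedDeriv (j+1) f x
        = (∑ j ∈ Finset.range m, p (j+1) x * iteratedDeriv (j+1) f x)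
          + c₀ * x * ∑ j ∈ Finset.range m, deriv (p (j+1)) x * iteratedDeriv (j+1) f x := by
      rw [Finset.mul_sum, ← Finset.sum_add_distrib]
      exact Finset.sum_congr rfl fun j _ => by ring
    have e2 : ∑ j ∈ Finset.range m, c₀ * (x * p (j+1) x) * iteratedDeriv (j+2) f x
        = c₀ * x * ∑ j ∈ Finset.range m, p (j+1) x * iteratedDeriv (j+2) f x := by
      rw [Finset.mul_sum]
      exact Finset.sum_congr rfl fun j _ => by ring
    have e3 := Finset.sum_add_distrib (s := Finset.range m)
      (f := fun j => deriv (p (j+1)) x * iteratedDeriv (j+1) f x)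
      (g := fun j => p (j+1) x * iteratedDeriv (j+2) f x)
    rw [hsplit, hS1, hS2, hS3, e1, e2, hE1]
    rw [e3] at hE2'
    rw [hE2']
    ring
  refine ⟨hsm, q, Ioi_ev heq_new, ?_, ?_⟩
  · intro k hk
    have hk' := Finset.mem_Icc.1 hk
    have hk1 : 1 ≤ k := hk'.1
    have hkm : k ≤ m := by omega
    rcases hr k hk1 hkm c₀ hc₀pos (hc₀gt k hk1 hkm) with hemp | ⟨i, hik, hmas⟩
    · exact Or.inl (emp_congr (fun x => hq_eq k hk1 hkm x) hemp)
    · exact Or.inr ⟨i, hik, memAS_congr (fun x => hq_eq k hk1 hkm x) hmas⟩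
  · refine ⟨i_m + 1, by omega, ?_⟩
    obtain ⟨w, hw0, hw⟩ := hpm
    have h1 : HasExpA (((i_m + 1 : ℤ)):ℝ) (fun n => c₀ * w n) (fun x => c₀ * (x * p m x)) := by
      have h2 := hasExpA_const_mul (hasExpA_id_mul hw) c₀
      rwa [show (i_m:ℝ) + 1 = ((i_m + 1 : ℤ):ℝ) from by push_cast; ring] at h2
    refine memAS_congr (fun x => ?_) ⟨fun n => c₀ * w n,
      by simpa using mul_ne_zero (ne_of_gt hc₀pos) hw0, h1⟩
    simp only [hqdef]
    rw [if_neg (show ¬ m + 1 ≤ m by omega), if_pos (show 2 ≤ m + 1 by omega),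
      if_neg (show ¬ m + 1 = 1 by omega), Nat.add_sub_cancel]
    ring
end MemBmono

/-- If `f ∈ B^(m)`, then `f ∈ B^(m̂)` for every integer `m̂ > m`; in particular,
`B^(1) ⊂ B^(2) ⊂ B^(3) ⊂ ⋯`. -/
theorem memB_mono (m : ℕ) (hm : 1 ≤ m) (f : ℝ → ℝ) (hf : MemB m f) :
    ∀ m' : ℕ, m < m' → MemB m' f := by
  intro m'
  induction m' with
  | zero => intro h; omega
  | succ n ih =>
    intro h
    rcases Nat.lt_succ_iff_lt_or_eq.1 h with h' | rfl
    · exact MemBmono.memB_succ n (by omega) f (ih h')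
    · exact MemBmono.memB_succ m hm f hf
end
end

section
/- If f ∈ A^(γ) strictly with γ ≠ 0, then f belongs to B^(1); more precisely, f(x) = p_1(x) f'(x) for all large x with p_1 = f/f' ∈ A^(1) strictly. -/
open Filter Finset Real

noncomputable section

section SX10aux
open Asymptotics Topology

namespace SX10

def PP (β : ℝ) (j : ℕ) : ℝ := ∏ l ∈ Finset.range j, (β - l)

def SS (γ : ℝ) (c : ℕ → ℝ) (N j : ℕ) (x : ℝ) : ℝ :=
  ∑ i ∈ Finset.range N, c i * PP (γ - i) j * x ^ (γ - i - (j : ℝ))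

@[simp] lemma PP_zero (β : ℝ) : PP β 0 = 1 := by simp [PP]

lemma PP_succ (β : ℝ) (j : ℕ) : PP β (j+1) = PP β j * (β - j) := by
  simp [PP, Finset.prod_range_succ]

lemma PP_succ' (β : ℝ) (j : ℕ) : PP β (j+1) = β * PP (β - 1) j := by
  rw [PP, Finset.prod_range_succ', PP]
  have h : ∀ l ∈ Finset.range j, β - (↑(l+1) : ℝ) = (β - 1) - l := fun l _ => by push_cast; ring
  rw [Finset.prod_congr rfl h]
  push_cast; ring

lemma PP_nat_zero (j : ℕ) (hj : 1 ≤ j) : PP 0 j = 0 := by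
  rcases Nat.exists_eq_add_of_le hj with ⟨m, rfl⟩
  rw [add_comm, PP_succ']
  simp

/-- Chu–Vandermonde for falling factorials -/
lemma vdm (a b : ℝ) (j : ℕ) :
    ∑ k ∈ Finset.range (j+1), (j.choose k : ℝ) * PP a k * PP b (j-k) = PP (a+b) j := by
  induction j with
  | zero => simp
  | succ j ih =>
    rw [Finset.sum_range_succ' (fun k => (((j+1).choose k : ℕ) : ℝ) * PP a k * PP b (j+1-k)) (j+1)]
    have h1 : ∀ k ∈ Finset.range (j+1),
        (((j+1).choose (k+1) : ℕ) : ℝ) * PP a (k+1) * PP b (j+1-(k+1))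
        = (j.choose k : ℝ) * (PP a (k+1) * PP b (j-k))
          + (j.choose (k+1) : ℝ) * (PP a (k+1) * PP b (j+1-(k+1))) := by
      intro k hk
      have e : j + 1 - (k+1) = j - k := by omega
      rw [e, Nat.choose_succ_succ]
      push_cast; ring
    rw [Finset.sum_congr rfl h1, Finset.sum_add_distrib, add_assoc]
    have h2 : (∑ k ∈ Finset.range (j+1), (j.choose (k+1) : ℝ) * (PP a (k+1) * PP b (j+1-(k+1))))
        + (((j+1).choose 0 : ℕ) : ℝ) * PP a 0 * PP b (j+1-0)
        = ∑ k ∈ Finset.range (j+1), (j.choose k : ℝ) * (PP a k * PP b (j+1-k)) := by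
      have hp := Finset.sum_range_succ' (fun k => (j.choose k : ℝ) * (PP a k * PP b (j+1-k))) (j+1)
      have hq := Finset.sum_range_succ (fun k => (j.choose k : ℝ) * (PP a k * PP b (j+1-k))) (j+1)
      simp only [Nat.choose_succ_self, Nat.cast_zero, zero_mul] at hq
      rw [add_zero] at hq
      rw [hq] at hp
      simp only [Nat.choose_zero_right, Nat.cast_one, one_mul, PP_zero] at hp ⊢
      rw [hp]
    rw [h2, ← Finset.sum_add_distrib, PP_succ, ← ih, Finset.sum_mul]
    apply Finset.sum_congr rfl
    intro k hk
    have hk' : k ≤ j := by simpa [Nat.lt_succ_iff] using hk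
    have e1 : j + 1 - k = (j - k) + 1 := by omega
    have e2 : j + 1 - (k + 1) = j - k := by omega
    rw [e1, PP_succ a k, PP_succ b (j-k), Nat.cast_sub hk']
    ring

end SX10

namespace SX10

lemma contDiffOn_iteratedDeriv' {f : ℝ → ℝ} {s : Set ℝ} (hs : IsOpen s)
    (hf : ContDiffOn ℝ (⊤ : ℕ∞) f s) (n : ℕ) : ContDiffOn ℝ (⊤ : ℕ∞) (iteratedDeriv n f) s := by
  induction n generalizing f with
  | zero => simpa [iteratedDeriv_zero] using hf
  | succ n ih =>
    rw [iteratedDeriv_succ']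
    exact ih (hf.deriv_of_isOpen hs (by simp))

lemma diffAt_iteratedDeriv {f : ℝ → ℝ} {s : Set ℝ} (hs : IsOpen s)
    (hf : ContDiffOn ℝ (⊤ : ℕ∞) f s) (n : ℕ) {x : ℝ} (hx : x ∈ s) :
    DifferentiableAt ℝ (iteratedDeriv n f) x :=
  ((contDiffOn_iteratedDeriv' hs hf n).differentiableOn (by simp)).differentiableAt (hs.mem_nhds hx)

lemma pascal_sum (F G : ℕ → ℝ) (j : ℕ) :
    ∑ k ∈ Finset.range (j+2), ((j+1).choose k : ℝ) * F k * G (j+1-k)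
    = ∑ k ∈ Finset.range (j+1), (j.choose k : ℝ) * (F (k+1) * G (j-k) + F k * G ((j-k)+1)) := by
  rw [Finset.sum_range_succ' (fun k => (((j+1).choose k : ℕ) : ℝ) * F k * G (j+1-k)) (j+1)]
  have h1 : ∀ k ∈ Finset.range (j+1),
      (((j+1).choose (k+1) : ℕ) : ℝ) * F (k+1) * G (j+1-(k+1))
      = (j.choose k : ℝ) * (F (k+1) * G (j-k))
        + (j.choose (k+1) : ℝ) * (F (k+1) * G (j+1-(k+1))) := by
    intro k hk
    have e : j + 1 - (k+1) = j - k := by omega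
    rw [e, Nat.choose_succ_succ]; push_cast; ring
  rw [Finset.sum_congr rfl h1, Finset.sum_add_distrib, add_assoc]
  have h2 : (∑ k ∈ Finset.range (j+1), (j.choose (k+1) : ℝ) * (F (k+1) * G (j+1-(k+1))))
      + (((j+1).choose 0 : ℕ) : ℝ) * F 0 * G (j+1-0)
      = ∑ k ∈ Finset.range (j+1), (j.choose k : ℝ) * (F k * G (j+1-k)) := by
    have hp := Finset.sum_range_succ' (fun k => (j.choose k : ℝ) * (F k * G (j+1-k))) (j+1)
    have hq := Finset.sum_range_succ (fun k => (j.choose k : ℝ) * (F k * G (j+1-k))) (j+1)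
    simp only [Nat.choose_succ_self, Nat.cast_zero, zero_mul] at hq
    rw [add_zero] at hq
    rw [hq] at hp
    simp only [Nat.choose_zero_right, Nat.cast_one, one_mul] at hp ⊢
    rw [hp]
  rw [h2, ← Finset.sum_add_distrib]
  apply Finset.sum_congr rfl
  intro k hk
  have hk2 : k ≤ j := by simpa [Nat.lt_succ_iff] using hk
  have e1 : j + 1 - k = (j - k) + 1 := by omega
  rw [e1]; ring

/-- Leibniz rule for iterated derivatives on an open set. -/
lemma leibniz {f g : ℝ → ℝ} {s : Set ℝ} (hs : IsOpen s)
    (hf : ContDiffOn ℝ (⊤ : ℕ∞) f s) (hg : ContDiffOn ℝ (⊤ : ℕ∞) g s) (j : ℕ) :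
    ∀ x ∈ s, iteratedDeriv j (fun y => f y * g y) x
      = ∑ k ∈ Finset.range (j+1),
          (j.choose k : ℝ) * iteratedDeriv k f x * iteratedDeriv (j-k) g x := by
  induction j with
  | zero => intro x hx; simp
  | succ j ih =>
    intro x hx
    rw [iteratedDeriv_succ]
    have hev : iteratedDeriv j (fun y => f y * g y)
        =ᶠ[𝓝 x] fun y => ∑ k ∈ Finset.range (j+1),
          (j.choose k : ℝ) * iteratedDeriv k f y * iteratedDeriv (j-k) g y := by
      filter_upwards [hs.mem_nhds hx] with y hy using ih y hy
    rw [hev.deriv_eq]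
    rw [deriv_fun_sum (A := fun k y => (j.choose k : ℝ) * iteratedDeriv k f y * iteratedDeriv (j-k) g y) (fun k _ =>
      ((differentiableAt_const _).mul (diffAt_iteratedDeriv hs hf k hx)).mul
        (diffAt_iteratedDeriv hs hg (j-k) hx))]
    have hterm : ∀ k ∈ Finset.range (j+1),
        deriv (fun y => (j.choose k : ℝ) * iteratedDeriv k f y * iteratedDeriv (j-k) g y) x
        = (j.choose k : ℝ) * (iteratedDeriv (k+1) f x * iteratedDeriv (j-k) g x
            + iteratedDeriv k f x * iteratedDeriv ((j-k)+1) g x) := by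
      intro k _
      have hF := diffAt_iteratedDeriv hs hf k hx
      have hG := diffAt_iteratedDeriv hs hg (j-k) hx
      rw [show (fun y => (j.choose k : ℝ) * iteratedDeriv k f y * iteratedDeriv (j-k) g y)
            = fun y => (j.choose k : ℝ) * (iteratedDeriv k f y * iteratedDeriv (j-k) g y) by
          funext y; ring]
      rw [deriv_const_mul _ (hF.fun_mul hG), deriv_fun_mul hF hG,
        ← iteratedDeriv_succ, ← iteratedDeriv_succ]
    rw [Finset.sum_congr rfl hterm]
    exact (pascal_sum (fun k => iteratedDeriv k f x) (fun k => iteratedDeriv k g x) j).symm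

end SX10

namespace SX10

/-- power sum function -/
def TT (γ : ℝ) (c : ℕ → ℝ) (N : ℕ) (x : ℝ) : ℝ :=
  ∑ i ∈ Finset.range N, c i * x ^ (γ - (i : ℝ))

lemma contDiffOn_TT (γ : ℝ) (c : ℕ → ℝ) (N : ℕ) :
    ContDiffOn ℝ (⊤ : ℕ∞) (TT γ c N) (Set.Ioi (0:ℝ)) := by
  apply ContDiffOn.sum
  intro i _
  intro x hx
  exact ((Real.contDiffAt_rpow_const_of_ne (ne_of_gt hx)).const_smul (c i)).contDiffWithinAt

lemma iteratedDeriv_TT (γ : ℝ) (c : ℕ → ℝ) (N j : ℕ) :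
    ∀ x ∈ Set.Ioi (0:ℝ), iteratedDeriv j (TT γ c N) x = SS γ c N j x := by
  induction j with
  | zero =>
    intro x hx
    simp [TT, SS]
  | succ j ih =>
    intro x hx
    rw [iteratedDeriv_succ]
    have hev : iteratedDeriv j (TT γ c N) =ᶠ[𝓝 x] fun y => SS γ c N j y := by
      filter_upwards [isOpen_Ioi.mem_nhds hx] with y hy using ih y hy
    rw [hev.deriv_eq]
    simp only [SS]
    rw [deriv_fun_sum (fun i _ => by
      exact (Real.differentiableAt_rpow_const_of_ne _ (ne_of_gt hx)).const_mul _)]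
    apply Finset.sum_congr rfl
    intro i _
    rw [deriv_const_mul _ (Real.differentiableAt_rpow_const_of_ne _ (ne_of_gt hx)),
      Real.deriv_rpow_const x _]
    have e : γ - i - (j:ℝ) - 1 = γ - i - ((j:ℕ)+1 : ℕ) := by push_cast; ring
    rw [PP_succ]
    rw [← e]
    push_cast
    ring

/-- big-O comparison of powers -/
lemma rpow_O {A B : ℝ} (h : A ≤ B) :
    (fun x : ℝ => x ^ A) =O[atTop] fun x => x ^ B := by
  apply Asymptotics.IsBigO.of_bound 1
  filter_upwards [eventually_ge_atTop (1:ℝ)] with x hx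
  have hx0 : (0:ℝ) ≤ x := le_trans zero_le_one hx
  rw [one_mul, Real.norm_eq_abs, Real.norm_eq_abs, abs_of_nonneg (Real.rpow_nonneg hx0 _),
    abs_of_nonneg (Real.rpow_nonneg hx0 _)]
  exact Real.rpow_le_rpow_of_exponent_le hx h

lemma rpow_mul_rpow_EE (A B : ℝ) :
    (fun x : ℝ => x ^ A * x ^ B) =ᶠ[atTop] fun x => x ^ (A + B) := by
  filter_upwards [eventually_gt_atTop (0:ℝ)] with x hx
  rw [Real.rpow_add hx]

lemma mul_rpow_O {f g : ℝ → ℝ} {A B C : ℝ}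
    (hf : f =O[atTop] fun x => x ^ A) (hg : g =O[atTop] fun x => x ^ B) (h : A + B ≤ C) :
    (fun x => f x * g x) =O[atTop] fun x => x ^ C :=
  (hf.mul hg).trans ((rpow_mul_rpow_EE A B).trans_isBigO (rpow_O h))

lemma SS_O (γ : ℝ) (c : ℕ → ℝ) (N j : ℕ) :
    (fun x => SS γ c N j x) =O[atTop] fun x => x ^ (γ - (j:ℝ)) := by
  apply Asymptotics.IsBigO.fun_sum
  intro i _
  have : (fun x : ℝ => x ^ (γ - i - (j:ℝ))) =O[atTop] fun x => x ^ (γ - (j:ℝ)) :=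
    rpow_O (by have : (0:ℝ) ≤ i := Nat.cast_nonneg i; linarith)
  exact (this.const_mul_left _)

end SX10

namespace SX10

/-- convenient reformulation of `HasExpA` -/
def Ok (γ : ℝ) (c : ℕ → ℝ) (α : ℝ → ℝ) : Prop :=
  (∃ a : ℝ, 0 < a ∧ ContDiffOn ℝ (⊤ : ℕ∞) α (Set.Ioi a)) ∧
  ∀ j N : ℕ, (fun x => iteratedDeriv j α x - SS γ c N j x)
      =O[atTop] fun x : ℝ => x ^ (γ - (N:ℝ) - (j:ℝ))

lemma hasExpA_iff_Ok (γ : ℝ) (c : ℕ → ℝ) (α : ℝ → ℝ) : HasExpA γ c α ↔ Ok γ c α := by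
  unfold HasExpA Ok
  constructor
  · rintro ⟨⟨a, ha, hsm⟩, hO⟩
    exact ⟨⟨a, ha, fun x hx => (hsm x hx).contDiffWithinAt⟩, fun j N => hO j N⟩
  · rintro ⟨⟨a, ha, hsm⟩, hO⟩
    exact ⟨⟨a, ha, fun x hx => hsm.contDiffAt (isOpen_Ioi.mem_nhds hx)⟩, fun j N => hO j N⟩

lemma Ok.crude {γ : ℝ} {c : ℕ → ℝ} {α : ℝ → ℝ} (h : Ok γ c α) (k : ℕ) :
    (iteratedDeriv k α) =O[atTop] fun x : ℝ => x ^ (γ - (k:ℝ)) := by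
  have := h.2 k 0
  simpa [SS] using this

lemma Ok.smooth_iterated {γ : ℝ} {c : ℕ → ℝ} {α : ℝ → ℝ} (h : Ok γ c α) :
    ∃ a : ℝ, 0 < a ∧ ContDiffOn ℝ (⊤ : ℕ∞) α (Set.Ioi a) := h.1

/-- derivative of an expansion -/
lemma Ok_deriv {γ : ℝ} {c : ℕ → ℝ} {α : ℝ → ℝ} (h : Ok γ c α) :
    Ok (γ - 1) (fun i => c i * (γ - i)) (deriv α) := by
  obtain ⟨⟨a, ha, hsm⟩, hO⟩ := h
  constructor
  · exact ⟨a, ha, hsm.deriv_of_isOpen isOpen_Ioi (by simp)⟩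
  · intro j N
    have key : ∀ x : ℝ, iteratedDeriv j (deriv α) x - SS (γ-1) (fun i => c i * (γ - i)) N j x
        = iteratedDeriv (j+1) α x - SS γ c N (j+1) x := by
      intro x
      rw [← iteratedDeriv_succ']
      congr 1
      unfold SS
      apply Finset.sum_congr rfl
      intro i _
      have e1 : PP (γ - i) (j+1) = (γ - i) * PP (γ - 1 - i) j := by
        have := PP_succ' (γ - i) j
        rw [this]
        congr 1
        ring_nf
      have e2 : γ - (i:ℝ) - ((j+1 : ℕ):ℝ) = γ - 1 - i - j := by push_cast; ring
      rw [e1, e2]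
      ring
    have e3 : γ - 1 - (N:ℝ) - (j:ℝ) = γ - (N:ℝ) - ((j+1:ℕ):ℝ) := by push_cast; ring
    rw [e3]
    exact (hO (j+1) N).congr' (by filter_upwards with x using (key x).symm) EventuallyEq.rfl

end SX10


namespace SX10

def conv (c d : ℕ → ℝ) (n : ℕ) : ℝ := ∑ i ∈ Finset.range (n+1), c i * d (n - i)

lemma Ok_mul {γ δ : ℝ} {c d : ℕ → ℝ} {α β : ℝ → ℝ}
    (hα : Ok γ c α) (hβ : Ok δ d β) :
    Ok (γ + δ) (conv c d) (fun x => α x * β x) := by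
  obtain ⟨⟨a₁, ha₁, hs₁⟩, hO₁⟩ := hα
  obtain ⟨⟨a₂, ha₂, hs₂⟩, hO₂⟩ := hβ
  set a := max a₁ a₂ with ha
  have ha0 : 0 < a := lt_of_lt_of_le ha₁ (le_max_left _ _)
  have hs₁' : ContDiffOn ℝ (⊤ : ℕ∞) α (Set.Ioi a) := hs₁.mono (Set.Ioi_subset_Ioi (le_max_left _ _))
  have hs₂' : ContDiffOn ℝ (⊤ : ℕ∞) β (Set.Ioi a) := hs₂.mono (Set.Ioi_subset_Ioi (le_max_right _ _))
  constructor
  · exact ⟨a, ha0, hs₁'.mul hs₂'⟩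
  intro j N
  have main : ∀ x : ℝ, a < x → 0 < x →
      iteratedDeriv j (fun y => α y * β y) x - SS (γ+δ) (conv c d) N j x
      = (∑ k ∈ Finset.range (j+1), (j.choose k : ℝ) *
            ((iteratedDeriv k α x - SS γ c N k x) * (iteratedDeriv (j-k) β x - SS δ d N (j-k) x)))
        + (∑ k ∈ Finset.range (j+1), (j.choose k : ℝ) *
            ((iteratedDeriv k α x - SS γ c N k x) * SS δ d N (j-k) x))
        + (∑ k ∈ Finset.range (j+1), (j.choose k : ℝ) *
            (SS γ c N k x * (iteratedDeriv (j-k) β x - SS δ d N (j-k) x)))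
        + (∑ p ∈ (Finset.range N ×ˢ Finset.range N).filter (fun p => ¬ p.1 + p.2 < N),
            c p.1 * d p.2 * PP (γ + δ - p.1 - p.2) j * x ^ (γ + δ - (p.1:ℝ) - (p.2:ℝ) - (j:ℝ))) := by
    intro x hax hx0
    have step1 : ∀ k ∈ Finset.range (j+1), SS γ c N k x * SS δ d N (j-k) x
        = ∑ p ∈ Finset.range N ×ˢ Finset.range N,
            (c p.1 * d p.2) * (PP (γ - p.1) k * PP (δ - p.2) (j-k))
              * x ^ (γ + δ - (p.1:ℝ) - (p.2:ℝ) - (j:ℝ)) := by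
      intro k hk
      have hkj : k ≤ j := by simpa [Nat.lt_succ_iff] using hk
      rw [SS, SS, Finset.sum_mul_sum, Finset.sum_product]
      apply Finset.sum_congr rfl; intro i _
      apply Finset.sum_congr rfl; intro m _
      have hexp : x ^ (γ - (i:ℝ) - (k:ℝ)) * x ^ (δ - (m:ℝ) - ((j-k:ℕ):ℝ))
          = x ^ (γ + δ - (i:ℝ) - (m:ℝ) - (j:ℝ)) := by
        rw [← Real.rpow_add hx0]
        congr 1
        rw [Nat.cast_sub hkj]
        ring
      calc c i * PP (γ - i) k * x ^ (γ - (i:ℝ) - (k:ℝ))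
            * (d m * PP (δ - m) (j-k) * x ^ (δ - (m:ℝ) - ((j-k:ℕ):ℝ)))
          = (c i * d m) * (PP (γ - i) k * PP (δ - m) (j-k))
            * (x ^ (γ - (i:ℝ) - (k:ℝ)) * x ^ (δ - (m:ℝ) - ((j-k:ℕ):ℝ))) := by ring
        _ = _ := by rw [hexp]
    have step2 : ∑ k ∈ Finset.range (j+1), (j.choose k : ℝ) * (SS γ c N k x * SS δ d N (j-k) x)
        = ∑ p ∈ Finset.range N ×ˢ Finset.range N,
            c p.1 * d p.2 * PP (γ + δ - p.1 - p.2) j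
              * x ^ (γ + δ - (p.1:ℝ) - (p.2:ℝ) - (j:ℝ)) := by
      have h1 : ∀ k ∈ Finset.range (j+1), (j.choose k : ℝ) * (SS γ c N k x * SS δ d N (j-k) x)
          = ∑ p ∈ Finset.range N ×ˢ Finset.range N,
              (j.choose k : ℝ) * ((c p.1 * d p.2) * (PP (γ - p.1) k * PP (δ - p.2) (j-k))
                * x ^ (γ + δ - (p.1:ℝ) - (p.2:ℝ) - (j:ℝ))) := by
        intro k hk; rw [step1 k hk, Finset.mul_sum]
      rw [Finset.sum_congr rfl h1, Finset.sum_comm]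
      apply Finset.sum_congr rfl
      intro p _
      have h2 : ∑ k ∈ Finset.range (j+1),
            (j.choose k : ℝ) * ((c p.1 * d p.2) * (PP (γ - p.1) k * PP (δ - p.2) (j-k))
              * x ^ (γ + δ - (p.1:ℝ) - (p.2:ℝ) - (j:ℝ)))
          = (c p.1 * d p.2) * x ^ (γ + δ - (p.1:ℝ) - (p.2:ℝ) - (j:ℝ))
              * ∑ k ∈ Finset.range (j+1),
                ((j.choose k : ℝ) * PP (γ - p.1) k * PP (δ - p.2) (j-k)) := by
        rw [Finset.mul_sum]; apply Finset.sum_congr rfl; intro k _; ring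
      rw [h2, vdm]
      have h3 : γ - (p.1:ℝ) + (δ - (p.2:ℝ)) = γ + δ - p.1 - p.2 := by ring
      rw [h3]; ring
    have step3 : SS (γ+δ) (conv c d) N j x
        = ∑ p ∈ (Finset.range N ×ˢ Finset.range N).filter (fun p => p.1 + p.2 < N),
            c p.1 * d p.2 * PP (γ + δ - p.1 - p.2) j
              * x ^ (γ + δ - (p.1:ℝ) - (p.2:ℝ) - (j:ℝ)) := by
      have hset : (Finset.range N ×ˢ Finset.range N).filter (fun p => p.1 + p.2 < N)
          = (Finset.range N).biUnion (fun n => Finset.HasAntidiagonal.antidiagonal n) := by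
        ext p
        simp only [Finset.mem_filter, Finset.mem_product, Finset.mem_range,
          Finset.mem_biUnion, Finset.HasAntidiagonal.mem_antidiagonal]
        constructor
        · rintro ⟨⟨h1, h2⟩, h3⟩; exact ⟨p.1 + p.2, h3, rfl⟩
        · rintro ⟨n, hn, h⟩; omega
      have hdisj : ∀ n1 ∈ Finset.range N, ∀ n2 ∈ Finset.range N, n1 ≠ n2 →
          Disjoint (Finset.HasAntidiagonal.antidiagonal n1) (Finset.HasAntidiagonal.antidiagonal n2) := by
        intro n1 _ n2 _ hne
        rw [Finset.disjoint_left]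
        intro p hp1 hp2
        rw [Finset.HasAntidiagonal.mem_antidiagonal] at hp1 hp2
        exact hne (hp1 ▸ hp2)
      rw [hset, Finset.sum_biUnion hdisj, SS]
      apply Finset.sum_congr rfl
      intro n hn
      rw [Finset.Nat.sum_antidiagonal_eq_sum_range_succ_mk, conv,
        Finset.sum_mul, Finset.sum_mul]
      apply Finset.sum_congr rfl
      intro i hi
      have hi' : i ≤ n := by simpa [Nat.lt_succ_iff] using hi
      have hc : γ + δ - (i:ℝ) - ((n-i:ℕ):ℝ) = γ + δ - (n:ℝ) := by
        rw [Nat.cast_sub hi']; ring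
      rw [hc]
    rw [leibniz isOpen_Ioi hs₁' hs₂' j x hax]
    have expand : ∀ k ∈ Finset.range (j+1),
        (j.choose k : ℝ) * iteratedDeriv k α x * iteratedDeriv (j-k) β x
        = (j.choose k : ℝ) * ((iteratedDeriv k α x - SS γ c N k x)
              * (iteratedDeriv (j-k) β x - SS δ d N (j-k) x))
          + ((j.choose k : ℝ) * ((iteratedDeriv k α x - SS γ c N k x) * SS δ d N (j-k) x)
          + ((j.choose k : ℝ) * (SS γ c N k x * (iteratedDeriv (j-k) β x - SS δ d N (j-k) x))
          + (j.choose k : ℝ) * (SS γ c N k x * SS δ d N (j-k) x))) := by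
      intro k _; ring
    rw [Finset.sum_congr rfl expand, Finset.sum_add_distrib, Finset.sum_add_distrib,
      Finset.sum_add_distrib, step2, step3,
      ← Finset.sum_filter_add_sum_filter_not (Finset.range N ×ˢ Finset.range N)
        (fun p => p.1 + p.2 < N)]
    ring
  have final : (fun x => iteratedDeriv j (fun y => α y * β y) x - SS (γ+δ) (conv c d) N j x)
      =ᶠ[atTop] fun x =>
      (∑ k ∈ Finset.range (j+1), (j.choose k : ℝ) *
            ((iteratedDeriv k α x - SS γ c N k x) * (iteratedDeriv (j-k) β x - SS δ d N (j-k) x)))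
        + (∑ k ∈ Finset.range (j+1), (j.choose k : ℝ) *
            ((iteratedDeriv k α x - SS γ c N k x) * SS δ d N (j-k) x))
        + (∑ k ∈ Finset.range (j+1), (j.choose k : ℝ) *
            (SS γ c N k x * (iteratedDeriv (j-k) β x - SS δ d N (j-k) x)))
        + (∑ p ∈ (Finset.range N ×ˢ Finset.range N).filter (fun p => ¬ p.1 + p.2 < N),
            c p.1 * d p.2 * PP (γ + δ - p.1 - p.2) j
              * x ^ (γ + δ - (p.1:ℝ) - (p.2:ℝ) - (j:ℝ))) := by
    filter_upwards [eventually_gt_atTop a, eventually_gt_atTop 0] with x h1 h2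
    exact main x h1 h2
  apply final.trans_isBigO
  have hN0 : (0:ℝ) ≤ (N:ℝ) := Nat.cast_nonneg N
  have hA : (fun x => ∑ k ∈ Finset.range (j+1), (j.choose k : ℝ) *
        ((iteratedDeriv k α x - SS γ c N k x) * (iteratedDeriv (j-k) β x - SS δ d N (j-k) x)))
      =O[atTop] fun x : ℝ => x ^ (γ + δ - (N:ℝ) - (j:ℝ)) := by
    apply Asymptotics.IsBigO.fun_sum
    intro k hk
    have hkj : k ≤ j := by simpa [Nat.lt_succ_iff] using hk
    refine Asymptotics.IsBigO.const_mul_left ?_ _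
    apply mul_rpow_O (hO₁ k N) (hO₂ (j-k) N)
    rw [Nat.cast_sub hkj]; linarith
  have hB : (fun x => ∑ k ∈ Finset.range (j+1), (j.choose k : ℝ) *
        ((iteratedDeriv k α x - SS γ c N k x) * SS δ d N (j-k) x))
      =O[atTop] fun x : ℝ => x ^ (γ + δ - (N:ℝ) - (j:ℝ)) := by
    apply Asymptotics.IsBigO.fun_sum
    intro k hk
    have hkj : k ≤ j := by simpa [Nat.lt_succ_iff] using hk
    refine Asymptotics.IsBigO.const_mul_left ?_ _
    apply mul_rpow_O (hO₁ k N) (SS_O δ d N (j-k))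
    rw [Nat.cast_sub hkj]; linarith
  have hC : (fun x => ∑ k ∈ Finset.range (j+1), (j.choose k : ℝ) *
        (SS γ c N k x * (iteratedDeriv (j-k) β x - SS δ d N (j-k) x)))
      =O[atTop] fun x : ℝ => x ^ (γ + δ - (N:ℝ) - (j:ℝ)) := by
    apply Asymptotics.IsBigO.fun_sum
    intro k hk
    have hkj : k ≤ j := by simpa [Nat.lt_succ_iff] using hk
    refine Asymptotics.IsBigO.const_mul_left ?_ _
    apply mul_rpow_O (SS_O γ c N k) (hO₂ (j-k) N)
    rw [Nat.cast_sub hkj]; linarith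
  have hD : (fun x => ∑ p ∈ (Finset.range N ×ˢ Finset.range N).filter (fun p => ¬ p.1 + p.2 < N),
        c p.1 * d p.2 * PP (γ + δ - p.1 - p.2) j * x ^ (γ + δ - (p.1:ℝ) - (p.2:ℝ) - (j:ℝ)))
      =O[atTop] fun x : ℝ => x ^ (γ + δ - (N:ℝ) - (j:ℝ)) := by
    apply Asymptotics.IsBigO.fun_sum
    intro p hp
    rw [Finset.mem_filter] at hp
    have hge : N ≤ p.1 + p.2 := not_lt.mp hp.2
    have hge' : (N:ℝ) ≤ (p.1:ℝ) + (p.2:ℝ) := by exact_mod_cast hge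
    refine Asymptotics.IsBigO.const_mul_left ?_ _
    apply rpow_O
    linarith
  exact ((hA.add hB).add hC).add hD

end SX10


namespace SX10

lemma iteratedDeriv_sub_on {f g : ℝ → ℝ} {s : Set ℝ} (hs : IsOpen s)
    (hf : ContDiffOn ℝ (⊤ : ℕ∞) f s) (hg : ContDiffOn ℝ (⊤ : ℕ∞) g s) (j : ℕ) :
    ∀ x ∈ s, iteratedDeriv j (fun y => f y - g y) x = iteratedDeriv j f x - iteratedDeriv j g x := by
  induction j with
  | zero => intro x hx; simp
  | succ j ih =>
    intro x hx
    rw [iteratedDeriv_succ, iteratedDeriv_succ, iteratedDeriv_succ]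
    have hev : iteratedDeriv j (fun y => f y - g y)
        =ᶠ[𝓝 x] fun y => iteratedDeriv j f y - iteratedDeriv j g y := by
      filter_upwards [hs.mem_nhds hx] with y hy using ih y hy
    rw [hev.deriv_eq]
    exact deriv_sub (diffAt_iteratedDeriv hs hf j hx) (diffAt_iteratedDeriv hs hg j hx)

lemma iteratedDeriv_const_fun (j : ℕ) (v : ℝ) :
    iteratedDeriv j (fun _ : ℝ => v) = fun _ => if j = 0 then v else 0 := by
  induction j generalizing v with
  | zero => simp
  | succ j ih =>
    rw [iteratedDeriv_succ', deriv_const']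
    rw [ih 0]
    simp

lemma iteratedDeriv_const_sub_fun (k : ℕ) (hk : 1 ≤ k) (v : ℝ) (u : ℝ → ℝ) :
    iteratedDeriv k (fun y => v - u y) = fun x => -(iteratedDeriv k u x) := by
  obtain ⟨m, rfl⟩ : ∃ m, k = m + 1 := ⟨k - 1, by omega⟩
  rw [iteratedDeriv_succ', show (deriv fun y => v - u y) = fun y => -(deriv u y) from
    funext fun y => deriv_const_sub v]
  funext x
  rw [iteratedDeriv_fun_neg, ← iteratedDeriv_succ']

/-- eventual lower bound for a strictly expanded function -/
lemma Ok.lower {γ : ℝ} {c : ℕ → ℝ} {α : ℝ → ℝ} (h : Ok γ c α) (hc : c 0 ≠ 0) :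
    ∀ᶠ x in atTop, |c 0| / 2 * x ^ γ ≤ |α x| := by
  have h0 : (fun x => α x - c 0 * x ^ γ) =O[atTop] fun x : ℝ => x ^ (γ - 1) := by
    have := h.2 0 1
    have he : ∀ x : ℝ, SS γ c 1 0 x = c 0 * x ^ γ := by
      intro x; simp [SS]
    have he2 : γ - (1:ℕ) - (0:ℕ) = γ - 1 := by norm_num
    simp only [iteratedDeriv_zero, he, he2] at this
    exact this
  have hlittle : (fun x : ℝ => x ^ (γ - 1)) =o[atTop] fun x : ℝ => x ^ γ := by
    rw [Asymptotics.isLittleO_iff]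
    intro ε hε
    filter_upwards [eventually_ge_atTop (max (1/ε) 1)] with x hx
    have hx1 : (1:ℝ) ≤ x := le_trans (le_max_right _ _) hx
    have hx0 : (0:ℝ) < x := lt_of_lt_of_le one_pos hx1
    have hinv : 1/x ≤ ε := by
      rw [div_le_iff₀ hx0]
      have h1 : 1/ε ≤ x := le_trans (le_max_left _ _) hx
      calc (1:ℝ) = ε * (1/ε) := by field_simp
        _ ≤ ε * x := by exact mul_le_mul_of_nonneg_left h1 (le_of_lt hε)
    rw [Real.norm_eq_abs, Real.norm_eq_abs, abs_of_nonneg (Real.rpow_nonneg hx0.le _),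
      abs_of_nonneg (Real.rpow_nonneg hx0.le _), Real.rpow_sub hx0, Real.rpow_one]
    calc x ^ γ / x = x ^ γ * (1/x) := by ring
      _ ≤ x ^ γ * ε := mul_le_mul_of_nonneg_left hinv (Real.rpow_nonneg hx0.le _)
      _ = ε * x ^ γ := by ring
  have hsmall := (h0.trans_isLittleO hlittle).def (by positivity : (0:ℝ) < |c 0| / 2)
  filter_upwards [hsmall, eventually_gt_atTop (0:ℝ)] with x hx hx0
  rw [Real.norm_eq_abs, Real.norm_eq_abs, abs_of_nonneg (Real.rpow_nonneg hx0.le _)] at hx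
  have t1 : |c 0 * x ^ γ| = |c 0| * x ^ γ := by
    rw [abs_mul, abs_of_nonneg (Real.rpow_nonneg hx0.le _)]
  have t2 : |c 0 * x ^ γ| - |α x - c 0 * x ^ γ| ≤ |α x| := by
    have := abs_sub_abs_le_abs_sub (c 0 * x ^ γ) (α x)
    have h3 : |c 0 * x ^ γ - α x| = |α x - c 0 * x ^ γ| := abs_sub_comm _ _
    linarith
  have : |c 0| * x ^ γ - |c 0| / 2 * x ^ γ ≤ |α x| := by
    rw [← t1]
    linarith
  linarith

end SX10


namespace SX10

/-- exact expansion of a power-sum function -/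
lemma Ok_TT (γ : ℝ) (d : ℕ → ℝ) (N : ℕ) :
    Ok γ (fun i => if i < N then d i else 0) (TT γ d N) := by
  constructor
  · exact ⟨1, one_pos, (contDiffOn_TT γ d N).mono (Set.Ioi_subset_Ioi zero_le_one)⟩
  intro j M
  have hmin : min M N ≤ N := min_le_right _ _
  have hSSe : ∀ x : ℝ, SS γ (fun i => if i < N then d i else 0) M j x = SS γ d (min M N) j x := by
    intro x
    rw [SS, SS]
    have h1 : ∀ i ∈ Finset.range M,
        (if i < N then d i else 0) * PP (γ - i) j * x ^ (γ - (i:ℝ) - (j:ℝ))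
        = if i < N then d i * PP (γ - i) j * x ^ (γ - (i:ℝ) - (j:ℝ)) else 0 := by
      intro i _
      split <;> simp
    have hset : (Finset.range M).filter (fun i => i < N) = Finset.range (min M N) := by
      ext i
      simp only [Finset.mem_filter, Finset.mem_range, lt_min_iff]
    rw [Finset.sum_congr rfl h1, Finset.sum_ite, Finset.sum_const_zero, add_zero, hset]
  have hidentity : ∀ x : ℝ, 0 < x →
      iteratedDeriv j (TT γ d N) x - SS γ (fun i => if i < N then d i else 0) M j x
      = ∑ i ∈ Finset.Ico (min M N) N, d i * PP (γ - i) j * x ^ (γ - (i:ℝ) - (j:ℝ)) := by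
    intro x hx
    rw [iteratedDeriv_TT γ d N j x hx, hSSe, Finset.sum_Ico_eq_sub _ hmin]
    rfl
  have hev : (fun x => iteratedDeriv j (TT γ d N) x
        - SS γ (fun i => if i < N then d i else 0) M j x)
      =ᶠ[atTop] fun x => ∑ i ∈ Finset.Ico (min M N) N,
        d i * PP (γ - i) j * x ^ (γ - (i:ℝ) - (j:ℝ)) := by
    filter_upwards [eventually_gt_atTop (0:ℝ)] with x hx using hidentity x hx
  apply hev.trans_isBigO
  apply Asymptotics.IsBigO.fun_sum
  intro i hi
  rw [Finset.mem_Ico] at hi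
  rcases le_or_gt M N with hMN | hMN
  · have hMi : M ≤ i := le_trans (le_of_eq (min_eq_left hMN).symm) hi.1
    have : (M:ℝ) ≤ (i:ℝ) := by exact_mod_cast hMi
    exact (rpow_O (by linarith)).const_mul_left _
  · exfalso
    have := hi.1
    rw [min_eq_right (le_of_lt hMN)] at this
    omega

/-- formal reciprocal coefficients -/
def icoef (c : ℕ → ℝ) : ℕ → ℝ
  | 0 => (c 0)⁻¹
  | n+1 => -(c 0)⁻¹ * ∑ i ∈ Finset.range (n+1), c (i+1) * icoef c (n - i)
  decreasing_by exact Nat.lt_succ_of_le (Nat.sub_le n i)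

lemma conv_icoef (c : ℕ → ℝ) (hc : c 0 ≠ 0) (n : ℕ) :
    ∑ i ∈ Finset.range (n+1), c i * icoef c (n - i) = if n = 0 then 1 else 0 := by
  cases n with
  | zero => simp [icoef, mul_inv_cancel₀ hc]
  | succ n =>
    rw [Finset.sum_range_succ' (fun i => c i * icoef c (n + 1 - i)) (n+1)]
    have h1 : ∀ i ∈ Finset.range (n+1), c (i+1) * icoef c (n + 1 - (i+1))
        = c (i+1) * icoef c (n - i) := by
      intro i _
      congr 2
      omega
    rw [Finset.sum_congr rfl h1]
    simp only [Nat.sub_zero]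
    rw [if_neg (Nat.succ_ne_zero n), icoef]
    field_simp
    ring

end SX10


namespace SX10

lemma Ok_inv {γ : ℝ} {c : ℕ → ℝ} {α : ℝ → ℝ} (h : Ok γ c α) (hc : c 0 ≠ 0) :
    Ok (-γ) (icoef c) (fun x => (α x)⁻¹) := by
  obtain ⟨x₀, hx₀⟩ := eventually_atTop.mp (h.lower hc)
  obtain ⟨a, ha, hsm⟩ := h.1
  set b := max a (max x₀ 1) with hb
  have hb0 : (0:ℝ) < b := lt_of_lt_of_le one_pos (le_trans (le_max_right x₀ 1) (le_max_right a _))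
  have hpos : ∀ x ∈ Set.Ioi b, 0 < |α x| := by
    intro x hx
    simp only [Set.mem_Ioi] at hx
    have h2 : x₀ ≤ x :=
      le_of_lt (lt_of_le_of_lt (le_trans (le_max_left x₀ 1) (le_max_right a _)) hx)
    have h3 : 0 < x := lt_trans hb0 hx
    have h4 : 0 < |c 0| / 2 * x ^ γ := by
      have : 0 < x ^ γ := Real.rpow_pos_of_pos h3 γ
      have : 0 < |c 0| := abs_pos.mpr hc
      positivity
    linarith [hx₀ x h2]
  have hne : ∀ x ∈ Set.Ioi b, α x ≠ 0 := fun x hx => by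
    have := hpos x hx
    intro h0
    rw [h0] at this
    simp at this
  have hsmb : ContDiffOn ℝ (⊤ : ℕ∞) α (Set.Ioi b) := hsm.mono (Set.Ioi_subset_Ioi (le_max_left _ _))
  have hgsm : ContDiffOn ℝ (⊤ : ℕ∞) (fun x => (α x)⁻¹) (Set.Ioi b) := hsmb.inv hne
  have hg0 : (fun x => (α x)⁻¹) =O[atTop] fun x : ℝ => x ^ (-γ) := by
    apply Asymptotics.IsBigO.of_bound (2 / |c 0|)
    filter_upwards [h.lower hc, eventually_gt_atTop (0:ℝ)] with x hlx hx0
    rw [Real.norm_eq_abs, Real.norm_eq_abs, abs_inv, Real.rpow_neg hx0.le, abs_inv,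
      abs_of_nonneg (Real.rpow_nonneg hx0.le γ)]
    have hpγ : 0 < x ^ γ := Real.rpow_pos_of_pos hx0 γ
    have hcabs : 0 < |c 0| := abs_pos.mpr hc
    have hc2 : 0 < |c 0| / 2 * x ^ γ := by positivity
    have h1 : |α x|⁻¹ ≤ (|c 0| / 2 * x ^ γ)⁻¹ := by
      apply inv_anti₀ hc2 hlx
    calc |α x|⁻¹ ≤ (|c 0| / 2 * x ^ γ)⁻¹ := h1
      _ = 2 / |c 0| * (x ^ γ)⁻¹ := by
          field_simp
  have crude : ∀ j : ℕ, (iteratedDeriv j (fun x => (α x)⁻¹)) =O[atTop]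
      fun x : ℝ => x ^ (-γ - (j:ℝ)) := by
    intro j
    induction j using Nat.strong_induction_on with
    | _ j IH =>
      cases j with
      | zero => simpa using hg0
      | succ m =>
        have hone : Set.EqOn (fun x => α x * (α x)⁻¹) (fun _ => (1:ℝ)) (Set.Ioi b) :=
          fun x hx => mul_inv_cancel₀ (hne x hx)
        have hid : ∀ x ∈ Set.Ioi b,
            ∑ k ∈ Finset.range (m+2), ((m+1).choose k : ℝ) * iteratedDeriv k α x
              * iteratedDeriv (m+1-k) (fun y => (α y)⁻¹) x = 0 := by
          intro x hx
          rw [← leibniz isOpen_Ioi hsmb hgsm (m+1) x hx]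
          rw [Set.EqOn.iteratedDeriv_of_isOpen hone isOpen_Ioi (m+1) hx,
            iteratedDeriv_const_fun]
          simp
        have hsolve : ∀ x ∈ Set.Ioi b,
            iteratedDeriv (m+1) (fun y => (α y)⁻¹) x
            = -((α x)⁻¹ * ∑ k ∈ Finset.range (m+1), (((m+1).choose (k+1) : ℕ) : ℝ)
                * iteratedDeriv (k+1) α x * iteratedDeriv (m-k) (fun y => (α y)⁻¹) x) := by
          intro x hx
          have hid' := hid x hx
          rw [Finset.sum_range_succ' (fun k => (((m+1).choose k : ℕ) : ℝ) * iteratedDeriv k α x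
              * iteratedDeriv (m+1-k) (fun y => (α y)⁻¹) x) (m+1)] at hid'
          simp only [Nat.choose_zero_right, Nat.cast_one, one_mul, iteratedDeriv_zero,
            Nat.sub_zero] at hid'
          have hidx : ∀ k ∈ Finset.range (m+1), (((m+1).choose (k+1) : ℕ) : ℝ)
                * iteratedDeriv (k+1) α x
                * iteratedDeriv (m+1-(k+1)) (fun y => (α y)⁻¹) x
              = (((m+1).choose (k+1) : ℕ) : ℝ) * iteratedDeriv (k+1) α x
                * iteratedDeriv (m-k) (fun y => (α y)⁻¹) x := by
            intro k _
            have e : m + 1 - (k+1) = m - k := by omega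
            rw [e]
          rw [Finset.sum_congr rfl hidx] at hid'
          have hα := hne x hx
          have hmain : α x * iteratedDeriv (m+1) (fun y => (α y)⁻¹) x
              = -(∑ k ∈ Finset.range (m+1), (((m+1).choose (k+1) : ℕ) : ℝ)
                * iteratedDeriv (k+1) α x * iteratedDeriv (m-k) (fun y => (α y)⁻¹) x) := by
            linarith [hid']
          calc iteratedDeriv (m+1) (fun y => (α y)⁻¹) x
              = (α x)⁻¹ * (α x * iteratedDeriv (m+1) (fun y => (α y)⁻¹) x) := by
                rw [inv_mul_cancel_left₀ hα]
            _ = -((α x)⁻¹ * ∑ k ∈ Finset.range (m+1), (((m+1).choose (k+1) : ℕ) : ℝ)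
                * iteratedDeriv (k+1) α x * iteratedDeriv (m-k) (fun y => (α y)⁻¹) x) := by
                rw [hmain]; ring
        have hev : (iteratedDeriv (m+1) (fun y => (α y)⁻¹))
            =ᶠ[atTop] fun x => -((α x)⁻¹ * ∑ k ∈ Finset.range (m+1),
              (((m+1).choose (k+1) : ℕ) : ℝ) * iteratedDeriv (k+1) α x
                * iteratedDeriv (m-k) (fun y => (α y)⁻¹) x) := by
          filter_upwards [eventually_gt_atTop b] with x hx using hsolve x hx
        apply hev.trans_isBigO
        apply Asymptotics.IsBigO.neg_left
        have hS : (fun x => ∑ k ∈ Finset.range (m+1), (((m+1).choose (k+1) : ℕ) : ℝ)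
              * iteratedDeriv (k+1) α x * iteratedDeriv (m-k) (fun y => (α y)⁻¹) x)
            =O[atTop] fun x : ℝ => x ^ (-((m+1:ℕ):ℝ)) := by
          apply Asymptotics.IsBigO.fun_sum
          intro k hk
          have hkm : k ≤ m := by simpa [Nat.lt_succ_iff] using hk
          have hterm := mul_rpow_O (h.crude (k+1)) (IH (m-k) (by omega))
            (C := -((m+1:ℕ):ℝ)) (by
              rw [Nat.cast_sub hkm]
              push_cast
              try linarith)
          exact (hterm.const_mul_left _).congr_left (fun x => by ring)
        exact mul_rpow_O hg0 hS (by push_cast; linarith)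
  constructor
  · exact ⟨b, hb0, hgsm⟩
  intro j N
  cases N with
  | zero =>
    have := crude j
    simp only [SS, Finset.range_zero, Finset.sum_empty, sub_zero]
    have hexp : -γ - ((0:ℕ):ℝ) - (j:ℝ) = -γ - (j:ℝ) := by norm_num
    rw [hexp]
    exact this
  | succ n =>
    set T := TT (-γ) (icoef c) (n+1) with hTdef
    set e : ℕ → ℝ := conv c (fun i => if i < n+1 then icoef c i else 0) with hedef
    have hu : Ok 0 e (fun x => α x * T x) := by
      have := Ok_mul h (Ok_TT (-γ) (icoef c) (n+1))
      rwa [show γ + -γ = 0 by ring] at this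
    have he' : ∀ q : ℕ, q < n+1 → e q = if q = 0 then 1 else 0 := by
      intro q hq
      rw [hedef, conv]
      have h1 : ∀ i ∈ Finset.range (q+1),
          c i * (if q - i < n+1 then icoef c (q-i) else 0) = c i * icoef c (q - i) := by
        intro i hi
        rw [if_pos (by omega)]
      rw [Finset.sum_congr rfl h1, conv_icoef c hc q]
    have hSSu : ∀ k : ℕ, ∀ x : ℝ, SS 0 e (n+1) k x = PP 0 k * x ^ (-(k:ℝ)) := by
      intro k x
      rw [SS]
      have h1 : ∀ q ∈ Finset.range (n+1), e q * PP (0 - q) k * x ^ (0 - (q:ℝ) - (k:ℝ))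
          = if q = 0 then PP 0 k * x ^ (-(k:ℝ)) else 0 := by
        intro q hq
        rw [he' q (Finset.mem_range.mp hq)]
        split
        · rename_i hq0
          subst hq0
          norm_num
        · simp
      rw [Finset.sum_congr rfl h1, Finset.sum_ite_eq' (Finset.range (n+1)) 0
        (fun _ => PP 0 k * x ^ (-(k:ℝ))), if_pos (Finset.mem_range.mpr (Nat.succ_pos n))]
    have hRem : ∀ k : ℕ, (iteratedDeriv k (fun y => 1 - α y * T y)) =O[atTop]
        fun x : ℝ => x ^ (-((n+1:ℕ):ℝ) - (k:ℝ)) := by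
      intro k
      have hk0 := hu.2 k (n+1)
      have hexp : (0:ℝ) - ((n+1:ℕ):ℝ) - (k:ℝ) = -((n+1:ℕ):ℝ) - (k:ℝ) := by ring
      rw [hexp] at hk0
      cases k with
      | zero =>
        have hpt : ∀ x : ℝ, iteratedDeriv 0 (fun y => 1 - α y * T y) x
            = -(iteratedDeriv 0 (fun y => α y * T y) x - SS 0 e (n+1) 0 x) := by
          intro x
          rw [iteratedDeriv_zero, iteratedDeriv_zero, hSSu 0 x]
          have : x ^ (-((0:ℕ):ℝ)) = 1 := by norm_num
          rw [this]
          simp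
        exact hk0.neg_left.congr' (Filter.Eventually.of_forall fun x => (hpt x).symm)
          Filter.EventuallyEq.rfl
      | succ m =>
        rw [iteratedDeriv_const_sub_fun (m+1) (by omega) 1 _]
        apply Asymptotics.IsBigO.neg_left
        have hzero : ∀ x : ℝ, SS 0 e (n+1) (m+1) x = 0 := by
          intro x
          rw [hSSu, PP_nat_zero (m+1) (by omega)]
          ring
        exact hk0.congr_left (fun x => by rw [hzero x, sub_zero])
    have hTsm : ContDiffOn ℝ (⊤ : ℕ∞) T (Set.Ioi b) :=
      (contDiffOn_TT _ _ _).mono (Set.Ioi_subset_Ioi hb0.le)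
    have hOnesm : ContDiffOn ℝ (⊤ : ℕ∞) (fun y => 1 - α y * T y) (Set.Ioi b) :=
      contDiffOn_const.sub (hsmb.mul hTsm)
    have hident : ∀ x : ℝ, b < x →
        iteratedDeriv j (fun y => (α y)⁻¹) x - SS (-γ) (icoef c) (n+1) j x
        = ∑ k ∈ Finset.range (j+1), (j.choose k : ℝ)
            * iteratedDeriv k (fun y => 1 - α y * T y) x
            * iteratedDeriv (j-k) (fun y => (α y)⁻¹) x := by
      intro x hx
      have hx0 : (0:ℝ) < x := lt_trans hb0 hx
      rw [← iteratedDeriv_TT (-γ) (icoef c) (n+1) j x hx0]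
      rw [← iteratedDeriv_sub_on isOpen_Ioi hgsm hTsm j x hx]
      have heq : (fun y => (α y)⁻¹ - T y)
          =ᶠ[𝓝 x] fun y => (1 - α y * T y) * (α y)⁻¹ := by
        filter_upwards [isOpen_Ioi.mem_nhds hx] with y hy
        have hαy := hne y hy
        field_simp
      rw [Filter.EventuallyEq.iteratedDeriv_eq j heq]
      exact leibniz isOpen_Ioi hOnesm hgsm j x hx
    have hev2 : (fun x => iteratedDeriv j (fun y => (α y)⁻¹) x - SS (-γ) (icoef c) (n+1) j x)
        =ᶠ[atTop] fun x => ∑ k ∈ Finset.range (j+1), (j.choose k : ℝ)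
            * iteratedDeriv k (fun y => 1 - α y * T y) x
            * iteratedDeriv (j-k) (fun y => (α y)⁻¹) x := by
      filter_upwards [eventually_gt_atTop b] with x hx using hident x hx
    apply hev2.trans_isBigO
    apply Asymptotics.IsBigO.fun_sum
    intro k hk
    have hkj : k ≤ j := by simpa [Nat.lt_succ_iff] using hk
    have hterm := mul_rpow_O (hRem k) (crude (j-k))
      (C := -γ - ((n+1:ℕ):ℝ) - (j:ℝ)) (by
        rw [Nat.cast_sub hkj]
        push_cast
        try linarith)
    exact (hterm.const_mul_left _).congr_left (fun x => by ring)

end SX10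


/-- If `f ∈ A^(γ)` strictly with `γ ≠ 0`, then `f ∈ B^(1)`; more precisely,
`f(x) = p_1(x) f'(x)` for all large `x` with `p_1 = f/f' ∈ A^(1)` strictly. -/
theorem memAS_memB_one (γ : ℝ) (hγ : γ ≠ 0) (f : ℝ → ℝ) (hf : MemAS γ f) :
    (∀ᶠ x in atTop, f x = (f x / deriv f x) * deriv f x) ∧
    MemAS 1 (fun x => f x / deriv f x) ∧
    MemB 1 f := by
  obtain ⟨c, hc0, hA⟩ := hf
  rw [SX10.hasExpA_iff_Ok] at hA
  set c' : ℕ → ℝ := fun i => c i * (γ - i) with hc'def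
  have hc'0 : c' 0 ≠ 0 := by
    show c 0 * (γ - ((0:ℕ):ℝ)) ≠ 0
    simp only [Nat.cast_zero, sub_zero]
    exact mul_ne_zero hc0 hγ
  have hd : SX10.Ok (γ - 1) c' (deriv f) := SX10.Ok_deriv hA
  have hlow := SX10.Ok.lower hd hc'0
  have hne : ∀ᶠ x in atTop, deriv f x ≠ 0 := by
    filter_upwards [hlow, eventually_gt_atTop (0:ℝ)] with x h1 h2
    have h3 : (0:ℝ) < x ^ (γ - 1) := Real.rpow_pos_of_pos h2 _
    have h5 : 0 < |c' 0| := abs_pos.mpr hc'0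
    intro h0
    rw [h0] at h1
    simp only [abs_zero] at h1
    nlinarith
  have hinv : SX10.Ok (-(γ-1)) (SX10.icoef c') (fun x => (deriv f x)⁻¹) :=
    SX10.Ok_inv hd hc'0
  have hprod := SX10.Ok_mul hA hinv
  rw [show γ + -(γ-1) = 1 by ring] at hprod
  have hfuneq : (fun x => f x * (deriv f x)⁻¹) = fun x => f x / deriv f x := by
    funext x
    rw [div_eq_mul_inv]
  rw [hfuneq] at hprod
  have he0 : SX10.conv c (SX10.icoef c') 0 ≠ 0 := by
    have : SX10.conv c (SX10.icoef c') 0 = c 0 * (c' 0)⁻¹ := by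
      rw [SX10.conv]
      simp [SX10.icoef]
    rw [this]
    exact mul_ne_zero hc0 (inv_ne_zero hc'0)
  have hmemAS : MemAS 1 (fun x => f x / deriv f x) :=
    ⟨SX10.conv c (SX10.icoef c'), he0, (SX10.hasExpA_iff_Ok _ _ _).mpr hprod⟩
  refine ⟨?_, hmemAS, ?_, ?_⟩
  · filter_upwards [hne] with x hx
    rw [div_mul_cancel₀ _ hx]
  · obtain ⟨a, ha, hsm⟩ := hA.1
    filter_upwards [eventually_gt_atTop a] with x hx
    exact hsm.contDiffAt (isOpen_Ioi.mem_nhds hx)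
  · refine ⟨fun _ => fun x => f x / deriv f x, ?_, ?_, ?_⟩
    · filter_upwards [hne] with x hx
      rw [Finset.Icc_self, Finset.sum_singleton, iteratedDeriv_one, div_mul_cancel₀ _ hx]
    · intro k hk
      rw [Finset.mem_Icc] at hk
      omega
    · refine ⟨1, by norm_num, ?_⟩
      have : ((1:ℤ):ℝ) = 1 := by norm_num
      rw [this]
      exact hmemAS
end SX10aux
end
end

section
/- Let g ∈ X^(s) strictly for a positive integer s, with g(x) → +∞ as x → ∞. Then: (i) for each i = 0, 1, …, s, the derivative g^{(i)}(x) is positive for all large x and g^{(i)} ∈ A^(s−i) strictly; (ii) for each i ≥ s+1, the derivative g^{(i)} either vanishes identically for all large x or belongs to A^(τ_i) strictly for some integer τ_i < s − i. In particular, in all cases g^{(i)} either vanishes identically for all large x or lies in A^(τ_i) strictly with τ_i ≤ s − i. -/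
open Filter Finset Real

noncomputable section

lemma contDiffAt_deriv_top {f : ℝ → ℝ} {x : ℝ} (h : ContDiffAt ℝ (⊤ : ℕ∞) f x) :
    ContDiffAt ℝ (⊤ : ℕ∞) (deriv f) x := by
  have h1 : ContDiffAt ℝ (⊤ : ℕ∞) (fderiv ℝ f) x := h.fderiv_right (by simp)
  have h2 : ContDiffAt ℝ (⊤ : ℕ∞) (fun y => fderiv ℝ f y 1) x :=
    ((ContinuousLinearMap.apply ℝ ℝ (1:ℝ)).contDiff.contDiffAt).comp x h1
  have : (fun y => fderiv ℝ f y 1) = deriv f := by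
    funext y; exact fderiv_apply_one_eq_deriv
  rwa [this] at h2

lemma contDiffAt_iteratedDeriv_top {f : ℝ → ℝ} {a : ℝ}
    (h : ∀ x ∈ Set.Ioi a, ContDiffAt ℝ (⊤ : ℕ∞) f x) (i : ℕ) :
    ∀ x ∈ Set.Ioi a, ContDiffAt ℝ (⊤ : ℕ∞) (iteratedDeriv i f) x := by
  induction i with
  | zero => simpa using h
  | succ n ih =>
    intro x hx
    rw [iteratedDeriv_succ]
    exact contDiffAt_deriv_top (ih x hx)

lemma iterDeriv_add (f : ℝ → ℝ) (i j : ℕ) :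
    iteratedDeriv j (iteratedDeriv i f) = iteratedDeriv (i + j) f := by
  simp only [iteratedDeriv_eq_iterate]
  rw [add_comm, Function.iterate_add_apply]

lemma prod_shift (γ : ℝ) (n i j : ℕ) :
    (∏ l ∈ Finset.range i, (γ - (n:ℝ) - (l:ℝ))) *
      ∏ l ∈ Finset.range j, (γ - (i:ℝ) - (n:ℝ) - (l:ℝ)) =
    ∏ l ∈ Finset.range (i + j), (γ - (n:ℝ) - (l:ℝ)) := by
  rw [Finset.prod_range_add]
  congr 1
  refine Finset.prod_congr rfl fun l _ => ?_
  push_cast; ring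

lemma eventually_pos_of_exp {γ b : ℝ} (hb : 0 < b) {f : ℝ → ℝ}
    (h : (fun x => f x - b * x ^ γ) =O[atTop] fun x : ℝ => x ^ (γ - 1)) :
    ∀ᶠ x in atTop, 0 < f x := by
  obtain ⟨C, hC⟩ := h.bound
  filter_upwards [hC, eventually_gt_atTop 0, eventually_gt_atTop (C / b)] with x h1 h2 h3
  have hxγ : (0:ℝ) < x ^ (γ - 1) := rpow_pos_of_pos h2 _
  have habs : |f x - b * x ^ γ| ≤ C * x ^ (γ - 1) := by
    simpa [Real.norm_eq_abs, abs_of_pos hxγ] using h1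
  have hsplit : x ^ γ = x * x ^ (γ - 1) := by
    rw [show x ^ γ = x ^ (1 + (γ - 1)) from by norm_num, Real.rpow_add h2, Real.rpow_one]
  have hx : C < b * x := by
    rw [div_lt_iff₀ hb] at h3; linarith [h3]
  have := abs_le.1 habs
  nlinarith [this.1, this.2]

lemma leading_pos {γ b : ℝ} (hb : b ≠ 0) {f : ℝ → ℝ}
    (h : (fun x => f x - b * x ^ γ) =O[atTop] fun x : ℝ => x ^ (γ - 1))
    (hf : Tendsto f atTop atTop) : 0 < b := by
  rcases hb.lt_or_gt with hneg | hpos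
  · exfalso
    obtain ⟨C, hC⟩ := h.bound
    have key : ∀ᶠ x : ℝ in atTop, False := by
      filter_upwards [hC, eventually_gt_atTop 0, eventually_gt_atTop (C / (-b)),
        hf.eventually (eventually_gt_atTop 0)] with x h1 h2 h3 h4
      have hxγ : (0:ℝ) < x ^ (γ - 1) := rpow_pos_of_pos h2 _
      have habs : |f x - b * x ^ γ| ≤ C * x ^ (γ - 1) := by
        simpa [Real.norm_eq_abs, abs_of_pos hxγ] using h1
      have hsplit : x ^ γ = x * x ^ (γ - 1) := by
        rw [show x ^ γ = x ^ (1 + (γ - 1)) from by norm_num, Real.rpow_add h2, Real.rpow_one]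
      have hx : C < (-b) * x := by
        rw [div_lt_iff₀ (by linarith)] at h3; linarith
      have := abs_le.1 habs
      nlinarith [this.1, this.2]
    exact key.exists.elim fun _ hx => hx
  · exact hpos

lemma rpow_isBigO_rpow {a b : ℝ} (hab : a ≤ b) :
    (fun x : ℝ => x ^ a) =O[atTop] fun x : ℝ => x ^ b := by
  apply Asymptotics.IsBigO.of_bound 1
  filter_upwards [eventually_ge_atTop 1] with x hx
  have hx0 : (0:ℝ) < x := lt_of_lt_of_le one_pos hx
  rw [Real.norm_eq_abs, Real.norm_eq_abs, abs_of_pos (rpow_pos_of_pos hx0 _),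
    abs_of_pos (rpow_pos_of_pos hx0 _), one_mul]
  exact Real.rpow_le_rpow_of_exponent_le hx hab

lemma not_isBigO_rpow_lt {γ γ' b : ℝ} (hlt : γ' < γ) (hb : b ≠ 0)
    {f : ℝ → ℝ}
    (h1 : (fun x => f x - b * x ^ γ) =O[atTop] fun x : ℝ => x ^ (γ - 1))
    (h2 : f =O[atTop] fun x : ℝ => x ^ γ') : False := by
  set m : ℝ := max γ' (γ - 1) with hm
  have hmγ : m < γ := max_lt hlt (by linarith)
  have hbig : (fun x : ℝ => b * x ^ γ) =O[atTop] fun x : ℝ => x ^ m := by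
    have e1 : (fun x : ℝ => b * x ^ γ) = fun x => f x - (f x - b * x ^ γ) := by
      funext x; ring
    rw [e1]
    exact (h2.trans (rpow_isBigO_rpow (le_max_left _ _))).sub
      (h1.trans (rpow_isBigO_rpow (le_max_right _ _)))
  obtain ⟨C, hC⟩ := hbig.bound
  have htend : Tendsto (fun x : ℝ => x ^ (γ - m)) atTop atTop :=
    tendsto_rpow_atTop (by linarith)
  have key : ∀ᶠ x : ℝ in atTop, False := by
    filter_upwards [hC, eventually_gt_atTop 0,
      htend.eventually (eventually_gt_atTop (C / |b|))] with x hx1 hx2 hx3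
    have hm0 : (0:ℝ) < x ^ m := rpow_pos_of_pos hx2 _
    have hγ0 : (0:ℝ) < x ^ γ := rpow_pos_of_pos hx2 _
    have habs : |b| * x ^ γ ≤ C * x ^ m := by
      simpa [Real.norm_eq_abs, abs_of_pos hm0, abs_mul, abs_of_pos hγ0] using hx1
    have hsplit : x ^ γ = x ^ (γ - m) * x ^ m := by
      rw [← Real.rpow_add hx2]; ring_nf
    have hb0 : 0 < |b| := abs_pos.2 hb
    rw [div_lt_iff₀ hb0] at hx3
    nlinarith
  exact key.exists.elim fun _ hx => hx

lemma HasExpA.iterDeriv {γ : ℝ} {c : ℕ → ℝ} {g : ℝ → ℝ} (h : HasExpA γ c g) (i : ℕ) :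
    HasExpA (γ - (i:ℝ)) (fun n => c n * ∏ l ∈ Finset.range i, (γ - (n:ℝ) - (l:ℝ)))
      (iteratedDeriv i g) := by
  obtain ⟨⟨a, ha, hsm⟩, hexp⟩ := h
  refine ⟨⟨a, ha, contDiffAt_iteratedDeriv_top hsm i⟩, ?_⟩
  intro j N
  have H := hexp (i + j) N
  have e1 : (fun x : ℝ => iteratedDeriv j (iteratedDeriv i g) x -
      ∑ n ∈ Finset.range N,
        (c n * ∏ l ∈ Finset.range i, (γ - (n:ℝ) - (l:ℝ))) *
          (∏ l ∈ Finset.range j, (γ - (i:ℝ) - (n:ℝ) - (l:ℝ))) * x ^ (γ - (i:ℝ) - (n:ℝ) - (j:ℝ)))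
      = fun x : ℝ => iteratedDeriv (i + j) g x -
        ∑ n ∈ Finset.range N,
          c n * (∏ l ∈ Finset.range (i + j), (γ - (n:ℝ) - (l:ℝ))) * x ^ (γ - (n:ℝ) - ((i+j:ℕ):ℝ)) := by
    funext x
    rw [iterDeriv_add]
    congr 1
    refine Finset.sum_congr rfl fun n _ => ?_
    rw [show γ - (i:ℝ) - (n:ℝ) - (j:ℝ) = γ - (n:ℝ) - ((i+j:ℕ):ℝ) from by push_cast; ring,
      ← prod_shift γ n i j]
    ring
  have e2 : (fun x : ℝ => x ^ (γ - (i:ℝ) - (N:ℝ) - (j:ℝ)))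
      = fun x : ℝ => x ^ (γ - (N:ℝ) - ((i+j:ℕ):ℝ)) := by
    funext x; congr 1; push_cast; ring
  rw [e1, e2]
  exact H

/-- if `g ∈ X^(s)` strictly (`s` a positive integer) and `g(x) → +∞`, then:
(i) for `0 ≤ i ≤ s`, `g^{(i)}(x) > 0` for all large `x` and `g^{(i)} ∈ A^(s−i)` strictly;
(ii) for `i ≥ s+1`, `g^{(i)}` either vanishes identically for all large `x` or lies in
`A^(τ_i)` strictly for some integer `τ_i < s − i`; in particular, in all cases `g^{(i)}`
either vanishes identically for all large `x` or lies in `A^(τ_i)` strictly with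
`τ_i ≤ s − i`. -/
theorem derivatives_of_g (s : ℕ) (hs : 0 < s) (g : ℝ → ℝ)
    (hg : MemXS (s : ℝ) g) (hgtop : Tendsto g atTop atTop) :
    (∀ i : ℕ, i ≤ s →
      (∀ᶠ x in atTop, 0 < iteratedDeriv i g x) ∧
      MemAS ((s : ℝ) - (i : ℝ)) (iteratedDeriv i g)) ∧
    (∀ i : ℕ, s + 1 ≤ i →
      (∀ᶠ x in atTop, iteratedDeriv i g x = 0) ∨
      ∃ τ : ℤ, τ < (s : ℤ) - (i : ℤ) ∧ MemAS ((τ : ℤ) : ℝ) (iteratedDeriv i g)) ∧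
    (∀ i : ℕ,
      (∀ᶠ x in atTop, iteratedDeriv i g x = 0) ∨
      ∃ τ : ℤ, τ ≤ (s : ℤ) - (i : ℤ) ∧ MemAS ((τ : ℤ) : ℝ) (iteratedDeriv i g)) := by
  obtain ⟨⟨c, hc0, hExp⟩, hXj⟩ := hg
  have hO1 : (fun x => g x - c 0 * x ^ (s:ℝ)) =O[atTop] fun x : ℝ => x ^ ((s:ℝ) - 1) := by
    simpa using hExp.2 0 1
  have hc0pos : 0 < c 0 := leading_pos hc0 hO1 hgtop
  have parti : ∀ i : ℕ, i ≤ s →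
      (∀ᶠ x in atTop, 0 < iteratedDeriv i g x) ∧
      MemAS ((s : ℝ) - (i : ℝ)) (iteratedDeriv i g) := by
    intro i his
    have hshift := hExp.iterDeriv i
    have hprodpos : 0 < ∏ l ∈ Finset.range i, ((s:ℝ) - ((0:ℕ):ℝ) - (l:ℝ)) := by
      apply Finset.prod_pos
      intro l hl
      have hls : l < s := lt_of_lt_of_le (Finset.mem_range.1 hl) his
      have hls' : (l:ℝ) < (s:ℝ) := by exact_mod_cast hls
      simp only [Nat.cast_zero, sub_zero]
      linarith
    have hc'0 : 0 < c 0 * ∏ l ∈ Finset.range i, ((s:ℝ) - ((0:ℕ):ℝ) - (l:ℝ)) :=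
      mul_pos hc0pos hprodpos
    refine ⟨?_, ⟨_, ne_of_gt hc'0, hshift⟩⟩
    have hO2 : (fun x => iteratedDeriv i g x -
        (c 0 * ∏ l ∈ Finset.range i, ((s:ℝ) - ((0:ℕ):ℝ) - (l:ℝ))) * x ^ ((s:ℝ) - (i:ℝ)))
        =O[atTop] fun x : ℝ => x ^ ((s:ℝ) - (i:ℝ) - 1) := by
      simpa using hshift.2 0 1
    exact eventually_pos_of_exp hc'0 hO2
  have partii : ∀ i : ℕ, s + 1 ≤ i →
      (∀ᶠ x in atTop, iteratedDeriv i g x = 0) ∨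
      ∃ τ : ℤ, τ < (s : ℤ) - (i : ℤ) ∧ MemAS ((τ : ℤ) : ℝ) (iteratedDeriv i g) := by
    intro i hi
    rcases hXj i (by omega) with hvan | ⟨k, hk⟩
    · exact Or.inl hvan
    right
    have hOsmall : (iteratedDeriv i g) =O[atTop]
        fun x : ℝ => x ^ ((s:ℝ) - ((s+1:ℕ):ℝ) - (i:ℝ)) := by
      have H := hExp.2 i (s+1)
      have e : (fun x : ℝ => iteratedDeriv i g x -
          ∑ n ∈ Finset.range (s+1),
            c n * (∏ l ∈ Finset.range i, ((s:ℝ) - (n:ℝ) - (l:ℝ))) * x ^ ((s:ℝ) - (n:ℝ) - (i:ℝ)))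
          = iteratedDeriv i g := by
        funext x
        have hz : ∀ n ∈ Finset.range (s+1),
            c n * (∏ l ∈ Finset.range i, ((s:ℝ) - (n:ℝ) - (l:ℝ))) * x ^ ((s:ℝ) - (n:ℝ) - (i:ℝ)) = 0 := by
          intro n hn
          have hn' : n ≤ s := Nat.lt_succ_iff.1 (Finset.mem_range.1 hn)
          have hmem : s - n ∈ Finset.range i := Finset.mem_range.2 (by omega)
          have hfac : (s:ℝ) - (n:ℝ) - (((s - n : ℕ)):ℝ) = 0 := by
            rw [Nat.cast_sub hn']; ring
          rw [Finset.prod_eq_zero hmem hfac]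
          ring
        rw [Finset.sum_eq_zero hz, sub_zero]
      rwa [e] at H
    rcases Nat.eq_zero_or_pos k with rfl | hkpos
    · exfalso
      simp only [Nat.cast_zero, sub_zero] at hk
      obtain ⟨d, hd0, hdE⟩ := hk
      have hO1' : (fun x => iteratedDeriv i g x - d 0 * x ^ ((s:ℝ) - (i:ℝ)))
          =O[atTop] fun x : ℝ => x ^ ((s:ℝ) - (i:ℝ) - 1) := by
        have := hdE.2 0 1
        rw [iterDeriv_add] at this
        simpa using this
      refine not_isBigO_rpow_lt (γ := (s:ℝ) - (i:ℝ)) (γ' := (s:ℝ) - ((s+1:ℕ):ℝ) - (i:ℝ))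
        ?_ hd0 hO1' hOsmall
      push_cast; linarith
    · refine ⟨(s:ℤ) - (i:ℤ) - (k:ℤ), by omega, ?_⟩
      have hcast : ((((s:ℤ) - (i:ℤ) - (k:ℤ)) : ℤ) : ℝ) = (s:ℝ) - (i:ℝ) - (k:ℝ) := by
        push_cast; ring
      rw [hcast]; exact hk
  refine ⟨parti, partii, ?_⟩
  intro i
  by_cases his : i ≤ s
  · right
    refine ⟨(s:ℤ) - (i:ℤ), le_refl _, ?_⟩
    have hcast : ((((s:ℤ) - (i:ℤ)) : ℤ) : ℝ) = (s:ℝ) - (i:ℝ) := by push_cast; ring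
    rw [hcast]; exact (parti i his).2
  · rcases partii i (by omega) with h | ⟨τ, hτ, hm⟩
    · exact Or.inl h
    · exact Or.inr ⟨τ, le_of_lt hτ, hm⟩
end
end

section
/- The function f(x) = sin²x / x² satisfies, for all x > 0, the third-order linear homogeneous differential equation f(x) = p_1(x) f'(x) + p_2(x) f''(x) + p_3(x) f'''(x), where p_1(x) = −(2x² + 3)/(4x), p_2(x) = −3/4, and p_3(x) = −x/8. Since p_1 ∈ A^(1) strictly, p_2 ∈ A^(0) strictly, and p_3 ∈ A^(1) strictly, with i_1 = 1 ≤ 1, i_2 = 0 ≤ 2, i_3 = 1 ≤ 3, it follows that f belongs to B^(3). -/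
open Filter Finset Real

noncomputable section

-- ===== auxiliary lemmas =====
open Asymptotics in
lemma isBigO_rpow_rpow {a b : ℝ} (h : a ≤ b) :
    (fun x : ℝ => x ^ a) =O[atTop] fun x : ℝ => x ^ b := by
  apply Asymptotics.IsBigO.of_bound 1
  filter_upwards [eventually_ge_atTop 1] with x hx
  have hx0 : (0:ℝ) ≤ x := by linarith
  rw [one_mul, Real.norm_eq_abs, Real.norm_eq_abs, abs_of_nonneg (Real.rpow_nonneg hx0 _),
    abs_of_nonneg (Real.rpow_nonneg hx0 _)]
  exact Real.rpow_le_rpow_of_exponent_le hx h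

lemma iter_two (A B γ δ : ℝ) (j : ℕ) :
    ∀ x : ℝ, 0 < x → iteratedDeriv j (fun x : ℝ => A * x ^ γ + B * x ^ δ) x
      = A * (∏ l ∈ Finset.range j, (γ - (l:ℝ))) * x ^ (γ - (j:ℝ))
        + B * (∏ l ∈ Finset.range j, (δ - (l:ℝ))) * x ^ (δ - (j:ℝ)) := by
  induction j with
  | zero => intro x hx; simp
  | succ j ih =>
    intro x hx
    rw [iteratedDeriv_succ]
    have heq : iteratedDeriv j (fun x : ℝ => A * x ^ γ + B * x ^ δ) =ᶠ[nhds x]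
        fun y => A * (∏ l ∈ Finset.range j, (γ - (l:ℝ))) * y ^ (γ - (j:ℝ))
          + B * (∏ l ∈ Finset.range j, (δ - (l:ℝ))) * y ^ (δ - (j:ℝ)) := by
      filter_upwards [eventually_gt_nhds hx] with y hy using ih y hy
    rw [heq.deriv_eq]
    have h1 : HasDerivAt (fun y : ℝ =>
        A * (∏ l ∈ Finset.range j, (γ - (l:ℝ))) * y ^ (γ - (j:ℝ))
          + B * (∏ l ∈ Finset.range j, (δ - (l:ℝ))) * y ^ (δ - (j:ℝ)))
        (A * (∏ l ∈ Finset.range j, (γ - (l:ℝ))) * ((γ - (j:ℝ)) * x ^ (γ - (j:ℝ) - 1))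
          + B * (∏ l ∈ Finset.range j, (δ - (l:ℝ))) * ((δ - (j:ℝ)) * x ^ (δ - (j:ℝ) - 1))) x :=
      ((Real.hasDerivAt_rpow_const (Or.inl hx.ne')).const_mul _).add
        ((Real.hasDerivAt_rpow_const (Or.inl hx.ne')).const_mul _)
    rw [h1.deriv, Finset.prod_range_succ, Finset.prod_range_succ]
    have e1 : γ - (j:ℝ) - 1 = γ - ((j+1 : ℕ):ℝ) := by push_cast; ring
    have e2 : δ - (j:ℝ) - 1 = δ - ((j+1 : ℕ):ℝ) := by push_cast; ring
    rw [e1, e2]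
    ring

lemma iteratedDeriv_congr_gt {α β : ℝ → ℝ} {b : ℝ} (h : ∀ x, b < x → α x = β x) (j : ℕ) :
    ∀ x, b < x → iteratedDeriv j α x = iteratedDeriv j β x := by
  induction j with
  | zero => simpa using h
  | succ j ih =>
    intro x hx
    rw [iteratedDeriv_succ, iteratedDeriv_succ]
    have heq : iteratedDeriv j α =ᶠ[nhds x] iteratedDeriv j β := by
      filter_upwards [eventually_gt_nhds hx] with y hy using ih y hy
    exact heq.deriv_eq

open Asymptotics in
lemma hasExpA_two (γ A B : ℝ) (d : ℕ) (hd : d ≠ 0) (α : ℝ → ℝ) (b : ℝ) (hb : 0 < b)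
    (hsm : ∀ x ∈ Set.Ioi b, ContDiffAt ℝ (⊤ : ℕ∞) α x)
    (hev : ∀ x, b < x → α x = A * x ^ γ + B * x ^ (γ - (d:ℝ))) :
    HasExpA γ (fun i => if i = 0 then A else if i = d then B else 0) α := by
  refine ⟨⟨b, hb, hsm⟩, ?_⟩
  intro j N
  set c : ℕ → ℝ := fun i => if i = 0 then A else if i = d then B else 0 with hc
  set P0 : ℝ := ∏ l ∈ Finset.range j, (γ - (l:ℝ)) with hP0
  set Pd : ℝ := ∏ l ∈ Finset.range j, (γ - (d:ℝ) - (l:ℝ)) with hPd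
  have hsum : ∀ x : ℝ,
      ∑ i ∈ Finset.range N, c i * (∏ l ∈ Finset.range j, (γ - (i:ℝ) - (l:ℝ))) * x ^ (γ - (i:ℝ) - (j:ℝ))
      = (if 0 < N then A * P0 * x ^ (γ - (j:ℝ)) else 0)
        + (if d < N then B * Pd * x ^ (γ - (d:ℝ) - (j:ℝ)) else 0) := by
    intro x
    have : ∀ i ∈ Finset.range N,
        c i * (∏ l ∈ Finset.range j, (γ - (i:ℝ) - (l:ℝ))) * x ^ (γ - (i:ℝ) - (j:ℝ))
        = (if i = 0 then A * P0 * x ^ (γ - (j:ℝ)) else 0)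
          + (if i = d then B * Pd * x ^ (γ - (d:ℝ) - (j:ℝ)) else 0) := by
      intro i _
      by_cases h0 : i = 0
      · subst h0; simp [hc, hP0, hd, Ne.symm hd]
      · by_cases hdd : i = d
        · subst hdd; simp [hc, h0, hPd]
        · simp [hc, h0, hdd]
    rw [Finset.sum_congr rfl this, Finset.sum_add_distrib,
      Finset.sum_ite_eq' (Finset.range N) 0 (fun _ => A * P0 * x ^ (γ - (j:ℝ))),
      Finset.sum_ite_eq' (Finset.range N) d (fun _ => B * Pd * x ^ (γ - (d:ℝ) - (j:ℝ)))]
    simp [Finset.mem_range]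
  have key : (fun x : ℝ => iteratedDeriv j α x -
      ∑ i ∈ Finset.range N,
        c i * (∏ l ∈ Finset.range j, (γ - (i:ℝ) - (l:ℝ))) * x ^ (γ - (i:ℝ) - (j:ℝ)))
      =ᶠ[atTop] fun x : ℝ =>
        (if N = 0 then A * P0 * x ^ (γ - (j:ℝ)) else 0)
        + (if N ≤ d then B * Pd * x ^ (γ - (d:ℝ) - (j:ℝ)) else 0) := by
    filter_upwards [eventually_gt_atTop b] with x hx
    have hx0 : 0 < x := hb.trans hx
    rw [iteratedDeriv_congr_gt hev j x hx, iter_two A B γ (γ - (d:ℝ)) j x hx0, hsum x]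
    by_cases hN0 : N = 0
    · subst hN0
      simp [Nat.pos_of_ne_zero, hd, Nat.pos_of_ne_zero hd, hP0, hPd]
    · have hNpos : 0 < N := Nat.pos_of_ne_zero hN0
      by_cases hNd : N ≤ d
      · simp [hN0, hNd, hNpos, not_lt.mpr hNd, hP0, hPd]
      · simp [hN0, hNd, hNpos, Nat.lt_of_not_le hNd, hP0, hPd]
  refine key.trans_isBigO (IsBigO.add ?_ ?_)
  · by_cases hN0 : N = 0
    · subst hN0
      simp only [if_pos rfl]
      have : γ - (j:ℝ) ≤ γ - ((0:ℕ):ℝ) - (j:ℝ) := by norm_num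
      exact (isBigO_rpow_rpow this).const_mul_left _
    · simp only [if_neg hN0]
      exact isBigO_zero _ _
  · by_cases hNd : N ≤ d
    · simp only [if_pos hNd]
      have : γ - (d:ℝ) - (j:ℝ) ≤ γ - (N:ℝ) - (j:ℝ) := by
        have : (N:ℝ) ≤ (d:ℝ) := Nat.cast_le.mpr hNd
        linarith
      exact (isBigO_rpow_rpow this).const_mul_left _
    · simp only [if_neg hNd]
      exact isBigO_zero _ _

lemma memAS_p1 : MemAS 1 (fun x : ℝ => -(2 * x ^ 2 + 3) / (4 * x)) := by
  refine ⟨_, ?_, hasExpA_two 1 (-1/2) (-3/4) 2 (by norm_num)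
    (fun x : ℝ => -(2 * x ^ 2 + 3) / (4 * x)) 1 one_pos ?_ ?_⟩
  · norm_num
  · intro x hx
    have hx0 : x ≠ 0 := by simp at hx; intro h; simp [h] at hx; linarith
    exact ContDiffAt.div (by fun_prop) (by fun_prop) (by simpa using hx0)
  · intro x hx
    have hx0 : (0:ℝ) < x := by linarith
    rw [show (1:ℝ) - ((2:ℕ):ℝ) = -1 by norm_num, Real.rpow_neg_one, Real.rpow_one]
    field_simp
    ring

lemma memAS_p2 : MemAS 0 (fun _ : ℝ => (-3 : ℝ) / 4) := by
  refine ⟨_, ?_, hasExpA_two 0 (-3/4) 0 1 (by norm_num)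
    (fun _ : ℝ => (-3 : ℝ) / 4) 1 one_pos (fun x _ => by fun_prop) ?_⟩
  · norm_num
  · intro x hx
    rw [Real.rpow_zero]
    ring

lemma memAS_p3 : MemAS 1 (fun x : ℝ => -x / 8) := by
  refine ⟨_, ?_, hasExpA_two 1 (-1/8) 0 1 (by norm_num)
    (fun x : ℝ => -x / 8) 1 one_pos (fun x _ => by fun_prop (disch := norm_num)) ?_⟩
  · norm_num
  · intro x hx
    rw [Real.rpow_one]
    ring

noncomputable def d1f : ℝ → ℝ := fun x => (2*Real.sin x*Real.cos x*x - 2*Real.sin x^2) / x^3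
noncomputable def d2f : ℝ → ℝ := fun x =>
  (2*Real.cos x^2*x^2 - 2*Real.sin x^2*x^2 - 8*Real.sin x*Real.cos x*x + 6*Real.sin x^2) / x^4
noncomputable def d3f : ℝ → ℝ := fun x =>
  (-8*Real.sin x*Real.cos x*x^3 + (12*Real.sin x^2 - 12*Real.cos x^2)*x^2
    + 36*Real.sin x*Real.cos x*x - 24*Real.sin x^2) / x^5

lemma hd1 {x : ℝ} (hx : x ≠ 0) :
    HasDerivAt (fun t : ℝ => Real.sin t ^ 2 / t ^ 2) (d1f x) x := by
  have h := ((Real.hasDerivAt_sin x).pow 2).div (hasDerivAt_pow 2 x) (pow_ne_zero 2 hx)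
  refine h.congr_deriv ?_
  simp only [d1f, Pi.mul_apply, Pi.sub_apply, Pi.add_apply, Pi.pow_apply]
  field_simp
  ring

lemma hd2 {x : ℝ} (hx : x ≠ 0) : HasDerivAt d1f (d2f x) x := by
  have hn := ((((Real.hasDerivAt_sin x).const_mul 2).mul (Real.hasDerivAt_cos x)).mul
      (hasDerivAt_id x)).sub (((Real.hasDerivAt_sin x).pow 2).const_mul 2)
  have h := hn.div (hasDerivAt_pow 3 x) (pow_ne_zero 3 hx)
  refine h.congr_deriv ?_
  simp only [d2f, id, Pi.mul_apply, Pi.sub_apply, Pi.add_apply, Pi.pow_apply]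
  field_simp
  ring

lemma hd3 {x : ℝ} (hx : x ≠ 0) : HasDerivAt d2f (d3f x) x := by
  have hn := ((((((Real.hasDerivAt_cos x).pow 2).const_mul 2).mul (hasDerivAt_pow 2 x)).sub
      ((((Real.hasDerivAt_sin x).pow 2).const_mul 2).mul (hasDerivAt_pow 2 x))).sub
      ((((Real.hasDerivAt_sin x).const_mul 8).mul (Real.hasDerivAt_cos x)).mul
        (hasDerivAt_id x))).add (((Real.hasDerivAt_sin x).pow 2).const_mul 6)
  have h := hn.div (hasDerivAt_pow 4 x) (pow_ne_zero 4 hx)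
  refine h.congr_deriv ?_
  simp only [d3f, id, Pi.mul_apply, Pi.sub_apply, Pi.add_apply, Pi.pow_apply]
  field_simp
  ring

lemma idf1 {x : ℝ} (hx : x ≠ 0) :
    iteratedDeriv 1 (fun t : ℝ => Real.sin t ^ 2 / t ^ 2) x = d1f x := by
  rw [iteratedDeriv_one]; exact (hd1 hx).deriv

lemma idf2 {x : ℝ} (hx : x ≠ 0) :
    iteratedDeriv 2 (fun t : ℝ => Real.sin t ^ 2 / t ^ 2) x = d2f x := by
  have h2 : iteratedDeriv 2 (fun t : ℝ => Real.sin t ^ 2 / t ^ 2) x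
      = deriv (iteratedDeriv 1 (fun t : ℝ => Real.sin t ^ 2 / t ^ 2)) x := by
    rw [iteratedDeriv_succ]
  rw [h2]
  have heq : iteratedDeriv 1 (fun t : ℝ => Real.sin t ^ 2 / t ^ 2) =ᶠ[nhds x] d1f :=
    (eventually_ne_nhds hx).mono fun y hy => idf1 hy
  rw [heq.deriv_eq]
  exact (hd2 hx).deriv

lemma idf3 {x : ℝ} (hx : x ≠ 0) :
    iteratedDeriv 3 (fun t : ℝ => Real.sin t ^ 2 / t ^ 2) x = d3f x := by
  have h3 : iteratedDeriv 3 (fun t : ℝ => Real.sin t ^ 2 / t ^ 2) x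
      = deriv (iteratedDeriv 2 (fun t : ℝ => Real.sin t ^ 2 / t ^ 2)) x := by
    rw [iteratedDeriv_succ]
  rw [h3]
  have heq : iteratedDeriv 2 (fun t : ℝ => Real.sin t ^ 2 / t ^ 2) =ᶠ[nhds x] d2f :=
    (eventually_ne_nhds hx).mono fun y hy => idf2 hy
  rw [heq.deriv_eq]
  exact (hd3 hx).deriv

lemma ode_lemma (x : ℝ) (hx : 0 < x) :
    Real.sin x ^ 2 / x ^ 2 =
      (-(2 * x ^ 2 + 3) / (4 * x)) * iteratedDeriv 1 (fun t : ℝ => Real.sin t ^ 2 / t ^ 2) x +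
        (-3 / 4) * iteratedDeriv 2 (fun t : ℝ => Real.sin t ^ 2 / t ^ 2) x +
        (-x / 8) * iteratedDeriv 3 (fun t : ℝ => Real.sin t ^ 2 / t ^ 2) x := by
  rw [idf1 hx.ne', idf2 hx.ne', idf3 hx.ne']
  simp only [d1f, d2f, d3f]
  field_simp
  ring

/-- `f(x) = sin²x/x²` satisfies, for all `x > 0`,
`f = p₁ f' + p₂ f'' + p₃ f'''` with `p₁(x) = −(2x²+3)/(4x)`, `p₂(x) = −3/4`,
`p₃(x) = −x/8`; `p₁ ∈ A^(1)` strictly, `p₂ ∈ A^(0)` strictly, `p₃ ∈ A^(1)` strictly, and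
consequently `f ∈ B^(3)`. -/
theorem sin_sq_over_sq_memB_three :
    (∀ x : ℝ, 0 < x →
      Real.sin x ^ 2 / x ^ 2 =
        (-(2 * x ^ 2 + 3) / (4 * x)) *
            iteratedDeriv 1 (fun t : ℝ => Real.sin t ^ 2 / t ^ 2) x +
          (-3 / 4) * iteratedDeriv 2 (fun t : ℝ => Real.sin t ^ 2 / t ^ 2) x +
          (-x / 8) * iteratedDeriv 3 (fun t : ℝ => Real.sin t ^ 2 / t ^ 2) x) ∧
    MemAS 1 (fun x : ℝ => -(2 * x ^ 2 + 3) / (4 * x)) ∧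
    MemAS 0 (fun _ : ℝ => (-3 : ℝ) / 4) ∧
    MemAS 1 (fun x : ℝ => -x / 8) ∧
    MemB 3 (fun x : ℝ => Real.sin x ^ 2 / x ^ 2) := by
  refine ⟨ode_lemma, memAS_p1, memAS_p2, memAS_p3, ?_, ?_⟩
  · filter_upwards [eventually_gt_atTop (0:ℝ)] with x hx
    exact ContDiffAt.div ((Real.contDiff_sin.pow 2).contDiffAt) (by fun_prop) (pow_ne_zero 2 hx.ne')
  · refine ⟨fun k => if k = 1 then (fun x : ℝ => -(2 * x ^ 2 + 3) / (4 * x))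
      else if k = 2 then (fun _ : ℝ => (-3:ℝ) / 4) else (fun x : ℝ => -x / 8), ?_, ?_, ?_⟩
    · filter_upwards [eventually_gt_atTop (0:ℝ)] with x hx
      rw [show Finset.Icc 1 3 = {1, 2, 3} from rfl]
      rw [Finset.sum_insert (by decide), Finset.sum_insert (by decide), Finset.sum_singleton]
      have h := ode_lemma x hx
      norm_num at h ⊢
      linarith [h]
    · intro k hk
      fin_cases hk
      · exact Or.inr ⟨1, by norm_num, by simpa using memAS_p1⟩
      · exact Or.inr ⟨0, by norm_num, by simpa using memAS_p2⟩
    · exact ⟨1, by norm_num, by simpa using memAS_p3⟩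
end
end
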